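/- arXiv:math/0111115 — 5 statements merged into one kernel-verified Lean document; each statement's English description precedes it below -/
import Mathlib

section
/- Let m, l, q : I → ℝ be locally integrable on an interval I, λ ∈ ℝ, and let u : I → ℂ² be a nontrivial (complex) solution of the Dirac system (−iσ₂ d/dx + mσ₃ + lσ₁ + q)u = λu. Then the following are equivalent: (a) there exist x ∈ I and φ ∈ ℂ with |φ| = 1 such that φ·u(x) ∈ ℝ² (i.e. both components of φ·u(x) are real); (b) there exists φ ∈ ℂ with |φ| = 1 such that φ·u(x) ∈ ℝ² for every x ∈ I; (c) u and its componentwise complex conjugate ū are linearly dependent over ℂ, i.e. there exist a, b ∈ ℂ, not both zero, with a·u(x) + b·ū(x) = 0 for all x ∈ I. -/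
noncomputable section
open MeasureTheory Set

lemma mulIntInt {I : Set ℝ} (hI : I.OrdConnected) {r : ℝ → ℝ}
    (hr : LocallyIntegrableOn r I volume) {v : ℝ → ℂ} (hv : ContinuousOn v I)
    {x y : ℝ} (hx : x ∈ I) (hy : y ∈ I) :
    IntervalIntegrable (fun t => (r t : ℂ) * v t) volume x y := by
  apply MeasureTheory.IntegrableOn.intervalIntegrable
  have hsub : uIcc x y ⊆ I := hI.uIcc_subset hx hy
  have hrc : IntegrableOn r (uIcc x y) volume :=
    hr.integrableOn_compact_subset hsub isCompact_uIcc
  exact MeasureTheory.IntegrableOn.mul_continuousOn (hrc.ofReal) (hv.mono hsub) isCompact_uIcc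

lemma intInt_comb {I : Set ℝ} (hI : I.OrdConnected) {r₁ r₂ : ℝ → ℝ}
    (hr₁ : LocallyIntegrableOn r₁ I volume) (hr₂ : LocallyIntegrableOn r₂ I volume)
    {v₁ v₂ : ℝ → ℂ} (hv₁ : ContinuousOn v₁ I) (hv₂ : ContinuousOn v₂ I)
    {x y : ℝ} (hx : x ∈ I) (hy : y ∈ I) :
    IntervalIntegrable (fun t => (r₁ t : ℂ) * v₁ t + (r₂ t : ℂ) * v₂ t) volume x y :=
  (mulIntInt hI hr₁ hv₁ hx hy).add (mulIntInt hI hr₂ hv₂ hx hy)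

lemma gron_forward {a b : ℝ} (hab : a ≤ b) {g h : ℝ → ℝ}
    (hg : IntegrableOn g (Icc a b) volume) (hg0 : ∀ t ∈ Icc a b, 0 ≤ g t)
    (hh : ContinuousOn h (Icc a b)) (hh0 : ∀ t ∈ Icc a b, 0 ≤ h t)
    (key : ∀ x ∈ Icc a b, h x ≤ ∫ t in a..x, g t * h t) :
    ∀ x ∈ Icc a b, h x = 0 := by
  -- integrability of g * h on subintervals
  have hGH : IntegrableOn (fun t => g t * h t) (Icc a b) volume :=
    hg.mul_continuousOn hh isCompact_Icc
  have hGHint : ∀ x ∈ Icc a b, ∀ y ∈ Icc a b,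
      IntervalIntegrable (fun t => g t * h t) volume x y := by
    intro x hx y hy
    exact (hGH.mono_set ((Set.ordConnected_Icc).uIcc_subset hx hy)).intervalIntegrable
  have hgint : ∀ x ∈ Icc a b, ∀ y ∈ Icc a b, IntervalIntegrable g volume x y := by
    intro x hx y hy
    exact (hg.mono_set ((Set.ordConnected_Icc).uIcc_subset hx hy)).intervalIntegrable
  set S : Set ℝ := {s ∈ Icc a b | ∀ t ∈ Icc a s, h t = 0} with hS
  have haS : a ∈ S := by
    refine ⟨⟨le_refl a, hab⟩, ?_⟩
    intro t ht
    have hta : t = a := le_antisymm ht.2 ht.1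
    rw [hta]
    have := key a ⟨le_refl a, hab⟩
    rw [intervalIntegral.integral_same] at this
    exact le_antisymm this (hh0 a ⟨le_refl a, hab⟩)
  have hSne : S.Nonempty := ⟨a, haS⟩
  have hSbdd : BddAbove S := ⟨b, fun s hs => hs.1.2⟩
  set c := sSup S with hc
  have hcmem : c ∈ Icc a b := ⟨le_csSup hSbdd haS, csSup_le hSne fun s hs => hs.1.2⟩
  have hzero : ∀ t ∈ Ico a c, h t = 0 := by
    intro t ht
    obtain ⟨s, hsS, hts⟩ := exists_lt_of_lt_csSup hSne ht.2
    exact hsS.2 t ⟨ht.1, hts.le⟩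
  have hIcc : ∀ t ∈ Icc a b, Icc a t ⊆ Icc a b := fun t ht => Icc_subset_Icc le_rfl ht.2
  -- the integral up to c vanishes
  have hintc : ∫ t in a..c, g t * h t = 0 := by
    rw [intervalIntegral.integral_of_le hcmem.1]
    have : ∀ᵐ t ∂(volume.restrict (Ioc a c)), g t * h t = 0 := by
      have hne : ∀ᵐ (t : ℝ) ∂volume, t ≠ c := by
        rw [MeasureTheory.ae_iff]
        simp only [ne_eq, not_not]
        have : {t : ℝ | t = c} = {c} := by ext t; simp
        rw [this]
        exact measure_singleton c
      filter_upwards [MeasureTheory.ae_restrict_of_ae hne,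
        ae_restrict_mem measurableSet_Ioc] with t htne ht
      have : h t = 0 := hzero t ⟨ht.1.le, lt_of_le_of_ne ht.2 htne⟩
      rw [this, mul_zero]
    rw [MeasureTheory.integral_congr_ae this]
    simp
  have hcS : c ∈ S := by
    refine ⟨hcmem, ?_⟩
    intro t ht
    rcases lt_or_eq_of_le ht.2 with h1 | h1
    · exact hzero t ⟨ht.1, h1⟩
    · rw [h1]
      have := key c hcmem
      rw [hintc] at this
      exact le_antisymm this (hh0 c hcmem)
  -- show c = b
  rcases eq_or_lt_of_le hcmem.2 with hcb | hcb
  · intro x hx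
    exact hcS.2 x ⟨hx.1, hx.2.trans hcb.ge⟩
  · exfalso
    -- choose d ∈ (c, b] with small integral of g
    have hcont : ContinuousOn (fun s => ∫ t in c..s, g t) (uIcc c b) :=
      intervalIntegral.continuousOn_primitive_interval'
        (hgint c hcmem b ⟨hab, le_refl b⟩) left_mem_uIcc
    have hcwa : ContinuousWithinAt (fun s => ∫ t in c..s, g t) (uIcc c b) c :=
      hcont c left_mem_uIcc
    rw [Metric.continuousWithinAt_iff] at hcwa
    obtain ⟨δ, hδ, hδ2⟩ := hcwa (1/2) (by norm_num)
    set d := min b (c + δ/2) with hd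
    have hcd : c < d := lt_min hcb (by linarith)
    have hdb : d ≤ b := min_le_left _ _
    have hsmall : ∀ s ∈ Icc c d, ∫ t in c..s, g t ≤ 1/2 := by
      intro s hs
      have hmem : s ∈ uIcc c b := by
        rw [uIcc_of_le hcmem.2]
        exact ⟨hs.1, hs.2.trans hdb⟩
      have hdist : dist s c < δ := by
        rw [Real.dist_eq, abs_of_nonneg (by linarith [hs.1])]
        have : s ≤ c + δ/2 := hs.2.trans (min_le_right _ _)
        linarith
      have := hδ2 hmem hdist
      rw [intervalIntegral.integral_same, dist_zero_right, Real.norm_eq_abs] at this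
      exact (le_abs_self _).trans this.le
    -- max of h on [c, d]
    have hsubcd : Icc c d ⊆ Icc a b := Icc_subset_Icc hcmem.1 hdb
    obtain ⟨z, hzK, hzmax⟩ := isCompact_Icc.exists_isMaxOn (nonempty_Icc.2 hcd.le)
      (hh.mono hsubcd)
    have hz0 : 0 ≤ h z := hh0 z (hsubcd hzK)
    have hzab : z ∈ Icc a b := hsubcd hzK
    have hsplit : ∫ t in a..z, g t * h t
        = (∫ t in a..c, g t * h t) + ∫ t in c..z, g t * h t := by
      rw [intervalIntegral.integral_add_adjacent_intervals
        (hGHint a ⟨le_refl a, hab⟩ c hcmem) (hGHint c hcmem z hzab)]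
    have hb1 : h z ≤ ∫ t in c..z, g t * h t := by
      have := key z hzab
      rw [hsplit, hintc, zero_add] at this
      exact this
    have hb2 : ∫ t in c..z, g t * h t ≤ ∫ t in c..z, g t * h z := by
      apply intervalIntegral.integral_mono_on hzK.1 (hGHint c hcmem z hzab)
        ((hgint c hcmem z hzab).mul_const _)
      intro t ht
      have htK : t ∈ Icc c d := ⟨ht.1, ht.2.trans hzK.2⟩
      exact mul_le_mul_of_nonneg_left (hzmax htK) (hg0 t (hsubcd htK))
    have hb3 : ∫ t in c..z, g t * h z = (∫ t in c..z, g t) * h z := by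
      rw [intervalIntegral.integral_mul_const]
    have hb4 : (∫ t in c..z, g t) * h z ≤ (1/2) * h z :=
      mul_le_mul_of_nonneg_right (hsmall z hzK) hz0
    have hz00 : h z = 0 := by linarith
    have hdS : d ∈ S := by
      refine ⟨⟨hcmem.1.trans hcd.le, hdb⟩, ?_⟩
      intro t ht
      rcases le_or_gt t c with h1 | h1
      · exact hcS.2 t ⟨ht.1, h1⟩
      · have htK : t ∈ Icc c d := ⟨h1.le, ht.2⟩
        have := hzmax htK
        exact le_antisymm (hz00 ▸ this) (hh0 t (hsubcd htK))
    exact absurd (le_csSup hSbdd hdS) (not_le.2 hcd)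

lemma gron_backward {a b : ℝ} (hab : a ≤ b) {g h : ℝ → ℝ}
    (hg : IntegrableOn g (Icc a b) volume) (hg0 : ∀ t ∈ Icc a b, 0 ≤ g t)
    (hh : ContinuousOn h (Icc a b)) (hh0 : ∀ t ∈ Icc a b, 0 ≤ h t)
    (key : ∀ x ∈ Icc a b, h x ≤ ∫ t in x..b, g t * h t) :
    ∀ x ∈ Icc a b, h x = 0 := by
  have hGH : IntegrableOn (fun t => g t * h t) (Icc a b) volume :=
    hg.mul_continuousOn hh isCompact_Icc
  have hGHint : ∀ x ∈ Icc a b, ∀ y ∈ Icc a b,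
      IntervalIntegrable (fun t => g t * h t) volume x y := by
    intro x hx y hy
    exact (hGH.mono_set ((Set.ordConnected_Icc).uIcc_subset hx hy)).intervalIntegrable
  have hgint : ∀ x ∈ Icc a b, ∀ y ∈ Icc a b, IntervalIntegrable g volume x y := by
    intro x hx y hy
    exact (hg.mono_set ((Set.ordConnected_Icc).uIcc_subset hx hy)).intervalIntegrable
  set S : Set ℝ := {s ∈ Icc a b | ∀ t ∈ Icc s b, h t = 0} with hS
  have hbS : b ∈ S := by
    refine ⟨⟨hab, le_refl b⟩, ?_⟩
    intro t ht
    have htb : t = b := le_antisymm ht.2 ht.1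
    rw [htb]
    have := key b ⟨hab, le_refl b⟩
    rw [intervalIntegral.integral_same] at this
    exact le_antisymm this (hh0 b ⟨hab, le_refl b⟩)
  have hSne : S.Nonempty := ⟨b, hbS⟩
  have hSbdd : BddBelow S := ⟨a, fun s hs => hs.1.1⟩
  set c := sInf S with hc
  have hcmem : c ∈ Icc a b := ⟨le_csInf hSne fun s hs => hs.1.1, csInf_le hSbdd hbS⟩
  have hzero : ∀ t ∈ Ioc c b, h t = 0 := by
    intro t ht
    obtain ⟨s, hsS, hts⟩ := exists_lt_of_csInf_lt hSne ht.1
    exact hsS.2 t ⟨hts.le, ht.2⟩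
  have hintc : ∫ t in c..b, g t * h t = 0 := by
    rw [intervalIntegral.integral_of_le hcmem.2]
    have : ∀ᵐ t ∂(volume.restrict (Ioc c b)), g t * h t = 0 := by
      filter_upwards [ae_restrict_mem measurableSet_Ioc] with t ht
      rw [hzero t ht, mul_zero]
    rw [MeasureTheory.integral_congr_ae this]
    simp
  have hcS : c ∈ S := by
    refine ⟨hcmem, ?_⟩
    intro t ht
    rcases eq_or_lt_of_le ht.1 with h1 | h1
    · rw [← h1]
      have := key c hcmem
      rw [hintc] at this
      exact le_antisymm this (hh0 c hcmem)
    · exact hzero t ⟨h1, ht.2⟩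
  rcases eq_or_lt_of_le hcmem.1 with hca | hca
  · intro x hx
    exact hcS.2 x ⟨hca ▸ hx.1, hx.2⟩
  · exfalso
    have hcont : ContinuousOn (fun s => ∫ t in c..s, g t) (uIcc a c) :=
      intervalIntegral.continuousOn_primitive_interval'
        (hgint a ⟨le_refl a, hab⟩ c hcmem) right_mem_uIcc
    have hcwa : ContinuousWithinAt (fun s => ∫ t in c..s, g t) (uIcc a c) c :=
      hcont c right_mem_uIcc
    rw [Metric.continuousWithinAt_iff] at hcwa
    obtain ⟨δ, hδ, hδ2⟩ := hcwa (1/2) (by norm_num)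
    set d := max a (c - δ/2) with hd
    have hcd : d < c := max_lt hca (by linarith)
    have had : a ≤ d := le_max_left _ _
    have hsmall : ∀ s ∈ Icc d c, ∫ t in s..c, g t ≤ 1/2 := by
      intro s hs
      have hmem : s ∈ uIcc a c := by
        rw [uIcc_of_le hcmem.1]
        exact ⟨had.trans hs.1, hs.2⟩
      have hdist : dist s c < δ := by
        rw [Real.dist_eq, abs_of_nonpos (by linarith [hs.2])]
        have : c - δ/2 ≤ s := (le_max_right _ _).trans hs.1
        linarith
      have := hδ2 hmem hdist
      rw [intervalIntegral.integral_same, dist_zero_right, Real.norm_eq_abs] at this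
      have habs : |∫ t in s..c, g t| = |∫ t in c..s, g t| := by
        rw [intervalIntegral.integral_symm, abs_neg]
      calc ∫ t in s..c, g t ≤ |∫ t in s..c, g t| := le_abs_self _
        _ = |∫ t in c..s, g t| := habs
        _ ≤ 1/2 := this.le
    have hsubcd : Icc d c ⊆ Icc a b := Icc_subset_Icc had hcmem.2
    obtain ⟨z, hzK, hzmax⟩ := isCompact_Icc.exists_isMaxOn (nonempty_Icc.2 hcd.le)
      (hh.mono hsubcd)
    have hz0 : 0 ≤ h z := hh0 z (hsubcd hzK)
    have hzab : z ∈ Icc a b := hsubcd hzK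
    have hsplit : ∫ t in z..b, g t * h t
        = (∫ t in z..c, g t * h t) + ∫ t in c..b, g t * h t := by
      rw [intervalIntegral.integral_add_adjacent_intervals
        (hGHint z hzab c hcmem) (hGHint c hcmem b ⟨hab, le_refl b⟩)]
    have hb1 : h z ≤ ∫ t in z..c, g t * h t := by
      have := key z hzab
      rw [hsplit, hintc, add_zero] at this
      exact this
    have hb2 : ∫ t in z..c, g t * h t ≤ ∫ t in z..c, g t * h z := by
      apply intervalIntegral.integral_mono_on hzK.2 (hGHint z hzab c hcmem)
        ((hgint z hzab c hcmem).mul_const _)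
      intro t ht
      have htK : t ∈ Icc d c := ⟨hzK.1.trans ht.1, ht.2⟩
      exact mul_le_mul_of_nonneg_left (hzmax htK) (hg0 t (hsubcd htK))
    have hb3 : ∫ t in z..c, g t * h z = (∫ t in z..c, g t) * h z := by
      rw [intervalIntegral.integral_mul_const]
    have hb4 : (∫ t in z..c, g t) * h z ≤ (1/2) * h z :=
      mul_le_mul_of_nonneg_right (hsmall z hzK) hz0
    have hz00 : h z = 0 := by linarith
    have hdS : d ∈ S := by
      refine ⟨⟨had, hcd.le.trans hcmem.2⟩, ?_⟩
      intro t ht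
      rcases le_or_gt c t with h1 | h1
      · exact hcS.2 t ⟨h1, ht.2⟩
      · have htK : t ∈ Icc d c := ⟨ht.1, h1.le⟩
        have := hzmax htK
        exact le_antisymm (hz00 ▸ this) (hh0 t (hsubcd htK))
    exact absurd (csInf_le hSbdd hdS) (not_le.2 hcd)

lemma dirac_unique {I : Set ℝ} (hI : I.OrdConnected) {m l q : ℝ → ℝ}
    (hm : LocallyIntegrableOn m I volume) (hl : LocallyIntegrableOn l I volume)
    (hq : LocallyIntegrableOn q I volume) {lam : ℝ} {w₁ w₂ : ℝ → ℂ}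
    (hw₁ : ContinuousOn w₁ I) (hw₂ : ContinuousOn w₂ I)
    {y : ℝ} (hy : y ∈ I)
    (heq : ∀ x ∈ I,
      w₁ x = ∫ t in y..x, (((-(l t) : ℝ) : ℂ) * w₁ t + (((lam - q t + m t) : ℝ) : ℂ) * w₂ t)
      ∧ w₂ x = ∫ t in y..x, (((-(lam - q t - m t) : ℝ) : ℂ) * w₁ t + ((l t : ℝ) : ℂ) * w₂ t)) :
    ∀ x ∈ I, w₁ x = 0 ∧ w₂ x = 0 := by
  have hr₁ : LocallyIntegrableOn (fun t => -(l t)) I volume := hl.neg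
  have hconst : LocallyIntegrableOn (fun _ : ℝ => lam) I volume :=
    (locallyIntegrable_const lam).locallyIntegrableOn I
  have hlq : LocallyIntegrableOn (fun t => lam - q t) I volume := hconst.sub hq
  have hr₂ : LocallyIntegrableOn (fun t => lam - q t + m t) I volume := hlq.add hm
  have hr₃ : LocallyIntegrableOn (fun t => -(lam - q t - m t)) I volume := (hlq.sub hm).neg
  set F₁ : ℝ → ℂ := fun t => ((-(l t) : ℝ) : ℂ) * w₁ t + (((lam - q t + m t) : ℝ) : ℂ) * w₂ t
    with hF₁def
  set F₂ : ℝ → ℂ := fun t => ((-(lam - q t - m t) : ℝ) : ℂ) * w₁ t + ((l t : ℝ) : ℂ) * w₂ t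
    with hF₂def
  have hF₁ : ∀ {s z : ℝ}, s ∈ I → z ∈ I → IntervalIntegrable F₁ volume s z := fun hs hz =>
    (mulIntInt hI hr₁ hw₁ hs hz).add (mulIntInt hI hr₂ hw₂ hs hz)
  have hF₂ : ∀ {s z : ℝ}, s ∈ I → z ∈ I → IntervalIntegrable F₂ volume s z := fun hs hz =>
    (mulIntInt hI hr₃ hw₁ hs hz).add (mulIntInt hI hl hw₂ hs hz)
  set g : ℝ → ℝ := fun t => ‖l t‖ + (‖lam - q t‖ + ‖m t‖) with hgdef
  set h : ℝ → ℝ := fun t => ‖w₁ t‖ + ‖w₂ t‖ with hhdef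
  have hgloc : LocallyIntegrableOn g I volume := hl.norm.add (hlq.norm.add hm.norm)
  have hhcont : ContinuousOn h I := hw₁.norm.add hw₂.norm
  have hg0 : ∀ t, 0 ≤ g t := fun t => by positivity
  have hh0 : ∀ t, 0 ≤ h t := fun t => by positivity
  have hptw : ∀ t, ‖F₁ t‖ + ‖F₂ t‖ ≤ g t * h t := by
    intro t
    have n₁ : ‖((-(l t) : ℝ) : ℂ)‖ = ‖l t‖ := by
      rw [Complex.norm_real, norm_neg]
    have n₂ : ‖(((lam - q t + m t) : ℝ) : ℂ)‖ ≤ ‖lam - q t‖ + ‖m t‖ := by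
      rw [Complex.norm_real]; exact norm_add_le _ _
    have n₃ : ‖((-(lam - q t - m t) : ℝ) : ℂ)‖ ≤ ‖lam - q t‖ + ‖m t‖ := by
      rw [Complex.norm_real, norm_neg]; exact norm_sub_le _ _
    have n₄ : ‖((l t : ℝ) : ℂ)‖ = ‖l t‖ := Complex.norm_real _
    have e₁ : ‖F₁ t‖ ≤ ‖l t‖ * ‖w₁ t‖ + (‖lam - q t‖ + ‖m t‖) * ‖w₂ t‖ := by
      refine (norm_add_le _ _).trans ?_
      rw [norm_mul, norm_mul, n₁]
      exact add_le_add le_rfl (mul_le_mul_of_nonneg_right n₂ (norm_nonneg _))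
    have e₂ : ‖F₂ t‖ ≤ (‖lam - q t‖ + ‖m t‖) * ‖w₁ t‖ + ‖l t‖ * ‖w₂ t‖ := by
      refine (norm_add_le _ _).trans ?_
      rw [norm_mul, norm_mul, n₄]
      exact add_le_add (mul_le_mul_of_nonneg_right n₃ (norm_nonneg _)) le_rfl
    calc ‖F₁ t‖ + ‖F₂ t‖
        ≤ (‖l t‖ * ‖w₁ t‖ + (‖lam - q t‖ + ‖m t‖) * ‖w₂ t‖)
          + ((‖lam - q t‖ + ‖m t‖) * ‖w₁ t‖ + ‖l t‖ * ‖w₂ t‖) := add_le_add e₁ e₂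
      _ = g t * h t := by simp only [hgdef, hhdef]; ring
  have hnormint : ∀ {s z : ℝ}, s ∈ I → z ∈ I →
      IntervalIntegrable (fun t => ‖F₁ t‖ + ‖F₂ t‖) volume s z := fun hs hz =>
    ((hF₁ hs hz).norm).add ((hF₂ hs hz).norm)
  intro x hx
  have key0 : h x = 0 := by
    rcases le_total y x with hyx | hyx
    · have hsub : Icc y x ⊆ I := hI.out hy hx
      have hgI : IntegrableOn g (Icc y x) volume :=
        hgloc.integrableOn_compact_subset hsub isCompact_Icc
      have hghI : IntegrableOn (fun t => g t * h t) (Icc y x) volume :=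
        hgI.mul_continuousOn (hhcont.mono hsub) isCompact_Icc
      refine gron_forward hyx hgI (fun t _ => hg0 t) (hhcont.mono hsub) (fun t _ => hh0 t)
        ?_ x ⟨hyx, le_refl x⟩
      intro s hs
      have hsI : s ∈ I := hsub hs
      obtain ⟨e1, e2⟩ := heq s hsI
      have step1 : h s ≤ (∫ t in y..s, ‖F₁ t‖) + ∫ t in y..s, ‖F₂ t‖ := by
        simp only [hhdef]
        rw [e1, e2]
        exact add_le_add (intervalIntegral.norm_integral_le_integral_norm hs.1)
          (intervalIntegral.norm_integral_le_integral_norm hs.1)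
      have step2 : (∫ t in y..s, ‖F₁ t‖) + ∫ t in y..s, ‖F₂ t‖
          = ∫ t in y..s, (‖F₁ t‖ + ‖F₂ t‖) :=
        (intervalIntegral.integral_add ((hF₁ hy hsI).norm) ((hF₂ hy hsI).norm)).symm
      have step3 : ∫ t in y..s, (‖F₁ t‖ + ‖F₂ t‖) ≤ ∫ t in y..s, g t * h t := by
        refine intervalIntegral.integral_mono_on hs.1 (hnormint hy hsI) ?_ (fun t _ => hptw t)
        exact (hghI.mono_set ((Set.ordConnected_Icc).uIcc_subset
          (left_mem_Icc.2 hyx) hs)).intervalIntegrable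
      linarith [step1, step2 ▸ step1, step3]
    · have hsub : Icc x y ⊆ I := hI.out hx hy
      have hgI : IntegrableOn g (Icc x y) volume :=
        hgloc.integrableOn_compact_subset hsub isCompact_Icc
      have hghI : IntegrableOn (fun t => g t * h t) (Icc x y) volume :=
        hgI.mul_continuousOn (hhcont.mono hsub) isCompact_Icc
      refine gron_backward hyx hgI (fun t _ => hg0 t) (hhcont.mono hsub) (fun t _ => hh0 t)
        ?_ x ⟨le_refl x, hyx⟩
      intro s hs
      have hsI : s ∈ I := hsub hs
      obtain ⟨e1, e2⟩ := heq s hsI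
      have step1 : h s ≤ (∫ t in s..y, ‖F₁ t‖) + ∫ t in s..y, ‖F₂ t‖ := by
        simp only [hhdef]
        rw [e1, e2, intervalIntegral.integral_symm s y, intervalIntegral.integral_symm s y,
          norm_neg, norm_neg]
        exact add_le_add (intervalIntegral.norm_integral_le_integral_norm hs.2)
          (intervalIntegral.norm_integral_le_integral_norm hs.2)
      have step2 : (∫ t in s..y, ‖F₁ t‖) + ∫ t in s..y, ‖F₂ t‖
          = ∫ t in s..y, (‖F₁ t‖ + ‖F₂ t‖) :=
        (intervalIntegral.integral_add ((hF₁ hsI hy).norm) ((hF₂ hsI hy).norm)).symm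
      have step3 : ∫ t in s..y, (‖F₁ t‖ + ‖F₂ t‖) ≤ ∫ t in s..y, g t * h t := by
        refine intervalIntegral.integral_mono_on hs.2 (hnormint hsI hy) ?_ (fun t _ => hptw t)
        exact (hghI.mono_set ((Set.ordConnected_Icc).uIcc_subset
          hs (right_mem_Icc.2 hyx))).intervalIntegrable
      linarith [step1, step2 ▸ step1, step3]
  have h1 : ‖w₁ x‖ = 0 := by
    have := hh0 x
    simp only [hhdef] at key0
    have := norm_nonneg (w₁ x); have := norm_nonneg (w₂ x)
    linarith
  have h2 : ‖w₂ x‖ = 0 := by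
    simp only [hhdef] at key0
    have := norm_nonneg (w₁ x); have := norm_nonneg (w₂ x)
    linarith
  exact ⟨norm_eq_zero.1 h1, norm_eq_zero.1 h2⟩

lemma intervalIntegral_conj {f : ℝ → ℂ} {a b : ℝ} :
    ∫ t in a..b, (starRingEnd ℂ) (f t) = (starRingEnd ℂ) (∫ t in a..b, f t) := by
  simp only [intervalIntegral, integral_conj, map_sub]

/-- `u = (u₁, u₂) : I → ℂ²` is a complex solution of the Dirac system
`(−iσ₂ d/dx + mσ₃ + lσ₁ + q)u = λu` on the interval (ord-connected set) `I`:
`u` is continuous on `I` and satisfies the integral equation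
`u(x) = u(x₀) + ∫_{x₀}^x iσ₂·((λ − q)I₂ − mσ₃ − lσ₁)·u` for some base point `x₀ ∈ I`,
written componentwise with `iσ₂ = [[0,1],[−1,0]]`. -/
def IsDiracSolutionOn (m l q : ℝ → ℝ) (lam : ℝ) (u₁ u₂ : ℝ → ℂ) (I : Set ℝ) : Prop :=
  ContinuousOn u₁ I ∧ ContinuousOn u₂ I ∧
    ∃ x₀ ∈ I, ∀ x ∈ I,
      u₁ x = u₁ x₀ + ∫ t in x₀..x,
          (-(l t : ℂ) * u₁ t + ((lam : ℂ) - q t + m t) * u₂ t) ∧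
      u₂ x = u₂ x₀ + ∫ t in x₀..x,
          (-((lam : ℂ) - q t - m t) * u₁ t + (l t : ℂ) * u₂ t)

/-- **Lemma 1 of the paper.**  For a nontrivial complex solution `u` of a Dirac
system with real coefficients on an interval `I`, the following are equivalent:
(a) `φ·u(x) ∈ ℝ²` for some `x ∈ I` and some unimodular `φ ∈ ℂ`;
(b) `φ·u ∈ ℝ²` on all of `I` for some unimodular `φ ∈ ℂ`;
(c) `u` and its componentwise conjugate `ū` are linearly dependent over `ℂ`. -/
theorem real_direction_tfae
    (I : Set ℝ) (hI : I.OrdConnected) (m l q : ℝ → ℝ)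
    (hm : LocallyIntegrableOn m I volume) (hl : LocallyIntegrableOn l I volume)
    (hq : LocallyIntegrableOn q I volume)
    (lam : ℝ) (u₁ u₂ : ℝ → ℂ)
    (hu : IsDiracSolutionOn m l q lam u₁ u₂ I)
    (hnt : ∃ x ∈ I, ¬(u₁ x = 0 ∧ u₂ x = 0)) :
    List.TFAE
      [ (∃ x ∈ I, ∃ φ : ℂ, ‖φ‖ = 1 ∧ (φ * u₁ x).im = 0 ∧ (φ * u₂ x).im = 0),
        (∃ φ : ℂ, ‖φ‖ = 1 ∧ ∀ x ∈ I, (φ * u₁ x).im = 0 ∧ (φ * u₂ x).im = 0),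
        (∃ a b : ℂ, ¬(a = 0 ∧ b = 0) ∧ ∀ x ∈ I,
          a * u₁ x + b * star (u₁ x) = 0 ∧ a * u₂ x + b * star (u₂ x) = 0) ] := by
  obtain ⟨hc₁, hc₂, x₀, hx₀, Heq⟩ := hu
  -- local integrability of coefficient combinations
  have hr₁ : LocallyIntegrableOn (fun t => -(l t)) I volume := hl.neg
  have hlq : LocallyIntegrableOn (fun t => lam - q t) I volume :=
    ((locallyIntegrable_const lam).locallyIntegrableOn I).sub hq
  have hr₂ : LocallyIntegrableOn (fun t => lam - q t + m t) I volume := hlq.add hm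
  have hr₃ : LocallyIntegrableOn (fun t => -(lam - q t - m t)) I volume := (hlq.sub hm).neg
  set A₁ : ℝ → ℂ := fun t => ((-(l t) : ℝ) : ℂ) * u₁ t + (((lam - q t + m t) : ℝ) : ℂ) * u₂ t
    with hA₁def
  set A₂ : ℝ → ℂ := fun t => ((-(lam - q t - m t) : ℝ) : ℂ) * u₁ t + ((l t : ℝ) : ℂ) * u₂ t
    with hA₂def
  have hA₁ : ∀ {s z : ℝ}, s ∈ I → z ∈ I → IntervalIntegrable A₁ volume s z := fun hs hz =>
    (mulIntInt hI hr₁ hc₁ hs hz).add (mulIntInt hI hr₂ hc₂ hs hz)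
  have hA₂ : ∀ {s z : ℝ}, s ∈ I → z ∈ I → IntervalIntegrable A₂ volume s z := fun hs hz =>
    (mulIntInt hI hr₃ hc₁ hs hz).add (mulIntInt hI hl hc₂ hs hz)
  -- normal-form integral equation
  have Heq' : ∀ x ∈ I, u₁ x = u₁ x₀ + ∫ t in x₀..x, A₁ t
      ∧ u₂ x = u₂ x₀ + ∫ t in x₀..x, A₂ t := by
    intro x hx
    obtain ⟨h1, h2⟩ := Heq x hx
    constructor
    · rw [h1]
      congr 1
      apply intervalIntegral.integral_congr
      intro t _
      simp only [hA₁def]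
      push_cast
      ring
    · rw [h2]
      congr 1
      apply intervalIntegral.integral_congr
      intro t _
      simp only [hA₂def]
      push_cast
      ring
  -- difference formula
  have hdiff : ∀ x ∈ I, ∀ z ∈ I, (u₁ x - u₁ z = ∫ t in z..x, A₁ t)
      ∧ (u₂ x - u₂ z = ∫ t in z..x, A₂ t) := by
    intro x hx z hz
    obtain ⟨e1, e2⟩ := Heq' x hx
    obtain ⟨f1, f2⟩ := Heq' z hz
    constructor
    · rw [e1, f1]
      rw [show u₁ x₀ + (∫ t in x₀..x, A₁ t) - (u₁ x₀ + ∫ t in x₀..z, A₁ t)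
          = (∫ t in x₀..x, A₁ t) - ∫ t in x₀..z, A₁ t by ring]
      exact intervalIntegral.integral_interval_sub_left (hA₁ hx₀ hx) (hA₁ hx₀ hz)
    · rw [e2, f2]
      rw [show u₂ x₀ + (∫ t in x₀..x, A₂ t) - (u₂ x₀ + ∫ t in x₀..z, A₂ t)
          = (∫ t in x₀..x, A₂ t) - ∫ t in x₀..z, A₂ t by ring]
      exact intervalIntegral.integral_interval_sub_left (hA₂ hx₀ hx) (hA₂ hx₀ hz)
  tfae_have 2 → 1 := by
    rintro ⟨φ, hφ, hall⟩
    obtain ⟨x, hx, -⟩ := hnt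
    exact ⟨x, hx, φ, hφ, hall x hx⟩
  tfae_have 3 → 2 := by
    rintro ⟨a, b, hab, hrel⟩
    obtain ⟨x₁, hx₁, hne⟩ := hnt
    -- b ≠ 0
    have hb : b ≠ 0 := by
      intro hb0
      apply hne
      have ha : a ≠ 0 := fun ha0 => hab ⟨ha0, hb0⟩
      obtain ⟨r1, r2⟩ := hrel x₁ hx₁
      rw [hb0, zero_mul, add_zero] at r1 r2
      exact ⟨(mul_eq_zero.1 r1).resolve_left ha, (mul_eq_zero.1 r2).resolve_left ha⟩
    set c : ℂ := -(a / b) with hcdef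
    have hconj : ∀ x ∈ I, (starRingEnd ℂ) (u₁ x) = c * u₁ x
        ∧ (starRingEnd ℂ) (u₂ x) = c * u₂ x := by
      intro x hx
      obtain ⟨r1, r2⟩ := hrel x hx
      rw [← starRingEnd_apply] at r1 r2
      constructor
      · rw [hcdef]
        field_simp
        linear_combination r1
      · rw [hcdef]
        field_simp
        linear_combination r2
    have hcnorm : ‖c‖ = 1 := by
      obtain ⟨r1, r2⟩ := hconj x₁ hx₁
      rcases (not_and_or.1 hne) with h1 | h2
      · have hu1 : ‖u₁ x₁‖ ≠ 0 := fun h => h1 (norm_eq_zero.1 h)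
        have key : ‖c‖ * ‖u₁ x₁‖ = 1 * ‖u₁ x₁‖ := by
          rw [one_mul, ← norm_mul, ← r1, RCLike.norm_conj]
        exact mul_right_cancel₀ hu1 key
      · have hu2 : ‖u₂ x₁‖ ≠ 0 := fun h => h2 (norm_eq_zero.1 h)
        have key : ‖c‖ * ‖u₂ x₁‖ = 1 * ‖u₂ x₁‖ := by
          rw [one_mul, ← norm_mul, ← r2, RCLike.norm_conj]
        exact mul_right_cancel₀ hu2 key
    have hc0 : c ≠ 0 := by
      intro h
      rw [h, norm_zero] at hcnorm
      norm_num at hcnorm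
    set φ : ℂ := Complex.exp (Complex.log c / 2) with hφdef
    have hφsq : φ * φ = c := by
      rw [hφdef, ← Complex.exp_add]
      rw [show Complex.log c / 2 + Complex.log c / 2 = Complex.log c by ring]
      exact Complex.exp_log hc0
    have hφnorm : ‖φ‖ = 1 := by
      rw [hφdef, Complex.norm_exp]
      have : (Complex.log c / 2).re = (Complex.log c).re / 2 := by
        simp [Complex.div_re]
      rw [this, Complex.log_re]
      have : ‖c‖ = 1 := hcnorm
      rw [this, Real.log_one]
      norm_num
    refine ⟨φ, hφnorm, ?_⟩
    intro x hx
    obtain ⟨r1, r2⟩ := hconj x hx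
    have hnsq : (starRingEnd ℂ) φ * φ = 1 := by
      rw [mul_comm, Complex.mul_conj]
      norm_cast
      rw [Complex.normSq_eq_norm_sq, hφnorm, one_pow]
    constructor
    · rw [← Complex.conj_eq_iff_im, map_mul]
      calc (starRingEnd ℂ) φ * (starRingEnd ℂ) (u₁ x)
          = (starRingEnd ℂ) φ * (c * u₁ x) := by rw [r1]
        _ = (starRingEnd ℂ) φ * (φ * φ) * u₁ x := by rw [hφsq]; ring
        _ = φ * u₁ x := by rw [show (starRingEnd ℂ) φ * (φ * φ) = ((starRingEnd ℂ) φ * φ) * φ by ring, hnsq, one_mul]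
    · rw [← Complex.conj_eq_iff_im, map_mul]
      calc (starRingEnd ℂ) φ * (starRingEnd ℂ) (u₂ x)
          = (starRingEnd ℂ) φ * (c * u₂ x) := by rw [r2]
        _ = (starRingEnd ℂ) φ * (φ * φ) * u₂ x := by rw [hφsq]; ring
        _ = φ * u₂ x := by rw [show (starRingEnd ℂ) φ * (φ * φ) = ((starRingEnd ℂ) φ * φ) * φ by ring, hnsq, one_mul]
  tfae_have 1 → 3 := by
    rintro ⟨x₁, hx₁, φ, hφ, him₁, him₂⟩
    set ψ := (starRingEnd ℂ) φ with hψdef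
    set w₁ : ℝ → ℂ := fun x => φ * u₁ x - ψ * (starRingEnd ℂ) (u₁ x) with hw₁def
    set w₂ : ℝ → ℂ := fun x => φ * u₂ x - ψ * (starRingEnd ℂ) (u₂ x) with hw₂def
    have hw₁c : ContinuousOn w₁ I :=
      ((continuous_const.mul continuous_id').comp_continuousOn hc₁).sub
        ((continuous_const.mul continuous_star).comp_continuousOn hc₁)
    have hw₂c : ContinuousOn w₂ I :=
      ((continuous_const.mul continuous_id').comp_continuousOn hc₂).sub
        ((continuous_const.mul continuous_star).comp_continuousOn hc₂)
    have hw₁z : w₁ x₁ = 0 := by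
      rw [hw₁def]
      have := Complex.conj_eq_iff_im.2 him₁
      rw [map_mul] at this
      simp only [hψdef]
      rw [this]
      ring
    have hw₂z : w₂ x₁ = 0 := by
      rw [hw₂def]
      have := Complex.conj_eq_iff_im.2 him₂
      rw [map_mul] at this
      simp only [hψdef]
      rw [this]
      ring
    -- conjugated integrands
    set B₁ : ℝ → ℂ := fun t => ((-(l t) : ℝ) : ℂ) * (starRingEnd ℂ) (u₁ t)
        + (((lam - q t + m t) : ℝ) : ℂ) * (starRingEnd ℂ) (u₂ t) with hB₁def
    set B₂ : ℝ → ℂ := fun t => ((-(lam - q t - m t) : ℝ) : ℂ) * (starRingEnd ℂ) (u₁ t)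
        + ((l t : ℝ) : ℂ) * (starRingEnd ℂ) (u₂ t) with hB₂def
    have hc₁s : ContinuousOn (fun t => (starRingEnd ℂ) (u₁ t)) I :=
      continuous_star.comp_continuousOn hc₁
    have hc₂s : ContinuousOn (fun t => (starRingEnd ℂ) (u₂ t)) I :=
      continuous_star.comp_continuousOn hc₂
    have hB₁ : ∀ {s z : ℝ}, s ∈ I → z ∈ I → IntervalIntegrable B₁ volume s z := fun hs hz =>
      (mulIntInt hI hr₁ hc₁s hs hz).add (mulIntInt hI hr₂ hc₂s hs hz)
    have hB₂ : ∀ {s z : ℝ}, s ∈ I → z ∈ I → IntervalIntegrable B₂ volume s z := fun hs hz =>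
      (mulIntInt hI hr₃ hc₁s hs hz).add (mulIntInt hI hl hc₂s hs hz)
    have hconjA₁ : ∀ t, (starRingEnd ℂ) (A₁ t) = B₁ t := by
      intro t
      simp only [hA₁def, hB₁def, map_add, map_mul, Complex.conj_ofReal]
    have hconjA₂ : ∀ t, (starRingEnd ℂ) (A₂ t) = B₂ t := by
      intro t
      simp only [hA₂def, hB₂def, map_add, map_mul, Complex.conj_ofReal]
    have hweq : ∀ x ∈ I,
        w₁ x = ∫ t in x₁..x, (((-(l t) : ℝ) : ℂ) * w₁ t + (((lam - q t + m t) : ℝ) : ℂ) * w₂ t)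
        ∧ w₂ x = ∫ t in x₁..x, (((-(lam - q t - m t) : ℝ) : ℂ) * w₁ t + ((l t : ℝ) : ℂ) * w₂ t) := by
      intro x hx
      obtain ⟨d1, d2⟩ := hdiff x hx x₁ hx₁
      have d1c : (starRingEnd ℂ) (u₁ x) - (starRingEnd ℂ) (u₁ x₁) = ∫ t in x₁..x, B₁ t := by
        rw [← map_sub, d1, ← intervalIntegral_conj]
        apply intervalIntegral.integral_congr
        intro t _
        exact hconjA₁ t
      have d2c : (starRingEnd ℂ) (u₂ x) - (starRingEnd ℂ) (u₂ x₁) = ∫ t in x₁..x, B₂ t := by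
        rw [← map_sub, d2, ← intervalIntegral_conj]
        apply intervalIntegral.integral_congr
        intro t _
        exact hconjA₂ t
      constructor
      · calc w₁ x = φ * (u₁ x - u₁ x₁) - ψ * ((starRingEnd ℂ) (u₁ x) - (starRingEnd ℂ) (u₁ x₁))
              + w₁ x₁ := by simp only [hw₁def]; ring
          _ = φ * (∫ t in x₁..x, A₁ t) - ψ * ∫ t in x₁..x, B₁ t := by
              rw [d1, d1c, hw₁z, add_zero]
          _ = (∫ t in x₁..x, φ * A₁ t) - ∫ t in x₁..x, ψ * B₁ t := by
              rw [intervalIntegral.integral_const_mul, intervalIntegral.integral_const_mul]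
          _ = ∫ t in x₁..x, (φ * A₁ t - ψ * B₁ t) :=
              (intervalIntegral.integral_sub ((hA₁ hx₁ hx).const_mul φ)
                ((hB₁ hx₁ hx).const_mul ψ)).symm
          _ = ∫ t in x₁..x, (((-(l t) : ℝ) : ℂ) * w₁ t + (((lam - q t + m t) : ℝ) : ℂ) * w₂ t) := by
              apply intervalIntegral.integral_congr
              intro t _
              simp only [hA₁def, hB₁def, hw₁def, hw₂def]
              ring
      · calc w₂ x = φ * (u₂ x - u₂ x₁) - ψ * ((starRingEnd ℂ) (u₂ x) - (starRingEnd ℂ) (u₂ x₁))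
              + w₂ x₁ := by simp only [hw₂def]; ring
          _ = φ * (∫ t in x₁..x, A₂ t) - ψ * ∫ t in x₁..x, B₂ t := by
              rw [d2, d2c, hw₂z, add_zero]
          _ = (∫ t in x₁..x, φ * A₂ t) - ∫ t in x₁..x, ψ * B₂ t := by
              rw [intervalIntegral.integral_const_mul, intervalIntegral.integral_const_mul]
          _ = ∫ t in x₁..x, (φ * A₂ t - ψ * B₂ t) :=
              (intervalIntegral.integral_sub ((hA₂ hx₁ hx).const_mul φ)
                ((hB₂ hx₁ hx).const_mul ψ)).symm
          _ = ∫ t in x₁..x, (((-(lam - q t - m t) : ℝ) : ℂ) * w₁ t + ((l t : ℝ) : ℂ) * w₂ t) := by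
              apply intervalIntegral.integral_congr
              intro t _
              simp only [hA₂def, hB₂def, hw₁def, hw₂def]
              ring
    have hwzero := dirac_unique hI hm hl hq hw₁c hw₂c hx₁ hweq
    refine ⟨φ, -ψ, ?_, ?_⟩
    · intro ⟨h1, _⟩
      rw [h1, norm_zero] at hφ
      norm_num at hφ
    · intro x hx
      obtain ⟨z1, z2⟩ := hwzero x hx
      constructor
      · have : w₁ x = 0 := z1
        rw [hw₁def] at this
        rw [show φ * u₁ x + -ψ * star (u₁ x) = φ * u₁ x - ψ * (starRingEnd ℂ) (u₁ x) by
          rw [starRingEnd_apply]; ring]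
        exact this
      · have : w₂ x = 0 := z2
        rw [hw₂def] at this
        rw [show φ * u₂ x + -ψ * star (u₂ x) = φ * u₂ x - ψ * (starRingEnd ℂ) (u₂ x) by
          rw [starRingEnd_apply]; ring]
        exact this
  tfae_finish
end
end

section
/- Let H be a complex Hilbert space and L, A bounded self-adjoint operators on H, and let λ₁ ≤ λ₂ be real numbers. Set I = [λ₁, λ₂] and I' = [λ₁ − ‖A‖, λ₂ + ‖A‖]. Assume that every point of spectrum(L) ∩ I and every point of spectrum(L + A) ∩ I' is an isolated point of the respective spectrum and is an eigenvalue of the respective operator, and that the subspace E' spanned by all eigenvectors of L + A with eigenvalue in I' is finite-dimensional, of dimension n. Then the subspace E spanned by all eigenvectors of L with eigenvalue in I is finite-dimensional of dimension at most n. -/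
noncomputable section
open MeasureTheory Set

/-- `μ` is an isolated point of the set `s ⊆ ℂ`. -/
def IsIsolatedIn (μ : ℂ) (s : Set ℂ) : Prop :=
  ∃ U ∈ nhds μ, s ∩ U = {μ}

/-- The subspace spanned by all eigenvectors of the bounded operator `T` with
(real) eigenvalue in the interval `[a, b]`. -/
def eigSpan {H : Type*} [NormedAddCommGroup H] [InnerProductSpace ℂ H]
    (T : H →L[ℂ] H) (a b : ℝ) : Submodule ℂ H :=
  ⨆ t ∈ Set.Icc a b, Module.End.eigenspace (T : H →ₗ[ℂ] H) (t : ℂ)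

section Helpers

variable {H : Type*} [NormedAddCommGroup H] [InnerProductSpace ℂ H] [CompleteSpace H]

/-- The real spectrum in the window. -/
def specSet (T : H →L[ℂ] H) (a b : ℝ) : Set ℝ := spectrum ℝ T ∩ Set.Icc a b

/-- Indicator of the spectral window. -/
def chiFun (T : H →L[ℂ] H) (a b : ℝ) : ℝ → ℝ := (specSet T a b).indicator 1

/-- Spectral projection onto the window. -/
def specProj (T : H →L[ℂ] H) (a b : ℝ) : H →L[ℂ] H := cfc (chiFun T a b) T

/-- Isolation hypothesis, real form. -/
def RIso (T : H →L[ℂ] H) (a b : ℝ) : Prop :=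
  ∀ s₀ ∈ specSet T a b, ∃ ε > 0, ∀ s ∈ spectrum ℝ T, |s - s₀| < ε → s = s₀

lemma real_mem_spec_iff (T : H →L[ℂ] H) (s : ℝ) :
    s ∈ spectrum ℝ T ↔ (s : ℂ) ∈ spectrum ℂ T := by
  rw [← spectrum.algebraMap_mem_iff ℂ, Complex.coe_algebraMap]

variable {T : H →L[ℂ] H} {a b : ℝ}

lemma specSet_finite (hiso : RIso T a b) : (specSet T a b).Finite := by
  have hcpt : IsCompact (specSet T a b) :=
    ((spectrum.isCompact (𝕜 := ℝ) T).inter_right isClosed_Icc)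
  refine hcpt.finite ?_
  rw [isDiscrete_iff_discreteTopology, discreteTopology_subtype_iff]
  intro s₀ hs₀
  obtain ⟨ε, hε, h⟩ := hiso s₀ hs₀
  rw [← nhdsWithin_inter', Metric.nhdsWithin_basis_ball.eq_bot_iff]
  refine ⟨ε, hε, Set.eq_empty_iff_forall_notMem.mpr fun s hs => ?_⟩
  exact hs.2.1 (h s hs.2.2.1 (by simpa [Real.dist_eq] using hs.1))

/-- `chiFun` is locally constant on the spectrum. -/
lemma chi_locconst (hiso : RIso T a b) :
    ∀ s₀ ∈ spectrum ℝ T, ∃ ε > 0, ∀ s ∈ spectrum ℝ T, |s - s₀| < ε →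
      chiFun T a b s = chiFun T a b s₀ := by
  intro s₀ hs₀
  by_cases h : s₀ ∈ specSet T a b
  · obtain ⟨ε, hε, hi⟩ := hiso s₀ h
    exact ⟨ε, hε, fun s hs hd => by rw [hi s hs hd]⟩
  · have hcl : IsClosed (specSet T a b) := (specSet_finite hiso).isClosed
    have : (specSet T a b)ᶜ ∈ nhds s₀ := hcl.isOpen_compl.mem_nhds h
    obtain ⟨ε, hε, hb⟩ := Metric.mem_nhds_iff.mp this
    refine ⟨ε, hε, fun s _ hd => ?_⟩
    have hs' : s ∉ specSet T a b := hb (by simpa [Real.dist_eq] using hd)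
    simp [chiFun, Set.indicator_of_notMem, hs', h]

/-- Continuity from local constancy. -/
lemma contOn_of_locconst {f : ℝ → ℝ} {A : Set ℝ}
    (h : ∀ s₀ ∈ A, ∃ ε > 0, ∀ s ∈ A, |s - s₀| < ε → f s = f s₀) :
    ContinuousOn f A := by
  intro s₀ hs₀
  obtain ⟨ε, hε, hc⟩ := h s₀ hs₀
  have hev : f =ᶠ[nhdsWithin s₀ A] fun _ => f s₀ := by
    filter_upwards [inter_mem_nhdsWithin A (Metric.ball_mem_nhds s₀ hε)] with s hs
    exact hc s hs.1 (by simpa [Real.dist_eq] using hs.2)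
  exact (continuousWithinAt_const).congr_of_eventuallyEq hev rfl

lemma chi_contOn (hiso : RIso T a b) : ContinuousOn (chiFun T a b) (spectrum ℝ T) :=
  contOn_of_locconst (chi_locconst hiso)

/-- Continuity of `(1 - χ) * (· - t)⁻¹` on the spectrum, for `t ∈ [a, b]`. -/
lemma resfun_contOn (hiso : RIso T a b) {t : ℝ} (ht : t ∈ Set.Icc a b) :
    ContinuousOn (fun s => (1 - chiFun T a b s) * (s - t)⁻¹) (spectrum ℝ T) := by
  intro s₀ hs₀
  obtain ⟨ε, hε, hc⟩ := chi_locconst hiso s₀ hs₀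
  by_cases h : s₀ ∈ specSet T a b
  · have h1 : chiFun T a b s₀ = 1 := by simp [chiFun, Set.indicator_of_mem, h]
    have hev : (fun s => (1 - chiFun T a b s) * (s - t)⁻¹) =ᶠ[nhdsWithin s₀ (spectrum ℝ T)]
        fun _ => 0 := by
      filter_upwards [inter_mem_nhdsWithin (spectrum ℝ T) (Metric.ball_mem_nhds s₀ hε)] with s hs
      rw [hc s hs.1 (by simpa [Real.dist_eq] using hs.2), h1]; ring
    exact continuousWithinAt_const.congr_of_eventuallyEq hev (by rw [h1]; ring)
  · have h0 : chiFun T a b s₀ = 0 := by simp [chiFun, Set.indicator_of_notMem, h]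
    have hst : s₀ ≠ t := by
      intro he; exact h ⟨hs₀, he ▸ ht⟩
    have hcont : ContinuousWithinAt (fun s => (s - t)⁻¹) (spectrum ℝ T) s₀ :=
      (ContinuousAt.continuousWithinAt (by fun_prop (disch := intros; exact sub_ne_zero.mpr hst)))
    have hev : (fun s => (1 - chiFun T a b s) * (s - t)⁻¹) =ᶠ[nhdsWithin s₀ (spectrum ℝ T)]
        fun s => (s - t)⁻¹ := by
      filter_upwards [inter_mem_nhdsWithin (spectrum ℝ T) (Metric.ball_mem_nhds s₀ hε)] with s hs
      rw [hc s hs.1 (by simpa [Real.dist_eq] using hs.2), h0]; ring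
    exact hcont.congr_of_eventuallyEq hev (by rw [h0]; ring)

lemma sub_alg_eq_cfc (hT : IsSelfAdjoint T) (t : ℝ) :
    T - algebraMap ℝ (H →L[ℂ] H) t = cfc (fun s : ℝ => s - t) T := by
  rw [cfc_sub (fun s : ℝ => s) (fun _ => t) T (by fun_prop) (by fun_prop), cfc_id' ℝ T hT,
    cfc_const t T hT]

/-- The key resolvent identity. -/
lemma res_mul (hT : IsSelfAdjoint T) (hiso : RIso T a b) {t : ℝ} (ht : t ∈ Set.Icc a b) :
    cfc (fun s => (1 - chiFun T a b s) * (s - t)⁻¹) T * (T - algebraMap ℝ (H →L[ℂ] H) t) =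
      1 - specProj T a b := by
  rw [sub_alg_eq_cfc hT t,
    ← cfc_mul _ _ T (resfun_contOn hiso ht) (by fun_prop)]
  have hcongr : (spectrum ℝ T).EqOn (fun s => (1 - chiFun T a b s) * (s - t)⁻¹ * (s - t))
      (fun s => 1 - chiFun T a b s) := by
    intro s hs
    by_cases hst : s = t
    · subst hst
      have hmem : s ∈ specSet T a b := ⟨hs, ht⟩
      have : chiFun T a b s = 1 := by
        rw [chiFun, Set.indicator_of_mem hmem]; rfl
      simp [this]
    · field_simp [sub_ne_zero.mpr hst]
  rw [cfc_congr hcongr, cfc_sub (fun _ => (1:ℝ)) (chiFun T a b) T (by fun_prop) (chi_contOn hiso),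
    specProj]
  congr 1
  exact cfc_one ℝ T hT

lemma eigen_fixed (hT : IsSelfAdjoint T) (hiso : RIso T a b) {t : ℝ} (ht : t ∈ Set.Icc a b)
    {v : H} (hv : v ∈ Module.End.eigenspace (T : H →ₗ[ℂ] H) (t : ℂ)) :
    specProj T a b v = v := by
  have h0 : (T - algebraMap ℝ (H →L[ℂ] H) t) v = 0 := by
    rw [Module.End.mem_eigenspace_iff] at hv
    have : (T : H →ₗ[ℂ] H) v = T v := rfl
    rw [ContinuousLinearMap.sub_apply, Algebra.algebraMap_eq_smul_one, ContinuousLinearMap.smul_apply,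
      ContinuousLinearMap.one_apply, ← this, hv, sub_eq_zero]
    rw [← Complex.coe_smul]
  have := congrArg (fun (X : H →L[ℂ] H) => X v) (res_mul hT hiso ht)
  simp only [ContinuousLinearMap.mul_apply, h0, map_zero, ContinuousLinearMap.sub_apply,
    ContinuousLinearMap.one_apply] at this
  have h2 : v = specProj T a b v := by rwa [eq_comm, sub_eq_zero] at this
  exact h2.symm

lemma upper_bound (hT : IsSelfAdjoint T) (hiso : RIso T a b) (hab : a ≤ b)
    {x : H} (hx : specProj T a b x = x) :
    ‖(T - algebraMap ℝ (H →L[ℂ] H) ((a + b) / 2)) x‖ ≤ (b - a) / 2 * ‖x‖ := by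
  set c := (a + b) / 2 with hc
  set r := (b - a) / 2 with hr
  have hr0 : (0:ℝ) ≤ r := by rw [hr]; linarith
  have hkey : (T - algebraMap ℝ (H →L[ℂ] H) c) * specProj T a b =
      cfc (fun s => (s - c) * chiFun T a b s) T := by
    rw [sub_alg_eq_cfc hT c, specProj, ← cfc_mul _ _ T (by fun_prop) (chi_contOn hiso)]
  have happ : (T - algebraMap ℝ (H →L[ℂ] H) c) x =
      cfc (fun s => (s - c) * chiFun T a b s) T x := by
    conv_lhs => rw [← hx]
    rw [← ContinuousLinearMap.mul_apply, hkey]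
  rw [happ]
  calc ‖cfc (fun s => (s - c) * chiFun T a b s) T x‖
      ≤ ‖cfc (fun s => (s - c) * chiFun T a b s) T‖ * ‖x‖ := ContinuousLinearMap.le_opNorm _ _
    _ ≤ r * ‖x‖ := by
        refine mul_le_mul_of_nonneg_right (norm_cfc_le hr0 fun s hs => ?_) (norm_nonneg x)
        by_cases h : s ∈ specSet T a b
        · have h1 : chiFun T a b s = 1 := by rw [chiFun, Set.indicator_of_mem h]; rfl
          rw [h1, mul_one, Real.norm_eq_abs, abs_le]
          obtain ⟨_, h2, h3⟩ := h
          constructor <;> simp only [hc, hr] <;> linarith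
        · have h1 : chiFun T a b s = 0 := by rw [chiFun, Set.indicator_of_notMem h]
          simpa [h1] using hr0

lemma lower_zero (hT : IsSelfAdjoint T) (hiso : RIso T a b) (hab : a ≤ b)
    {x : H} (hx : specProj T a b x = 0)
    (hub : ‖(T - algebraMap ℝ (H →L[ℂ] H) ((a + b) / 2)) x‖ ≤ (b - a) / 2 * ‖x‖) :
    x = 0 := by
  set c := (a + b) / 2 with hc
  set r := (b - a) / 2 with hr
  have hr0 : (0:ℝ) ≤ r := by rw [hr]; linarith
  have hcI : c ∈ Set.Icc a b := ⟨by rw [hc]; linarith, by rw [hc]; linarith⟩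
  have hxeq : x = cfc (fun s => (1 - chiFun T a b s) * (s - c)⁻¹) T
      ((T - algebraMap ℝ (H →L[ℂ] H) c) x) := by
    have := congrArg (fun (X : H →L[ℂ] H) => X x) (res_mul hT hiso hcI)
    simp only [ContinuousLinearMap.mul_apply, ContinuousLinearMap.sub_apply,
      ContinuousLinearMap.one_apply, hx, sub_zero] at this
    exact this.symm
  set V := spectrum ℝ T \ specSet T a b with hV
  by_cases hVe : V = ∅
  · -- chi = 1 on the spectrum, so 1 - P = 0
    have hcongr : (spectrum ℝ T).EqOn (fun s => (1 - chiFun T a b s) * (s - c)⁻¹) 0 := by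
      intro s hs
      have hmem : s ∈ specSet T a b := by
        by_contra h
        exact absurd (Set.eq_empty_iff_forall_notMem.mp hVe s) (fun h2 => h2 ⟨hs, h⟩)
      have h1 : chiFun T a b s = 1 := by rw [chiFun, Set.indicator_of_mem hmem]; rfl
      simp [h1]
    rw [hxeq, cfc_congr hcongr, cfc_zero ℝ T]
    simp
  · have hVne : V.Nonempty := Set.nonempty_iff_ne_empty.mpr hVe
    have hVcl : IsClosed V := by
      rw [← closure_subset_iff_isClosed]
      intro y hy
      have hyσ : y ∈ spectrum ℝ T :=
        (spectrum.isClosed (𝕜 := ℝ) T).closure_subset_iff.mpr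
          (fun z hz => hz.1) hy
      by_cases hyS : y ∈ specSet T a b
      · obtain ⟨ε, hε, hi⟩ := hiso y hyS
        obtain ⟨s, hsV, hd⟩ := Metric.mem_closure_iff.mp hy ε hε
        have : s = y := hi s hsV.1 (by rw [Real.dist_eq] at hd; rw [abs_sub_comm]; exact hd)
        exact this ▸ hsV
      · exact ⟨hyσ, hyS⟩
    have hVcpt : IsCompact V :=
      (spectrum.isCompact (𝕜 := ℝ) T).of_isClosed_subset hVcl Set.diff_subset
    obtain ⟨s₀, hs₀V, hmin⟩ := hVcpt.exists_isMinOn hVne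
      ((continuous_abs.comp (continuous_id.sub continuous_const)).continuousOn
        (s := V) : ContinuousOn (fun s => |s - c|) V)
    set δ := |s₀ - c| with hδ
    have hs₀I : s₀ ∉ Set.Icc a b := fun h => hs₀V.2 ⟨hs₀V.1, h⟩
    have hrδ : r < δ := by
      rw [Set.mem_Icc, not_and_or, not_le, not_le] at hs₀I
      have h1 : c - s₀ ≤ δ := by rw [hδ, abs_sub_comm]; exact le_abs_self _
      have h2 : s₀ - c ≤ δ := by rw [hδ]; exact le_abs_self _
      rcases hs₀I with h | h <;> simp only [hc, hr] at * <;> linarith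
    have hδ0 : 0 < δ := lt_of_le_of_lt hr0 hrδ
    have hnorm : ‖cfc (fun s => (1 - chiFun T a b s) * (s - c)⁻¹) T‖ ≤ δ⁻¹ := by
      refine norm_cfc_le (by positivity) fun s hs => ?_
      by_cases h : s ∈ specSet T a b
      · have h1 : chiFun T a b s = 1 := by rw [chiFun, Set.indicator_of_mem h]; rfl
        simp [h1]; positivity
      · have h1 : chiFun T a b s = 0 := by rw [chiFun, Set.indicator_of_notMem h]
        have hsV : s ∈ V := ⟨hs, h⟩
        have hge : δ ≤ |s - c| := hmin hsV
        rw [h1, sub_zero, one_mul, Real.norm_eq_abs, abs_inv]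
        exact inv_anti₀ hδ0 hge
    by_contra hx0
    have hn : 0 < ‖x‖ := norm_pos_iff.mpr hx0
    set K := cfc (fun s => (1 - chiFun T a b s) * (s - c)⁻¹) T with hK
    set y := (T - algebraMap ℝ (H →L[ℂ] H) c) x with hy
    have hchain : ‖x‖ ≤ δ⁻¹ * (r * ‖x‖) := by
      have e1 : ‖x‖ = ‖K y‖ := by rw [← hxeq]
      have e2 : ‖K y‖ ≤ ‖K‖ * ‖y‖ := ContinuousLinearMap.le_opNorm _ _
      have e3 : ‖K‖ * ‖y‖ ≤ δ⁻¹ * (r * ‖x‖) :=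
        mul_le_mul hnorm hub (norm_nonneg _) (by positivity)
      linarith
    have : δ * ‖x‖ ≤ r * ‖x‖ := by
      have := mul_le_mul_of_nonneg_left hchain (le_of_lt hδ0)
      rwa [← mul_assoc, mul_inv_cancel₀ (ne_of_gt hδ0), one_mul] at this
    nlinarith

lemma single_ind_contOn (hiso : RIso T a b) {μ : ℝ} (hμ : μ ∈ specSet T a b) :
    ContinuousOn (Set.indicator {μ} (1 : ℝ → ℝ)) (spectrum ℝ T) := by
  refine contOn_of_locconst fun s₀ hs₀ => ?_
  by_cases h : s₀ = μ
  · subst h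
    obtain ⟨ε, hε, hi⟩ := hiso s₀ hμ
    exact ⟨ε, hε, fun s hs hd => by rw [hi s hs hd]⟩
  · refine ⟨|s₀ - μ|, abs_pos.mpr (sub_ne_zero.mpr h), fun s hs hd => ?_⟩
    have hsne : s ≠ μ := by
      intro he; subst he
      rw [abs_sub_comm] at hd
      exact absurd hd (lt_irrefl _)
    rw [Set.indicator_of_notMem (by simpa using hsne), Set.indicator_of_notMem (by simpa using h)]

lemma proj_apply_mem_eigenspace (hT : IsSelfAdjoint T) (hiso : RIso T a b)
    {μ : ℝ} (hμ : μ ∈ specSet T a b) (x : H) :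
    cfc (Set.indicator {μ} (1 : ℝ → ℝ)) T x ∈
      Module.End.eigenspace (T : H →ₗ[ℂ] H) (μ : ℂ) := by
  have hzero : (T - algebraMap ℝ (H →L[ℂ] H) μ) * cfc (Set.indicator {μ} (1 : ℝ → ℝ)) T = 0 := by
    rw [sub_alg_eq_cfc hT μ, ← cfc_mul _ _ T (by fun_prop) (single_ind_contOn hiso hμ)]
    have : (fun s : ℝ => (s - μ) * Set.indicator {μ} (1 : ℝ → ℝ) s) = fun _ => (0:ℝ) := by
      funext s
      by_cases h : s = μ
      · subst h; simp
      · rw [Set.indicator_of_notMem (by simpa using h)]; ring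
    rw [this]
    exact cfc_const_zero ℝ T
  have := congrArg (fun (X : H →L[ℂ] H) => X x) hzero
  simp only [ContinuousLinearMap.mul_apply, ContinuousLinearMap.sub_apply,
    ContinuousLinearMap.zero_apply] at this
  rw [Module.End.mem_eigenspace_iff]
  have halg : (algebraMap ℝ (H →L[ℂ] H) μ) (cfc (Set.indicator {μ} (1 : ℝ → ℝ)) T x) =
      (μ : ℂ) • (cfc (Set.indicator {μ} (1 : ℝ → ℝ)) T x) := by
    rw [Algebra.algebraMap_eq_smul_one, ContinuousLinearMap.smul_apply,
      ContinuousLinearMap.one_apply, ← Complex.coe_smul]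
  have h2 : T (cfc (Set.indicator {μ} (1 : ℝ → ℝ)) T x) =
      (μ : ℂ) • (cfc (Set.indicator {μ} (1 : ℝ → ℝ)) T x) := by
    rw [← halg]; rwa [sub_eq_zero] at this
  exact h2

lemma proj_mem_eigSpan (hT : IsSelfAdjoint T) (hiso : RIso T a b) (x : H) :
    specProj T a b x ∈ eigSpan T a b := by
  have hfin := specSet_finite hiso
  have hchi : chiFun T a b = ∑ μ ∈ hfin.toFinset, Set.indicator {μ} (1 : ℝ → ℝ) := by
    funext s
    rw [Finset.sum_apply]
    by_cases h : s ∈ specSet T a b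
    · rw [chiFun, Set.indicator_of_mem h]
      rw [Finset.sum_eq_single s]
      · simp
      · intro μ hμF hne
        exact Set.indicator_of_notMem (by simpa using (Ne.symm hne)) _
      · intro hsF
        exact absurd (hfin.mem_toFinset.mpr h) hsF
    · rw [chiFun, Set.indicator_of_notMem h]
      symm
      apply Finset.sum_eq_zero
      intro μ hμF
      have : s ≠ μ := by
        intro he; subst he
        exact h (hfin.mem_toFinset.mp hμF)
      exact Set.indicator_of_notMem (by simpa using this) _
  have hsum : specProj T a b = ∑ μ ∈ hfin.toFinset, cfc (Set.indicator {μ} (1 : ℝ → ℝ)) T := by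
    rw [specProj, hchi,
      cfc_sum _ T _ (fun μ hμ => single_ind_contOn hiso (hfin.mem_toFinset.mp hμ))]
  rw [hsum, ContinuousLinearMap.sum_apply]
  apply Submodule.sum_mem
  intro μ hμF
  have hμ := hfin.mem_toFinset.mp hμF
  have hle : Module.End.eigenspace (T : H →ₗ[ℂ] H) (μ : ℂ) ≤ eigSpan T a b := by
    rw [eigSpan]
    exact le_iSup₂_of_le μ hμ.2 le_rfl
  exact hle (proj_apply_mem_eigenspace hT hiso hμ x)

lemma riso_of_isolated {T : H →L[ℂ] H} {a b : ℝ}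
    (hyp : ∀ t ∈ Set.Icc a b, (t : ℂ) ∈ spectrum ℂ T →
      IsIsolatedIn (t : ℂ) (spectrum ℂ T)) : RIso T a b := by
  intro s₀ hs₀
  obtain ⟨U, hU, hUeq⟩ := hyp s₀ hs₀.2 ((real_mem_spec_iff T s₀).mp hs₀.1)
  obtain ⟨ε, hε, hball⟩ := Metric.mem_nhds_iff.mp hU
  refine ⟨ε, hε, fun s hs hd => ?_⟩
  have hm : (s : ℂ) ∈ spectrum ℂ T ∩ U := by
    refine ⟨(real_mem_spec_iff T s).mp hs, hball ?_⟩
    rw [Metric.mem_ball]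
    rw [Complex.dist_eq, ← Complex.ofReal_sub, Complex.norm_real, Real.norm_eq_abs]
    exact hd
  rw [hUeq, Set.mem_singleton_iff] at hm
  exact_mod_cast hm

theorem eigenvalue_count_bounded_perturbation'
    {H : Type*} [NormedAddCommGroup H] [InnerProductSpace ℂ H] [CompleteSpace H]
    (L A : H →L[ℂ] H) (hL : IsSelfAdjoint L) (hA : IsSelfAdjoint A)
    (lam₁ lam₂ : ℝ) (hle : lam₁ ≤ lam₂) (n : ℕ)
    (hLspec : ∀ t ∈ Set.Icc lam₁ lam₂, (t : ℂ) ∈ spectrum ℂ L →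
      IsIsolatedIn (t : ℂ) (spectrum ℂ L) ∧
        Module.End.HasEigenvalue (L : H →ₗ[ℂ] H) (t : ℂ))
    (hLAspec : ∀ t ∈ Set.Icc (lam₁ - ‖A‖) (lam₂ + ‖A‖), (t : ℂ) ∈ spectrum ℂ (L + A) →
      IsIsolatedIn (t : ℂ) (spectrum ℂ (L + A)) ∧
        Module.End.HasEigenvalue ((L + A : H →L[ℂ] H) : H →ₗ[ℂ] H) (t : ℂ))
    (hE' : FiniteDimensional ℂ (eigSpan (L + A) (lam₁ - ‖A‖) (lam₂ + ‖A‖)))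
    (hn : Module.finrank ℂ (eigSpan (L + A) (lam₁ - ‖A‖) (lam₂ + ‖A‖)) = n) :
    FiniteDimensional ℂ (eigSpan L lam₁ lam₂) ∧
      Module.finrank ℂ (eigSpan L lam₁ lam₂) ≤ n := by
  set a' := lam₁ - ‖A‖ with ha'
  set b' := lam₂ + ‖A‖ with hb'
  have hab' : a' ≤ b' := by have := norm_nonneg A; rw [ha', hb']; linarith
  have hT : IsSelfAdjoint (L + A) := hL.add hA
  have hisoL : RIso L lam₁ lam₂ := riso_of_isolated fun t ht hsp => (hLspec t ht hsp).1
  have hisoT : RIso (L + A) a' b' := riso_of_isolated fun t ht hsp => (hLAspec t ht hsp).1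
  -- E is contained in the fixed points of the spectral projection of L
  have hfix : ∀ x ∈ eigSpan L lam₁ lam₂, specProj L lam₁ lam₂ x = x := by
    intro x hx
    have hE_le : eigSpan L lam₁ lam₂ ≤
        LinearMap.ker ((specProj L lam₁ lam₂ : H →ₗ[ℂ] H) - LinearMap.id) := by
      rw [eigSpan]
      refine iSup₂_le fun t ht => fun v hv => ?_
      rw [LinearMap.mem_ker, LinearMap.sub_apply, LinearMap.id_apply, sub_eq_zero]
      exact eigen_fixed hL hisoL ht hv
    have := hE_le hx
    rw [LinearMap.mem_ker, LinearMap.sub_apply, LinearMap.id_apply, sub_eq_zero] at this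
    exact this
  -- the linear map E → E'
  have hmem : ∀ x : eigSpan L lam₁ lam₂,
      specProj (L + A) a' b' (x : H) ∈ eigSpan (L + A) a' b' :=
    fun x => proj_mem_eigSpan hT hisoT (x : H)
  set f : eigSpan L lam₁ lam₂ →ₗ[ℂ] eigSpan (L + A) a' b' :=
    LinearMap.codRestrict _
      ((specProj (L + A) a' b' : H →ₗ[ℂ] H).comp (eigSpan L lam₁ lam₂).subtype) hmem with hf
  have hinj : Function.Injective f := by
    rw [← LinearMap.ker_eq_bot]
    rw [LinearMap.ker_eq_bot']
    intro x hx0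
    have hPx : specProj (L + A) a' b' (x : H) = 0 := by
      have := congrArg (Subtype.val) hx0
      exact this
    have hub : ‖((L + A) - algebraMap ℝ (H →L[ℂ] H) ((a' + b') / 2)) (x : H)‖ ≤
        (b' - a') / 2 * ‖(x : H)‖ := by
      have hcc : (a' + b') / 2 = (lam₁ + lam₂) / 2 := by rw [ha', hb']; ring
      have hrr : (b' - a') / 2 = (lam₂ - lam₁) / 2 + ‖A‖ := by rw [ha', hb']; ring
      have hupL : ‖(L - algebraMap ℝ (H →L[ℂ] H) ((lam₁ + lam₂) / 2)) (x : H)‖ ≤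
          (lam₂ - lam₁) / 2 * ‖(x : H)‖ := upper_bound hL hisoL hle (hfix _ x.2)
      have hsplit : ((L + A) - algebraMap ℝ (H →L[ℂ] H) ((a' + b') / 2)) (x : H) =
          (L - algebraMap ℝ (H →L[ℂ] H) ((lam₁ + lam₂) / 2)) (x : H) + A (x : H) := by
        rw [hcc]
        simp only [ContinuousLinearMap.sub_apply, ContinuousLinearMap.add_apply]
        abel
      rw [hsplit, hrr]
      calc ‖(L - algebraMap ℝ (H →L[ℂ] H) ((lam₁ + lam₂) / 2)) (x : H) + A (x : H)‖
          ≤ ‖(L - algebraMap ℝ (H →L[ℂ] H) ((lam₁ + lam₂) / 2)) (x : H)‖ + ‖A (x : H)‖ :=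
            norm_add_le _ _
        _ ≤ (lam₂ - lam₁) / 2 * ‖(x : H)‖ + ‖A‖ * ‖(x : H)‖ :=
            add_le_add hupL (A.le_opNorm _)
        _ = ((lam₂ - lam₁) / 2 + ‖A‖) * ‖(x : H)‖ := by ring
    have hx : (x : H) = 0 := lower_zero hT hisoT hab' hPx hub
    exact Subtype.ext hx
  haveI := hE'
  haveI hfd : FiniteDimensional ℂ (eigSpan L lam₁ lam₂) :=
    FiniteDimensional.of_injective f hinj
  exact ⟨hfd, hn ▸ LinearMap.finrank_le_finrank_of_injective hinj⟩


end Helpers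

/-- **Lemma 2 b) of the paper (bounded perturbations).**  If `L`, `A` are bounded
self-adjoint operators, and the spectra of `L` in `I = [λ₁, λ₂]` and of `L + A` in
`I' = [λ₁ − ‖A‖, λ₂ + ‖A‖]` consist of isolated eigenvalues, with the span `E'` of
eigenvectors of `L + A` with eigenvalue in `I'` of finite dimension `n`, then the
span `E` of eigenvectors of `L` with eigenvalue in `I` has dimension at most `n`. -/
theorem eigenvalue_count_bounded_perturbation
    {H : Type*} [NormedAddCommGroup H] [InnerProductSpace ℂ H] [CompleteSpace H]
    (L A : H →L[ℂ] H) (hL : IsSelfAdjoint L) (hA : IsSelfAdjoint A)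
    (lam₁ lam₂ : ℝ) (hle : lam₁ ≤ lam₂) (n : ℕ)
    (hLspec : ∀ t ∈ Set.Icc lam₁ lam₂, (t : ℂ) ∈ spectrum ℂ L →
      IsIsolatedIn (t : ℂ) (spectrum ℂ L) ∧
        Module.End.HasEigenvalue (L : H →ₗ[ℂ] H) (t : ℂ))
    (hLAspec : ∀ t ∈ Set.Icc (lam₁ - ‖A‖) (lam₂ + ‖A‖), (t : ℂ) ∈ spectrum ℂ (L + A) →
      IsIsolatedIn (t : ℂ) (spectrum ℂ (L + A)) ∧
        Module.End.HasEigenvalue ((L + A : H →L[ℂ] H) : H →ₗ[ℂ] H) (t : ℂ))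
    (hE' : FiniteDimensional ℂ (eigSpan (L + A) (lam₁ - ‖A‖) (lam₂ + ‖A‖)))
    (hn : Module.finrank ℂ (eigSpan (L + A) (lam₁ - ‖A‖) (lam₂ + ‖A‖)) = n) :
    FiniteDimensional ℂ (eigSpan L lam₁ lam₂) ∧
      Module.finrank ℂ (eigSpan L lam₁ lam₂) ≤ n :=
  eigenvalue_count_bounded_perturbation' L A hL hA lam₁ lam₂ hle n hLspec hLAspec hE' hn
end
end

section
/- Let m, l, q : ℝ → ℝ be locally integrable and α-periodic (α > 0), λ ∈ ℝ, and let D = tr U(α) be the discriminant of the Dirac system (−iσ₂ d/dx + mσ₃ + lσ₁ + q)u = λu. If |D| < 2, then every solution u : ℝ → ℝ² of the system is bounded on ℝ (there is M with ‖u(x)‖ ≤ M for all x ∈ ℝ). If |D| > 2, then every nontrivial solution is unbounded on ℝ (for every M > 0 there is x ∈ ℝ with ‖u(x)‖ > M). -/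
noncomputable section
open MeasureTheory Set

/-- First component of `iσ₂·((λ − q)·I₂ − m·σ₃ − l·σ₁)·u` with `iσ₂ = [[0,1],[−1,0]]`. -/
def diracRHS1 (m l q : ℝ → ℝ) (lam : ℝ) (u₁ u₂ : ℝ → ℝ) (t : ℝ) : ℝ :=
  -(l t) * u₁ t + (lam - q t + m t) * u₂ t

/-- Second component. -/
def diracRHS2 (m l q : ℝ → ℝ) (lam : ℝ) (u₁ u₂ : ℝ → ℝ) (t : ℝ) : ℝ :=
  -(lam - q t - m t) * u₁ t + (l t) * u₂ t

/-- `u = (u₁, u₂) : ℝ → ℝ²` is a real solution of the Dirac system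
`(−iσ₂ d/dx + mσ₃ + lσ₁ + q)u = λu` on `ℝ`. -/
def IsDiracSolution (m l q : ℝ → ℝ) (lam : ℝ) (u₁ u₂ : ℝ → ℝ) : Prop :=
  Continuous u₁ ∧ Continuous u₂ ∧
    ∀ x : ℝ,
      u₁ x = u₁ 0 + ∫ t in (0:ℝ)..x, diracRHS1 m l q lam u₁ u₂ t ∧
      u₂ x = u₂ 0 + ∫ t in (0:ℝ)..x, diracRHS2 m l q lam u₁ u₂ t

/-- `U : ℝ → M₂(ℝ)` is the fundamental matrix of the Dirac system. -/
def IsFundamentalMatrix (m l q : ℝ → ℝ) (lam : ℝ)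
    (U : ℝ → Matrix (Fin 2) (Fin 2) ℝ) : Prop :=
  (∀ i j, Continuous fun x => U x i j) ∧ U 0 = 1 ∧
    ∀ (x : ℝ) (i j : Fin 2),
      U x i j = (1 : Matrix (Fin 2) (Fin 2) ℝ) i j +
        ∫ t in (0:ℝ)..x,
          (!![(0:ℝ), 1; -1, 0] *
            !![lam - q t - m t, -(l t); -(l t), lam - q t + m t] * U t) i j

open intervalIntegral

namespace DiracAux

lemma locII {f : ℝ → ℝ} (hf : LocallyIntegrable f volume) (a b : ℝ) :
    IntervalIntegrable f volume a b := by
  rw [intervalIntegrable_iff]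
  exact (hf.integrableOn_isCompact isCompact_uIcc).mono_set Ioc_subset_Icc_self

lemma locMulCont {f g : ℝ → ℝ} (hf : LocallyIntegrable f volume) (hg : Continuous g)
    (a b : ℝ) : IntervalIntegrable (fun t => f t * g t) volume a b := by
  rw [intervalIntegrable_iff]
  exact ((hf.integrableOn_isCompact isCompact_uIcc).mul_continuousOn hg.continuousOn
    isCompact_uIcc).mono_set Ioc_subset_Icc_self

lemma intMulCont {F g : ℝ → ℝ} (hF : ∀ x y : ℝ, IntervalIntegrable F volume x y)
    (hg : Continuous g) (a b : ℝ) :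
    IntervalIntegrable (fun t => F t * g t) volume a b := by
  rw [intervalIntegrable_iff]
  have h1 : IntegrableOn F (Icc (a ⊓ b) (a ⊔ b)) volume :=
    (integrableOn_Icc_iff_integrableOn_Ioc (by simp)).mpr (intervalIntegrable_iff.mp (hF a b))
  have h2 : IntegrableOn (fun t => F t * g t) (Icc (a ⊓ b) (a ⊔ b)) volume :=
    h1.mul_continuousOn hg.continuousOn isCompact_Icc
  exact h2.mono_set Ioc_subset_Icc_self

variable {m l q : ℝ → ℝ} {lam : ℝ}

lemma intInt1 (hm : LocallyIntegrable m volume) (hl : LocallyIntegrable l volume)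
    (hq : LocallyIntegrable q volume) {u₁ u₂ : ℝ → ℝ}
    (h₁ : Continuous u₁) (h₂ : Continuous u₂) (a b : ℝ) :
    IntervalIntegrable (diracRHS1 m l q lam u₁ u₂) volume a b := by
  have : diracRHS1 m l q lam u₁ u₂ =
      fun t => (-(l t)) * u₁ t + (lam - q t + m t) * u₂ t := rfl
  rw [this]
  exact (locMulCont hl.neg h₁ a b).add
    (locMulCont (((locallyIntegrable_const lam).sub hq).add hm) h₂ a b)

lemma intInt2 (hm : LocallyIntegrable m volume) (hl : LocallyIntegrable l volume)
    (hq : LocallyIntegrable q volume) {u₁ u₂ : ℝ → ℝ}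
    (h₁ : Continuous u₁) (h₂ : Continuous u₂) (a b : ℝ) :
    IntervalIntegrable (diracRHS2 m l q lam u₁ u₂) volume a b := by
  have : diracRHS2 m l q lam u₁ u₂ =
      fun t => (-(lam - q t - m t)) * u₁ t + (l t) * u₂ t := rfl
  rw [this]
  exact (locMulCont ((((locallyIntegrable_const lam).sub hq).sub hm)).neg h₁ a b).add
    (locMulCont hl h₂ a b)

lemma comb (hm : LocallyIntegrable m volume) (hl : LocallyIntegrable l volume)
    (hq : LocallyIntegrable q volume) (a b : ℝ) {v₁ v₂ w₁ w₂ : ℝ → ℝ}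
    (hv : IsDiracSolution m l q lam v₁ v₂) (hw : IsDiracSolution m l q lam w₁ w₂) :
    IsDiracSolution m l q lam (fun x => a * v₁ x + b * w₁ x)
      (fun x => a * v₂ x + b * w₂ x) := by
  obtain ⟨hv₁, hv₂, hveq⟩ := hv
  obtain ⟨hw₁, hw₂, hweq⟩ := hw
  have hc₁ : Continuous fun x => a * v₁ x + b * w₁ x :=
    ((continuous_const.mul hv₁).add (continuous_const.mul hw₁))
  have hc₂ : Continuous fun x => a * v₂ x + b * w₂ x :=
    ((continuous_const.mul hv₂).add (continuous_const.mul hw₂))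
  refine ⟨hc₁, hc₂, fun x => ⟨?_, ?_⟩⟩
  · have key : ∀ t : ℝ, diracRHS1 m l q lam (fun x => a * v₁ x + b * w₁ x)
        (fun x => a * v₂ x + b * w₂ x) t
        = a * diracRHS1 m l q lam v₁ v₂ t + b * diracRHS1 m l q lam w₁ w₂ t := by
      intro t; simp only [diracRHS1]; ring
    have h1 : (∫ t in (0:ℝ)..x, diracRHS1 m l q lam (fun x => a * v₁ x + b * w₁ x)
        (fun x => a * v₂ x + b * w₂ x) t)
        = a * (∫ t in (0:ℝ)..x, diracRHS1 m l q lam v₁ v₂ t)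
          + b * ∫ t in (0:ℝ)..x, diracRHS1 m l q lam w₁ w₂ t := by
      rw [integral_congr (g := fun t => a * diracRHS1 m l q lam v₁ v₂ t
        + b * diracRHS1 m l q lam w₁ w₂ t) (fun t _ => key t)]
      rw [integral_add ((intInt1 hm hl hq hv₁ hv₂ 0 x).const_mul a)
        ((intInt1 hm hl hq hw₁ hw₂ 0 x).const_mul b),
        intervalIntegral.integral_const_mul, intervalIntegral.integral_const_mul]
    rw [h1]; beta_reduce; linear_combination a * (hveq x).1 + b * (hweq x).1
  · have key : ∀ t : ℝ, diracRHS2 m l q lam (fun x => a * v₁ x + b * w₁ x)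
        (fun x => a * v₂ x + b * w₂ x) t
        = a * diracRHS2 m l q lam v₁ v₂ t + b * diracRHS2 m l q lam w₁ w₂ t := by
      intro t; simp only [diracRHS2]; ring
    have h1 : (∫ t in (0:ℝ)..x, diracRHS2 m l q lam (fun x => a * v₁ x + b * w₁ x)
        (fun x => a * v₂ x + b * w₂ x) t)
        = a * (∫ t in (0:ℝ)..x, diracRHS2 m l q lam v₁ v₂ t)
          + b * ∫ t in (0:ℝ)..x, diracRHS2 m l q lam w₁ w₂ t := by
      rw [integral_congr (g := fun t => a * diracRHS2 m l q lam v₁ v₂ t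
        + b * diracRHS2 m l q lam w₁ w₂ t) (fun t _ => key t)]
      rw [integral_add ((intInt2 hm hl hq hv₁ hv₂ 0 x).const_mul a)
        ((intInt2 hm hl hq hw₁ hw₂ 0 x).const_mul b),
        intervalIntegral.integral_const_mul, intervalIntegral.integral_const_mul]
    rw [h1]; beta_reduce; linear_combination a * (hveq x).2 + b * (hweq x).2

lemma gronwall_zero {K φ : ℝ → ℝ} {b : ℝ} (hb : 0 ≤ b)
    (hφ : Continuous φ) (hφ0 : ∀ x, 0 ≤ φ x) (hK0 : ∀ x, 0 ≤ K x)
    (hKi : ∀ x y : ℝ, IntervalIntegrable K volume x y)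
    (hKφ : ∀ x y : ℝ, IntervalIntegrable (fun t => K t * φ t) volume x y)
    (h : ∀ x ∈ Icc (0:ℝ) b, φ x ≤ ∫ t in (0:ℝ)..x, K t * φ t) :
    ∀ x ∈ Icc (0:ℝ) b, φ x = 0 := by
  set S : Set ℝ := {x | x ∈ Icc (0:ℝ) b ∧ ∀ y ∈ Icc (0:ℝ) x, φ y = 0} with hS
  have h0S : (0:ℝ) ∈ S := by
    refine ⟨⟨le_rfl, hb⟩, fun y hy => ?_⟩
    have hy0 : y = 0 := le_antisymm hy.2 hy.1
    subst hy0
    have := h 0 ⟨le_rfl, hb⟩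
    rw [integral_same] at this
    exact le_antisymm this (hφ0 0)
  have hbdd : BddAbove S := ⟨b, fun x hx => hx.1.2⟩
  have hne : S.Nonempty := ⟨0, h0S⟩
  set c := sSup S with hc
  have hc0 : 0 ≤ c := le_csSup hbdd h0S
  have hcb : c ≤ b := csSup_le hne fun x hx => hx.1.2
  have hcS : c ∈ S := by
    refine ⟨⟨hc0, hcb⟩, fun y hy => ?_⟩
    rcases lt_or_eq_of_le hy.2 with hlt | heq
    · obtain ⟨s, hsS, hys⟩ := exists_lt_of_lt_csSup hne hlt
      exact hsS.2 y ⟨hy.1, hys.le⟩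
    · subst heq
      rcases eq_or_lt_of_le hc0 with h0 | h0
      · rw [← h0]; exact h0S.2 0 ⟨le_rfl, le_rfl⟩
      · have hev : ∀ᶠ z in nhdsWithin c (Iio c), φ z = 0 := by
          filter_upwards [Ioo_mem_nhdsLT_of_mem ⟨h0, le_rfl⟩] with z hz
          obtain ⟨s, hsS, hys⟩ := exists_lt_of_lt_csSup hne hz.2
          exact hsS.2 z ⟨hz.1.le, hys.le⟩
        have h1 : Filter.Tendsto φ (nhdsWithin c (Iio c)) (nhds (φ c)) :=
          (hφ.tendsto c).mono_left nhdsWithin_le_nhds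
        have h2 : Filter.Tendsto φ (nhdsWithin c (Iio c)) (nhds 0) :=
          Filter.Tendsto.congr' (Filter.EventuallyEq.symm hev) tendsto_const_nhds
        exact tendsto_nhds_unique h1 h2
  rcases eq_or_lt_of_le hcb with heq | hclt
  · exact fun x hx => hcS.2 x (heq ▸ hx)
  · exfalso
    have hP : ContinuousOn (fun x => ∫ t in c..x, K t) (uIcc c b) :=
      continuousOn_primitive_interval' (hKi c b) left_mem_uIcc
    have hcw : ContinuousWithinAt (fun x => ∫ t in c..x, K t) (uIcc c b) c :=
      hP c left_mem_uIcc
    have hev : ∀ᶠ x in nhdsWithin c (uIcc c b), (∫ t in c..x, K t) < 1/2 := by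
      have ht : Filter.Tendsto (fun x => ∫ t in c..x, K t) (nhdsWithin c (uIcc c b))
          (nhds 0) := by
        have : (∫ t in c..c, K t) = 0 := integral_same
        rw [← this]; exact hcw
      exact ht.eventually_lt_const (by norm_num)
    rw [eventually_nhdsWithin_iff] at hev
    obtain ⟨ε, hε, hball⟩ := Metric.eventually_nhds_iff.mp hev
    set d := min (c + ε/2) b with hd
    have hcd : c < d := lt_min (by linarith) hclt
    have hdb : d ≤ b := min_le_right _ _
    have hPd : ∀ x ∈ Icc c d, (∫ t in c..x, K t) < 1/2 := by
      intro x hx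
      refine hball ?_ ?_
      · rw [Real.dist_eq, abs_lt]
        have h1 : x ≤ c + ε/2 := le_trans hx.2 (min_le_left _ _)
        constructor <;> linarith [hx.1]
      · rw [uIcc_of_le hclt.le]
        exact ⟨hx.1, le_trans hx.2 hdb⟩
    obtain ⟨y₀, hy₀mem, hy₀max⟩ :=
      isCompact_Icc.exists_isMaxOn (nonempty_Icc.mpr hcd.le) hφ.continuousOn
    set T := φ y₀ with hT
    have hT0 : 0 ≤ T := hφ0 y₀
    have key : ∀ x ∈ Icc c d, φ x ≤ T / 2 := by
      intro x hx
      have hx0 : (0:ℝ) ≤ x := le_trans hc0 hx.1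
      have hxb : x ≤ b := le_trans hx.2 hdb
      have h1 : φ x ≤ ∫ t in (0:ℝ)..x, K t * φ t := h x ⟨hx0, hxb⟩
      have hsplit : (∫ t in (0:ℝ)..x, K t * φ t) =
          (∫ t in (0:ℝ)..c, K t * φ t) + ∫ t in c..x, K t * φ t :=
        (integral_add_adjacent_intervals (hKφ 0 c) (hKφ c x)).symm
      have hzero : (∫ t in (0:ℝ)..c, K t * φ t) = 0 := by
        have he : (∫ t in (0:ℝ)..c, K t * φ t) = ∫ t in (0:ℝ)..c, (0:ℝ) :=
          integral_congr fun t ht => by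
            rw [uIcc_of_le hc0] at ht; rw [hcS.2 t ht, mul_zero]
        rw [he, intervalIntegral.integral_zero]
      have hmono : (∫ t in c..x, K t * φ t) ≤ ∫ t in c..x, K t * T := by
        refine integral_mono_on hx.1 ((hKφ c x)) ((hKi c x).mul_const T) fun t ht => ?_
        exact mul_le_mul_of_nonneg_left
          (hy₀max ⟨ht.1, le_trans ht.2 hx.2⟩) (hK0 t)
      have h2 : (∫ t in c..x, K t * T) ≤ T/2 := by
        rw [intervalIntegral.integral_mul_const]
        nlinarith [hPd x hx, hT0]
      calc φ x ≤ (∫ t in (0:ℝ)..c, K t * φ t) + ∫ t in c..x, K t * φ t := hsplit ▸ h1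
        _ ≤ 0 + T/2 := add_le_add (le_of_eq hzero) (hmono.trans h2)
        _ = T / 2 := by ring
    have hTle : T ≤ T / 2 := key y₀ hy₀mem
    have hTz : T = 0 := by linarith
    have hdS : d ∈ S := by
      refine ⟨⟨le_trans hc0 hcd.le, hdb⟩, fun y hy => ?_⟩
      rcases le_or_gt y c with hyc | hyc
      · exact hcS.2 y ⟨hy.1, hyc⟩
      · have := key y ⟨hyc.le, hy.2⟩
        have := hφ0 y
        linarith [hTz ▸ this]
    exact absurd (le_csSup hbdd hdS) (not_le.mpr hcd)

lemma pw1 {u₁ u₂ : ℝ → ℝ} (t : ℝ) :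
    |diracRHS1 m l q lam u₁ u₂ t|
      ≤ (|l t| + |lam - q t| + |m t|) * (|u₁ t| + |u₂ t|) := by
  have h1 : |diracRHS1 m l q lam u₁ u₂ t|
      ≤ |(-(l t)) * u₁ t| + |(lam - q t + m t) * u₂ t| := abs_add_le _ _
  rw [abs_mul, abs_mul, abs_neg] at h1
  have h2 : |lam - q t + m t| ≤ |lam - q t| + |m t| := abs_add_le _ _
  nlinarith [abs_nonneg (u₁ t), abs_nonneg (u₂ t), abs_nonneg (l t),
    abs_nonneg (lam - q t), abs_nonneg (m t), abs_nonneg (lam - q t + m t)]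

lemma pw2 {u₁ u₂ : ℝ → ℝ} (t : ℝ) :
    |diracRHS2 m l q lam u₁ u₂ t|
      ≤ (|l t| + |lam - q t| + |m t|) * (|u₁ t| + |u₂ t|) := by
  have h1 : |diracRHS2 m l q lam u₁ u₂ t|
      ≤ |(-(lam - q t - m t)) * u₁ t| + |(l t) * u₂ t| := abs_add_le _ _
  rw [abs_mul, abs_mul, abs_neg] at h1
  have h2 : |lam - q t - m t| ≤ |lam - q t| + |m t| := by
    calc |lam - q t - m t| = |(lam - q t) + (-(m t))| := by ring_nf
    _ ≤ |lam - q t| + |(-(m t))| := abs_add_le _ _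
    _ = |lam - q t| + |m t| := by rw [abs_neg]
  nlinarith [abs_nonneg (u₁ t), abs_nonneg (u₂ t), abs_nonneg (l t),
    abs_nonneg (lam - q t), abs_nonneg (m t), abs_nonneg (lam - q t - m t)]

lemma solZero (hm : LocallyIntegrable m volume) (hl : LocallyIntegrable l volume)
    (hq : LocallyIntegrable q volume) {u₁ u₂ : ℝ → ℝ}
    (hu : IsDiracSolution m l q lam u₁ u₂) (h01 : u₁ 0 = 0) (h02 : u₂ 0 = 0) :
    ∀ x : ℝ, u₁ x = 0 ∧ u₂ x = 0 := by
  obtain ⟨h₁, h₂, heq⟩ := hu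
  set K : ℝ → ℝ := fun t => 2 * (|l t| + |lam - q t| + |m t|) with hK
  set φ : ℝ → ℝ := fun x => |u₁ x| + |u₂ x| with hφdef
  have hφ : Continuous φ := h₁.abs.add h₂.abs
  have hφ0 : ∀ x, 0 ≤ φ x := fun x => add_nonneg (abs_nonneg _) (abs_nonneg _)
  have hK0 : ∀ x, 0 ≤ K x := fun x => by positivity
  have hK0i : ∀ x y : ℝ, IntervalIntegrable (fun t => |l t| + |lam - q t| + |m t|)
      volume x y := fun x y =>
    (((locII hl x y).abs.add (locII ((locallyIntegrable_const lam).sub hq) x y).abs)).add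
      (locII hm x y).abs
  have hKi : ∀ x y : ℝ, IntervalIntegrable K volume x y := fun x y =>
    (hK0i x y).const_mul 2
  have hKφ : ∀ x y : ℝ, IntervalIntegrable (fun t => K t * φ t) volume x y :=
    intMulCont hKi hφ
  have hK0φ : ∀ x y : ℝ, IntervalIntegrable
      (fun t => (|l t| + |lam - q t| + |m t|) * φ t) volume x y :=
    intMulCont hK0i hφ
  -- the Gronwall inequality on the right half line
  have hineq : ∀ x : ℝ, 0 ≤ x → φ x ≤ ∫ t in (0:ℝ)..x, K t * φ t := by
    intro x hx
    have e1 : u₁ x = ∫ t in (0:ℝ)..x, diracRHS1 m l q lam u₁ u₂ t := by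
      rw [(heq x).1, h01, zero_add]
    have e2 : u₂ x = ∫ t in (0:ℝ)..x, diracRHS2 m l q lam u₁ u₂ t := by
      rw [(heq x).2, h02, zero_add]
    have a1 : |u₁ x| ≤ ∫ t in (0:ℝ)..x, |diracRHS1 m l q lam u₁ u₂ t| := by
      rw [e1]; exact intervalIntegral.abs_integral_le_integral_abs hx
    have a2 : |u₂ x| ≤ ∫ t in (0:ℝ)..x, |diracRHS2 m l q lam u₁ u₂ t| := by
      rw [e2]; exact intervalIntegral.abs_integral_le_integral_abs hx
    have b1 : (∫ t in (0:ℝ)..x, |diracRHS1 m l q lam u₁ u₂ t|)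
        ≤ ∫ t in (0:ℝ)..x, (|l t| + |lam - q t| + |m t|) * φ t :=
      integral_mono_on hx (intInt1 hm hl hq h₁ h₂ 0 x).abs (hK0φ 0 x)
        (fun t _ => pw1 t)
    have b2 : (∫ t in (0:ℝ)..x, |diracRHS2 m l q lam u₁ u₂ t|)
        ≤ ∫ t in (0:ℝ)..x, (|l t| + |lam - q t| + |m t|) * φ t :=
      integral_mono_on hx (intInt2 hm hl hq h₁ h₂ 0 x).abs (hK0φ 0 x)
        (fun t _ => pw2 t)
    have c1 : (∫ t in (0:ℝ)..x, K t * φ t)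
        = 2 * ∫ t in (0:ℝ)..x, (|l t| + |lam - q t| + |m t|) * φ t := by
      rw [← intervalIntegral.integral_const_mul]
      exact integral_congr fun t _ => by simp only [hK]; ring
    calc φ x = |u₁ x| + |u₂ x| := rfl
      _ ≤ _ := add_le_add (a1.trans b1) (a2.trans b2)
      _ = ∫ t in (0:ℝ)..x, K t * φ t := by rw [c1]; ring
  -- reflected inequality for the left half line
  have hineq' : ∀ x : ℝ, 0 ≤ x → φ (-x) ≤ ∫ t in (0:ℝ)..x, K (-t) * φ (-t) := by
    intro x hx
    have e1 : u₁ (-x) = ∫ t in (0:ℝ)..(-x), diracRHS1 m l q lam u₁ u₂ t := by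
      rw [(heq (-x)).1, h01, zero_add]
    have e2 : u₂ (-x) = ∫ t in (0:ℝ)..(-x), diracRHS2 m l q lam u₁ u₂ t := by
      rw [(heq (-x)).2, h02, zero_add]
    have r1 : u₁ (-x) = -∫ t in (-x)..(0:ℝ), diracRHS1 m l q lam u₁ u₂ t := by
      rw [e1, intervalIntegral.integral_symm]
    have r2 : u₂ (-x) = -∫ t in (-x)..(0:ℝ), diracRHS2 m l q lam u₁ u₂ t := by
      rw [e2, intervalIntegral.integral_symm]
    have a1 : |u₁ (-x)| ≤ ∫ t in (-x)..(0:ℝ), |diracRHS1 m l q lam u₁ u₂ t| := by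
      rw [r1, abs_neg]
      exact intervalIntegral.abs_integral_le_integral_abs (by linarith)
    have a2 : |u₂ (-x)| ≤ ∫ t in (-x)..(0:ℝ), |diracRHS2 m l q lam u₁ u₂ t| := by
      rw [r2, abs_neg]
      exact intervalIntegral.abs_integral_le_integral_abs (by linarith)
    have flip : ∀ g : ℝ → ℝ, (∫ t in (0:ℝ)..x, g (-t)) = ∫ t in (-x)..(0:ℝ), g t := by
      intro g
      rw [intervalIntegral.integral_comp_neg]
      norm_num
    have b1 : (∫ t in (-x)..(0:ℝ), |diracRHS1 m l q lam u₁ u₂ t|)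
        ≤ ∫ t in (0:ℝ)..x, (|l (-t)| + |lam - q (-t)| + |m (-t)|) * φ (-t) := by
      rw [← flip]
      refine integral_mono_on hx ?_ ?_ (fun t _ => pw1 (-t))
      · have := (intInt1 (lam := lam) hm hl hq h₁ h₂ (-0) (-(x))).abs
        have h' := ((IntervalIntegrable.iff_comp_neg (by simp)).mp this)
        simpa using h'
      · have := hK0φ (-0) (-x)
        have h' := ((IntervalIntegrable.iff_comp_neg enorm_ne_top).mp this)
        simpa using h'
    have b2 : (∫ t in (-x)..(0:ℝ), |diracRHS2 m l q lam u₁ u₂ t|)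
        ≤ ∫ t in (0:ℝ)..x, (|l (-t)| + |lam - q (-t)| + |m (-t)|) * φ (-t) := by
      rw [← flip]
      refine integral_mono_on hx ?_ ?_ (fun t _ => pw2 (-t))
      · have := (intInt2 (lam := lam) hm hl hq h₁ h₂ (-0) (-(x))).abs
        have h' := ((IntervalIntegrable.iff_comp_neg (by simp)).mp this)
        simpa using h'
      · have := hK0φ (-0) (-x)
        have h' := ((IntervalIntegrable.iff_comp_neg enorm_ne_top).mp this)
        simpa using h'
    have c1 : (∫ t in (0:ℝ)..x, K (-t) * φ (-t))
        = 2 * ∫ t in (0:ℝ)..x, (|l (-t)| + |lam - q (-t)| + |m (-t)|) * φ (-t) := by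
      rw [← intervalIntegral.integral_const_mul]
      exact integral_congr fun t _ => by simp only [hK]; ring
    calc φ (-x) = |u₁ (-x)| + |u₂ (-x)| := rfl
      _ ≤ _ := add_le_add (a1.trans b1) (a2.trans b2)
      _ = ∫ t in (0:ℝ)..x, K (-t) * φ (-t) := by rw [c1]; ring
  have main : ∀ x : ℝ, φ x = 0 := by
    intro x
    rcases le_total 0 x with hx | hx
    · exact gronwall_zero hx hφ hφ0 hK0 hKi hKφ
        (fun y hy => hineq y hy.1) x ⟨hx, le_rfl⟩
    · have hx' : 0 ≤ -x := by linarith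
      have hKi' : ∀ a b : ℝ, IntervalIntegrable (fun t => K (-t)) volume a b := by
        intro a b
        have := (IntervalIntegrable.iff_comp_neg (by simp)).mp (hKi (-a) (-b))
        simpa using this
      have hKφ' : ∀ a b : ℝ, IntervalIntegrable (fun t => K (-t) * φ (-t)) volume a b := by
        intro a b
        have := (IntervalIntegrable.iff_comp_neg enorm_ne_top).mp (hKφ (-a) (-b))
        simpa using this
      have := gronwall_zero hx' (hφ.comp continuous_neg) (fun y => hφ0 (-y))
        (fun y => hK0 (-y)) hKi' hKφ' (fun y hy => hineq' y hy.1) (-x) ⟨hx', le_rfl⟩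
      simpa using this
  intro x
  have h : |u₁ x| + |u₂ x| = 0 := main x
  have hu1 : |u₁ x| = 0 := by linarith [abs_nonneg (u₁ x), abs_nonneg (u₂ x)]
  have hu2 : |u₂ x| = 0 := by linarith [abs_nonneg (u₁ x), abs_nonneg (u₂ x)]
  exact ⟨abs_eq_zero.mp hu1, abs_eq_zero.mp hu2⟩

lemma colSol {U : ℝ → Matrix (Fin 2) (Fin 2) ℝ}
    (hU : IsFundamentalMatrix m l q lam U) (j : Fin 2) :
    IsDiracSolution m l q lam (fun x => U x 0 j) (fun x => U x 1 j) := by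
  obtain ⟨hcont, hU0, heq⟩ := hU
  refine ⟨hcont 0 j, hcont 1 j, fun x => ⟨?_, ?_⟩⟩
  · have h := heq x 0 j
    have h0 : U 0 0 j = (1 : Matrix (Fin 2) (Fin 2) ℝ) 0 j := by rw [hU0]
    beta_reduce
    rw [h, h0]
    congr 1
    refine integral_congr fun t _ => ?_
    simp [Matrix.mul_apply, Fin.sum_univ_two, diracRHS1]
  · have h := heq x 1 j
    have h0 : U 0 1 j = (1 : Matrix (Fin 2) (Fin 2) ℝ) 1 j := by rw [hU0]
    beta_reduce
    rw [h, h0]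
    congr 1
    refine integral_congr fun t _ => ?_
    simp [Matrix.mul_apply, Fin.sum_univ_two, diracRHS2]

lemma rep (hm : LocallyIntegrable m volume) (hl : LocallyIntegrable l volume)
    (hq : LocallyIntegrable q volume) {U : ℝ → Matrix (Fin 2) (Fin 2) ℝ}
    (hU : IsFundamentalMatrix m l q lam U) {u₁ u₂ : ℝ → ℝ}
    (hu : IsDiracSolution m l q lam u₁ u₂) (x : ℝ) :
    u₁ x = U x 0 0 * u₁ 0 + U x 0 1 * u₂ 0 ∧
    u₂ x = U x 1 0 * u₁ 0 + U x 1 1 * u₂ 0 := by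
  have hs : IsDiracSolution m l q lam
      (fun x => u₁ 0 * U x 0 0 + u₂ 0 * U x 0 1)
      (fun x => u₁ 0 * U x 1 0 + u₂ 0 * U x 1 1) :=
    comb hm hl hq (u₁ 0) (u₂ 0) (colSol hU 0) (colSol hU 1)
  have hw : IsDiracSolution m l q lam
      (fun x => 1 * u₁ x + (-1) * (u₁ 0 * U x 0 0 + u₂ 0 * U x 0 1))
      (fun x => 1 * u₂ x + (-1) * (u₁ 0 * U x 1 0 + u₂ 0 * U x 1 1)) :=
    comb hm hl hq 1 (-1) hu hs
  have e00 : U 0 0 0 = 1 := by rw [hU.2.1]; exact Matrix.one_apply_eq 0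
  have e01 : U 0 0 1 = 0 := by rw [hU.2.1]; exact Matrix.one_apply_ne (by decide)
  have e10 : U 0 1 0 = 0 := by rw [hU.2.1]; exact Matrix.one_apply_ne (by decide)
  have e11 : U 0 1 1 = 1 := by rw [hU.2.1]; exact Matrix.one_apply_eq 1
  have hz := solZero hm hl hq hw (by simp [e00, e01]) (by simp [e10, e11])
  obtain ⟨hz1, hz2⟩ := hz x
  constructor <;> [linarith [hz1]; linarith [hz2]]

lemma shiftSol {α : ℝ} (hm : LocallyIntegrable m volume)
    (hl : LocallyIntegrable l volume) (hq : LocallyIntegrable q volume)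
    (hmp : Function.Periodic m α) (hlp : Function.Periodic l α)
    (hqp : Function.Periodic q α) {u₁ u₂ : ℝ → ℝ}
    (hu : IsDiracSolution m l q lam u₁ u₂) :
    IsDiracSolution m l q lam (fun x => u₁ (x + α)) (fun x => u₂ (x + α)) := by
  obtain ⟨h₁, h₂, heq⟩ := hu
  have key1 : ∀ t : ℝ, diracRHS1 m l q lam u₁ u₂ (t + α)
      = diracRHS1 m l q lam (fun x => u₁ (x + α)) (fun x => u₂ (x + α)) t := by
    intro t; simp only [diracRHS1, hmp t, hlp t, hqp t]
  have key2 : ∀ t : ℝ, diracRHS2 m l q lam u₁ u₂ (t + α)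
      = diracRHS2 m l q lam (fun x => u₁ (x + α)) (fun x => u₂ (x + α)) t := by
    intro t; simp only [diracRHS2, hmp t, hlp t, hqp t]
  refine ⟨h₁.comp (continuous_id.add continuous_const),
    h₂.comp (continuous_id.add continuous_const), fun x => ⟨?_, ?_⟩⟩
  · have e1 : u₁ (x + α) = u₁ 0 + ∫ t in (0:ℝ)..(x+α), diracRHS1 m l q lam u₁ u₂ t :=
      (heq (x + α)).1
    have e3 : (∫ t in (0:ℝ)..(x+α), diracRHS1 m l q lam u₁ u₂ t)
        = (∫ t in (0:ℝ)..α, diracRHS1 m l q lam u₁ u₂ t)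
          + ∫ t in α..(x+α), diracRHS1 m l q lam u₁ u₂ t :=
      (integral_add_adjacent_intervals (intInt1 hm hl hq h₁ h₂ 0 α)
        (intInt1 hm hl hq h₁ h₂ α (x+α))).symm
    have e4 : (∫ t in α..(x+α), diracRHS1 m l q lam u₁ u₂ t)
        = ∫ t in (0:ℝ)..x, diracRHS1 m l q lam u₁ u₂ (t + α) := by
      rw [integral_comp_add_right (fun t => diracRHS1 m l q lam u₁ u₂ t) α, zero_add]
    beta_reduce
    rw [e1, e3, e4, zero_add, (heq α).1]
    rw [integral_congr (g := diracRHS1 m l q lam (fun x => u₁ (x + α))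
      (fun x => u₂ (x + α))) (fun t _ => key1 t)]
    ring
  · have e1 : u₂ (x + α) = u₂ 0 + ∫ t in (0:ℝ)..(x+α), diracRHS2 m l q lam u₁ u₂ t :=
      (heq (x + α)).2
    have e3 : (∫ t in (0:ℝ)..(x+α), diracRHS2 m l q lam u₁ u₂ t)
        = (∫ t in (0:ℝ)..α, diracRHS2 m l q lam u₁ u₂ t)
          + ∫ t in α..(x+α), diracRHS2 m l q lam u₁ u₂ t :=
      (integral_add_adjacent_intervals (intInt2 hm hl hq h₁ h₂ 0 α)
        (intInt2 hm hl hq h₁ h₂ α (x+α))).symm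
    have e4 : (∫ t in α..(x+α), diracRHS2 m l q lam u₁ u₂ t)
        = ∫ t in (0:ℝ)..x, diracRHS2 m l q lam u₁ u₂ (t + α) := by
      rw [integral_comp_add_right (fun t => diracRHS2 m l q lam u₁ u₂ t) α, zero_add]
    beta_reduce
    rw [e1, e3, e4, zero_add, (heq α).2]
    rw [integral_congr (g := diracRHS2 m l q lam (fun x => u₁ (x + α))
      (fun x => u₂ (x + α))) (fun t _ => key2 t)]
    ring

lemma triangle {F G : ℝ → ℝ} {b : ℝ}
    (hF : IntegrableOn F (Ioc (0:ℝ) b) volume)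
    (hG : IntegrableOn G (Ioc (0:ℝ) b) volume) :
    (∫ t in Ioc (0:ℝ) b, F t * (∫ s in Ioc (0:ℝ) t, G s))
      + (∫ t in Ioc (0:ℝ) b, G t * (∫ s in Ioc (0:ℝ) t, F s))
      = (∫ t in Ioc (0:ℝ) b, F t) * (∫ t in Ioc (0:ℝ) b, G t) := by
  set μ := volume.restrict (Ioc (0:ℝ) b) with hμ
  have hprod : Integrable (fun p : ℝ × ℝ => F p.1 * G p.2) (μ.prod μ) :=
    Integrable.mul_prod hF hG
  set T₁ : Set (ℝ × ℝ) := {p | p.2 ≤ p.1} with hT₁def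
  have hT₁ : MeasurableSet T₁ := measurableSet_le measurable_snd measurable_fst
  set T₂ : Set (ℝ × ℝ) := {p | p.1 < p.2} with hT₂def
  have hT₂ : MeasurableSet T₂ := measurableSet_lt measurable_fst measurable_snd
  have hk₁ : Integrable (T₁.indicator fun p : ℝ × ℝ => F p.1 * G p.2) (μ.prod μ) :=
    hprod.indicator hT₁
  have hk₂ : Integrable (T₂.indicator fun p : ℝ × ℝ => F p.1 * G p.2) (μ.prod μ) :=
    hprod.indicator hT₂
  have hsum : ∀ p : ℝ × ℝ, T₁.indicator (fun p : ℝ × ℝ => F p.1 * G p.2) p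
      + T₂.indicator (fun p : ℝ × ℝ => F p.1 * G p.2) p = F p.1 * G p.2 := by
    intro p
    by_cases h : p.2 ≤ p.1
    · have h2 : ¬ p.1 < p.2 := not_lt.mpr h
      simp [T₁, T₂, indicator_apply, h, h2]
    · have h2 : p.1 < p.2 := not_le.mp h
      simp [T₁, T₂, indicator_apply, h, h2]
  have A : (∫ p, T₁.indicator (fun p : ℝ × ℝ => F p.1 * G p.2) p ∂(μ.prod μ))
      = ∫ t in Ioc (0:ℝ) b, F t * ∫ s in Ioc (0:ℝ) t, G s := by
    rw [integral_prod _ hk₁]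
    refine setIntegral_congr_fun measurableSet_Ioc (fun x hx => ?_)
    have hpt : ∀ y : ℝ, T₁.indicator (fun p : ℝ × ℝ => F p.1 * G p.2) (x, y)
        = (Iic x).indicator (fun s => F x * G s) y := by
      intro y
      by_cases h : y ≤ x <;> simp [T₁, indicator_apply, h]
    rw [integral_congr_ae (Filter.EventuallyEq.of_eq (funext hpt))]
    rw [MeasureTheory.integral_indicator measurableSet_Iic, hμ,
      Measure.restrict_restrict measurableSet_Iic]
    have hset : Iic x ∩ Ioc 0 b = Ioc (0:ℝ) x := by
      ext s
      simp only [mem_inter_iff, mem_Iic, mem_Ioc]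
      exact ⟨fun ⟨h1, h2, _⟩ => ⟨h2, h1⟩, fun ⟨h1, h2⟩ => ⟨h2, h1, h2.trans hx.2⟩⟩
    rw [hset, MeasureTheory.integral_const_mul]
  have B : (∫ p, T₂.indicator (fun p : ℝ × ℝ => F p.1 * G p.2) p ∂(μ.prod μ))
      = ∫ t in Ioc (0:ℝ) b, G t * ∫ s in Ioc (0:ℝ) t, F s := by
    rw [integral_prod_symm _ hk₂]
    refine setIntegral_congr_fun measurableSet_Ioc (fun y hy => ?_)
    have hpt : ∀ x : ℝ, T₂.indicator (fun p : ℝ × ℝ => F p.1 * G p.2) (x, y)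
        = (Iio y).indicator (fun s => F s * G y) x := by
      intro x
      by_cases h : x < y <;> simp [T₂, indicator_apply, h]
    rw [integral_congr_ae (Filter.EventuallyEq.of_eq (funext hpt))]
    rw [MeasureTheory.integral_indicator measurableSet_Iio, hμ,
      Measure.restrict_restrict measurableSet_Iio]
    have hset : Iio y ∩ Ioc 0 b = Ioo (0:ℝ) y := by
      ext s
      simp only [mem_inter_iff, mem_Iio, mem_Ioc, mem_Ioo]
      exact ⟨fun ⟨h1, h2, _⟩ => ⟨h2, h1⟩, fun ⟨h1, h2⟩ => ⟨h2, h1, h2.le.trans hy.2⟩⟩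
    rw [hset, ← integral_Ioc_eq_integral_Ioo, MeasureTheory.integral_mul_const, mul_comm]
  have C : (∫ p : ℝ × ℝ, F p.1 * G p.2 ∂(μ.prod μ))
      = (∫ t in Ioc (0:ℝ) b, F t) * ∫ t in Ioc (0:ℝ) b, G t := integral_prod_mul F G
  rw [← A, ← B, ← integral_add hk₁ hk₂, ← C]
  exact integral_congr_ae (Filter.EventuallyEq.of_eq (funext hsum))

lemma intMulCont' {F g : ℝ → ℝ} (hF : ∀ x y : ℝ, IntervalIntegrable F volume x y)
    (hg : Continuous g) (a b : ℝ) :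
    IntervalIntegrable (fun t => F t * g t) volume a b := by
  rw [intervalIntegrable_iff]
  have h1 : IntegrableOn F (Icc (a ⊓ b) (a ⊔ b)) volume :=
    (integrableOn_Icc_iff_integrableOn_Ioc (by simp)).mpr (intervalIntegrable_iff.mp (hF a b))
  exact (h1.mul_continuousOn hg.continuousOn isCompact_Icc).mono_set Ioc_subset_Icc_self

lemma ftc_mul {f g F G : ℝ → ℝ} {b : ℝ} (hb : 0 ≤ b)
    (hf : Continuous f) (hg : Continuous g)
    (hF : ∀ x y : ℝ, IntervalIntegrable F volume x y)
    (hG : ∀ x y : ℝ, IntervalIntegrable G volume x y)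
    (hfF : ∀ x : ℝ, f x = f 0 + ∫ t in (0:ℝ)..x, F t)
    (hgG : ∀ x : ℝ, g x = g 0 + ∫ t in (0:ℝ)..x, G t) :
    f b * g b = f 0 * g 0 + ∫ t in (0:ℝ)..b, (F t * g t + f t * G t) := by
  have hPF : Continuous fun t => ∫ s in (0:ℝ)..t, F s :=
    intervalIntegral.continuous_primitive hF 0
  have hPG : Continuous fun t => ∫ s in (0:ℝ)..t, G s :=
    intervalIntegral.continuous_primitive hG 0
  have hFg : IntervalIntegrable (fun t => F t * g t) volume 0 b := intMulCont' hF hg 0 b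
  have hfG : IntervalIntegrable (fun t => f t * G t) volume 0 b := by
    have h := intMulCont' hG hf 0 b
    have : (fun t => f t * G t) = fun t => G t * f t := funext fun t => mul_comm _ _
    rw [this]; exact h
  -- expand the two pieces
  have e1 : (∫ t in (0:ℝ)..b, F t * g t)
      = (∫ t in (0:ℝ)..b, F t) * g 0 + ∫ t in (0:ℝ)..b, F t * ∫ s in (0:ℝ)..t, G s := by
    have hcg : ∀ t : ℝ, F t * g t = F t * g 0 + F t * ∫ s in (0:ℝ)..t, G s := by
      intro t; rw [hgG t]; ring
    rw [integral_congr (g := fun t => F t * g 0 + F t * ∫ s in (0:ℝ)..t, G s)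
      (fun t _ => hcg t)]
    rw [integral_add ((hF 0 b).mul_const _) (intMulCont' hF hPG 0 b),
      intervalIntegral.integral_mul_const]
  have e2 : (∫ t in (0:ℝ)..b, f t * G t)
      = f 0 * (∫ t in (0:ℝ)..b, G t) + ∫ t in (0:ℝ)..b, G t * ∫ s in (0:ℝ)..t, F s := by
    have hcg : ∀ t : ℝ, f t * G t = G t * f 0 + G t * ∫ s in (0:ℝ)..t, F s := by
      intro t; rw [hfF t]; ring
    rw [integral_congr (g := fun t => G t * f 0 + G t * ∫ s in (0:ℝ)..t, F s)
      (fun t _ => hcg t)]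
    rw [integral_add ((hG 0 b).mul_const _) (intMulCont' hG hPF 0 b),
      intervalIntegral.integral_mul_const]
    ring
  -- triangle identity, transported to interval integrals
  have hFIoc : IntegrableOn F (Ioc (0:ℝ) b) volume := intervalIntegrable_iff_integrableOn_Ioc_of_le hb |>.mp (hF 0 b)
  have hGIoc : IntegrableOn G (Ioc (0:ℝ) b) volume := intervalIntegrable_iff_integrableOn_Ioc_of_le hb |>.mp (hG 0 b)
  have htri := triangle hFIoc hGIoc
  have conv1 : (∫ t in (0:ℝ)..b, F t * ∫ s in (0:ℝ)..t, G s)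
      = ∫ t in Ioc (0:ℝ) b, F t * ∫ s in Ioc (0:ℝ) t, G s := by
    rw [integral_of_le hb]
    refine setIntegral_congr_fun measurableSet_Ioc (fun t ht => ?_)
    rw [integral_of_le ht.1.le]
  have conv2 : (∫ t in (0:ℝ)..b, G t * ∫ s in (0:ℝ)..t, F s)
      = ∫ t in Ioc (0:ℝ) b, G t * ∫ s in Ioc (0:ℝ) t, F s := by
    rw [integral_of_le hb]
    refine setIntegral_congr_fun measurableSet_Ioc (fun t ht => ?_)
    rw [integral_of_le ht.1.le]
  have convF : (∫ t in (0:ℝ)..b, F t) = ∫ t in Ioc (0:ℝ) b, F t := integral_of_le hb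
  have convG : (∫ t in (0:ℝ)..b, G t) = ∫ t in Ioc (0:ℝ) b, G t := integral_of_le hb
  have htri' : (∫ t in (0:ℝ)..b, F t * ∫ s in (0:ℝ)..t, G s)
      + (∫ t in (0:ℝ)..b, G t * ∫ s in (0:ℝ)..t, F s)
      = (∫ t in (0:ℝ)..b, F t) * (∫ t in (0:ℝ)..b, G t) := by
    rw [conv1, conv2, convF, convG]; exact htri
  rw [intervalIntegral.integral_add hFg hfG, e1, e2, hfF b, hgG b]
  linear_combination -htri'


lemma contMulInt {F g : ℝ → ℝ} (hF : ∀ x y : ℝ, IntervalIntegrable F volume x y)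
    (hg : Continuous g) (a b : ℝ) :
    IntervalIntegrable (fun t => g t * F t) volume a b := by
  have h := intMulCont' hF hg a b
  have e : (fun t => g t * F t) = fun t => F t * g t := funext fun t => mul_comm _ _
  rw [e]; exact h

variable {U : ℝ → Matrix (Fin 2) (Fin 2) ℝ}

lemma detU {α : ℝ} (hα : 0 ≤ α) (hm : LocallyIntegrable m volume)
    (hl : LocallyIntegrable l volume) (hq : LocallyIntegrable q volume)
    (hU : IsFundamentalMatrix m l q lam U) :
    U α 0 0 * U α 1 1 - U α 0 1 * U α 1 0 = 1 := by
  have hc0 := colSol hU 0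
  have hc1 := colSol hU 1
  have e00 : U 0 0 0 = 1 := by rw [hU.2.1]; exact Matrix.one_apply_eq 0
  have e01 : U 0 0 1 = 0 := by rw [hU.2.1]; exact Matrix.one_apply_ne (by decide)
  have e10 : U 0 1 0 = 0 := by rw [hU.2.1]; exact Matrix.one_apply_ne (by decide)
  have e11 : U 0 1 1 = 1 := by rw [hU.2.1]; exact Matrix.one_apply_eq 1
  have hR10 := intInt1 (lam := lam) hm hl hq (hU.1 0 0) (hU.1 1 0)
  have hR20 := intInt2 (lam := lam) hm hl hq (hU.1 0 0) (hU.1 1 0)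
  have hR11 := intInt1 (lam := lam) hm hl hq (hU.1 0 1) (hU.1 1 1)
  have hR21 := intInt2 (lam := lam) hm hl hq (hU.1 0 1) (hU.1 1 1)
  have h1 := ftc_mul (f := fun x => U x 0 0) (g := fun x => U x 1 1)
    (F := diracRHS1 m l q lam (fun x => U x 0 0) (fun x => U x 1 0))
    (G := diracRHS2 m l q lam (fun x => U x 0 1) (fun x => U x 1 1))
    hα (hU.1 0 0) (hU.1 1 1) hR10 hR21
    (fun x => (hc0.2.2 x).1) (fun x => (hc1.2.2 x).2)
  have h2 := ftc_mul (f := fun x => U x 0 1) (g := fun x => U x 1 0)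
    (F := diracRHS1 m l q lam (fun x => U x 0 1) (fun x => U x 1 1))
    (G := diracRHS2 m l q lam (fun x => U x 0 0) (fun x => U x 1 0))
    hα (hU.1 0 1) (hU.1 1 0) hR11 hR20
    (fun x => (hc1.2.2 x).1) (fun x => (hc0.2.2 x).2)
  rw [e00, e11] at h1
  rw [e01, e10] at h2
  have hintA : IntervalIntegrable (fun t =>
      diracRHS1 m l q lam (fun x => U x 0 0) (fun x => U x 1 0) t * U t 1 1
        + U t 0 0 * diracRHS2 m l q lam (fun x => U x 0 1) (fun x => U x 1 1) t)
      volume 0 α :=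
    (intMulCont' hR10 (hU.1 1 1) 0 α).add (contMulInt hR21 (hU.1 0 0) 0 α)
  have hintB : IntervalIntegrable (fun t =>
      diracRHS1 m l q lam (fun x => U x 0 1) (fun x => U x 1 1) t * U t 1 0
        + U t 0 1 * diracRHS2 m l q lam (fun x => U x 0 0) (fun x => U x 1 0) t)
      volume 0 α :=
    (intMulCont' hR11 (hU.1 1 0) 0 α).add (contMulInt hR20 (hU.1 0 1) 0 α)
  have hzero : (∫ t in (0:ℝ)..α,
      (diracRHS1 m l q lam (fun x => U x 0 0) (fun x => U x 1 0) t * U t 1 1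
        + U t 0 0 * diracRHS2 m l q lam (fun x => U x 0 1) (fun x => U x 1 1) t))
      - (∫ t in (0:ℝ)..α,
      (diracRHS1 m l q lam (fun x => U x 0 1) (fun x => U x 1 1) t * U t 1 0
        + U t 0 1 * diracRHS2 m l q lam (fun x => U x 0 0) (fun x => U x 1 0) t)) = 0 := by
    rw [← intervalIntegral.integral_sub hintA hintB]
    rw [integral_congr (g := fun _ => (0:ℝ)) (fun t _ => by
      simp only [diracRHS1, diracRHS2]; ring)]
    simp
  rw [h1, h2]
  linarith [hzero]

lemma recurrence {α : ℝ} (hα : 0 < α) (hm : LocallyIntegrable m volume)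
    (hl : LocallyIntegrable l volume) (hq : LocallyIntegrable q volume)
    (hmp : Function.Periodic m α) (hlp : Function.Periodic l α)
    (hqp : Function.Periodic q α)
    (hU : IsFundamentalMatrix m l q lam U) {u₁ u₂ : ℝ → ℝ}
    (hu : IsDiracSolution m l q lam u₁ u₂) :
    ∀ y : ℝ, u₁ (y + α + α) = (U α 0 0 + U α 1 1) * u₁ (y + α) - u₁ y ∧
      u₂ (y + α + α) = (U α 0 0 + U α 1 1) * u₂ (y + α) - u₂ y := by
  set D := U α 0 0 + U α 1 1 with hD
  have hdet := detU hα.le hm hl hq hU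
  have hv := shiftSol hm hl hq hmp hlp hqp hu
  have hz := shiftSol hm hl hq hmp hlp hqp hv
  have hcomb1 := comb hm hl hq 1 1 hz hu
  have hP := comb hm hl hq 1 (-D) hcomb1 hv
  have ha := rep hm hl hq hU hu α
  have hb := rep hm hl hq hU hv α
  simp only [zero_add] at hb
  -- value of the combination at 0
  have h01 : (1:ℝ) * (1 * u₁ (0 + α + α) + 1 * u₁ 0) + (-D) * u₁ (0 + α) = 0 := by
    simp only [zero_add, one_mul]
    have hb1 : u₁ (α + α) = U α 0 0 * u₁ α + U α 0 1 * u₂ α := hb.1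
    rw [hb1, ha.1, ha.2]
    linear_combination (-(u₁ 0)) * hdet
  have h02 : (1:ℝ) * (1 * u₂ (0 + α + α) + 1 * u₂ 0) + (-D) * u₂ (0 + α) = 0 := by
    simp only [zero_add, one_mul]
    have hb2 : u₂ (α + α) = U α 1 0 * u₁ α + U α 1 1 * u₂ α := hb.2
    rw [hb2, ha.1, ha.2]
    linear_combination (-(u₂ 0)) * hdet
  have hzz := solZero hm hl hq hP h01 h02
  intro y
  obtain ⟨k1, k2⟩ := hzz y
  constructor <;> [linarith [k1]; linarith [k2]]

end DiracAux

set_option maxHeartbeats 2000000 in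
/-- **Stability/instability of periodic Dirac systems.**  If the discriminant
`D = tr U(α)` satisfies `|D| < 2`, every solution is globally bounded; if
`|D| > 2`, every nontrivial solution is unbounded. -/
theorem stability_instability_of_discriminant
    (α : ℝ) (hα : 0 < α) (m l q : ℝ → ℝ)
    (hm : LocallyIntegrable m volume) (hl : LocallyIntegrable l volume)
    (hq : LocallyIntegrable q volume)
    (hmp : Function.Periodic m α) (hlp : Function.Periodic l α)
    (hqp : Function.Periodic q α)
    (lam : ℝ) (U : ℝ → Matrix (Fin 2) (Fin 2) ℝ)
    (hU : IsFundamentalMatrix m l q lam U) :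
    (|Matrix.trace (U α)| < 2 →
      ∀ u₁ u₂ : ℝ → ℝ, IsDiracSolution m l q lam u₁ u₂ →
        ∃ M : ℝ, ∀ x : ℝ, Real.sqrt (u₁ x ^ 2 + u₂ x ^ 2) ≤ M) ∧
    (|Matrix.trace (U α)| > 2 →
      ∀ u₁ u₂ : ℝ → ℝ, IsDiracSolution m l q lam u₁ u₂ →
        (∃ x : ℝ, ¬(u₁ x = 0 ∧ u₂ x = 0)) →
        ∀ M : ℝ, 0 < M → ∃ x : ℝ, M < Real.sqrt (u₁ x ^ 2 + u₂ x ^ 2)) := by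
  have hDtr : Matrix.trace (U α) = U α 0 0 + U α 1 1 := Matrix.trace_fin_two (U α)
  constructor
  · -- |D| < 2 : every solution is bounded
    intro hDlt u₁ u₂ hu
    obtain ⟨D, hDdef⟩ : ∃ D : ℝ, D = U α 0 0 + U α 1 1 := ⟨_, rfl⟩
    rw [hDtr, ← hDdef] at hDlt
    have hrec := DiracAux.recurrence hα hm hl hq hmp hlp hqp hU hu
    rw [← hDdef] at hrec
    obtain ⟨x₀, hx₀mem, hx₀max⟩ := isCompact_Icc.exists_isMaxOn
      (nonempty_Icc.mpr (by linarith : (0:ℝ) ≤ 2*α))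
      ((hu.1.abs.add hu.2.1.abs).continuousOn)
    obtain ⟨C, hCdef⟩ : ∃ C : ℝ, C = |u₁ x₀| + |u₂ x₀| := ⟨_, rfl⟩
    have hC0 : 0 ≤ C := by
      rw [hCdef]; exact add_nonneg (abs_nonneg _) (abs_nonneg _)
    have hCb : ∀ x ∈ Icc (0:ℝ) (2*α), |u₁ x| ≤ C ∧ |u₂ x| ≤ C := by
      intro x hx
      have h1 : |u₁ x| + |u₂ x| ≤ C := by rw [hCdef]; exact hx₀max hx
      constructor
      · linarith [abs_nonneg (u₂ x)]
      · linarith [abs_nonneg (u₁ x)]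
    obtain ⟨ρ, hρdef⟩ : ∃ ρ : ℝ, ρ = 1 - |D| / 2 := ⟨_, rfl⟩
    have hρ0 : 0 < ρ := by rw [hρdef]; linarith
    obtain ⟨B, hBdef⟩ : ∃ B : ℝ, B = 4 * C ^ 2 / ρ := ⟨_, rfl⟩
    have main : ∀ f : ℝ → ℝ, (∀ y : ℝ, f (y + α + α) = D * f (y + α) - f y) →
        (∀ x ∈ Icc (0:ℝ) (2*α), |f x| ≤ C) → ∀ X : ℝ, f X ^ 2 ≤ B := by
      intro f hf hfb X
      obtain ⟨n, hn⟩ : ∃ n : ℤ, n = ⌊X / α⌋ := ⟨_, rfl⟩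
      obtain ⟨x', hx'⟩ : ∃ x' : ℝ, x' = X - n * α := ⟨_, rfl⟩
      have hx'0 : 0 ≤ x' := by
        rw [hx', hn]; exact Int.sub_floor_div_mul_nonneg X hα
      have hx'α : x' < α := by
        rw [hx', hn]; exact Int.sub_floor_div_mul_lt X hα
      obtain ⟨a, ha⟩ : ∃ a : ℤ → ℝ, a = fun k : ℤ => f (x' + (k : ℝ) * α) := ⟨_, rfl⟩
      have hrecA : ∀ k : ℤ, a (k + 2) = D * a (k + 1) - a k := by
        intro k
        simp only [ha]
        rw [show x' + ((k + 2 : ℤ) : ℝ) * α = (x' + (k : ℝ) * α) + α + α by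
            push_cast; ring,
          show x' + ((k + 1 : ℤ) : ℝ) * α = (x' + (k : ℝ) * α) + α by push_cast; ring]
        exact hf (x' + (k : ℝ) * α)
      obtain ⟨Q, hQ⟩ : ∃ Q : ℤ → ℝ,
        Q = fun k => a k ^ 2 + a (k + 1) ^ 2 - D * a k * a (k + 1) := ⟨_, rfl⟩
      have hQstep : ∀ k : ℤ, Q (k + 1) = Q k := by
        intro k
        have h := hrecA k
        simp only [hQ]
        rw [show k + 1 + 1 = k + 2 by ring, h]
        ring
      have hQconst : ∀ k : ℤ, Q k = Q 0 := by
        intro k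
        induction k using Int.induction_on with
        | zero => rfl
        | succ n ih => rw [hQstep n, ih]
        | pred n ih =>
          have h := hQstep (-(n : ℤ) - 1)
          rw [show (-(n : ℤ) - 1) + 1 = -(n : ℤ) by ring] at h
          have h2 : Q (-(n : ℤ) - 1) = Q 0 := h.symm.trans ih
          convert h2 using 2
      have ha0 : |a 0| ≤ C := by
        have e : x' + ((0 : ℤ) : ℝ) * α = x' := by push_cast; ring
        simp only [ha, e]
        exact hfb x' ⟨hx'0, by linarith⟩
      have ha1 : |a 1| ≤ C := by
        have e : x' + ((1 : ℤ) : ℝ) * α = x' + α := by push_cast; ring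
        simp only [ha, e]
        exact hfb (x' + α) ⟨by linarith, by linarith⟩
      have hQ0 : Q 0 ≤ 4 * C ^ 2 := by
        simp only [hQ]
        norm_num
        have h1 : -(D * a 0 * a 1) ≤ |D| * |a 0| * |a 1| := by
          calc -(D * a 0 * a 1) ≤ |D * a 0 * a 1| := neg_le_abs _
            _ = |D| * |a 0| * |a 1| := by rw [abs_mul, abs_mul]
        have h2 : |a 0| * |a 1| ≤ C * C :=
          mul_le_mul ha0 ha1 (abs_nonneg _) hC0
        have h3 : |D| * (|a 0| * |a 1|) ≤ 2 * (C * C) :=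
          mul_le_mul hDlt.le h2 (by positivity) (by norm_num)
        have s0 : a 0 ^ 2 ≤ C ^ 2 := by
          rw [← sq_abs]; exact pow_le_pow_left₀ (abs_nonneg _) ha0 2
        have s1 : a 1 ^ 2 ≤ C ^ 2 := by
          rw [← sq_abs]; exact pow_le_pow_left₀ (abs_nonneg _) ha1 2
        nlinarith [h1, h3, s0, s1]
      have hlow : ρ * (a n ^ 2 + a (n + 1) ^ 2) ≤ Q n := by
        simp only [hQ]
        rw [hρdef]
        have h1 : D * a n * a (n + 1) ≤ |D| * |a n| * |a (n + 1)| := by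
          calc D * a n * a (n + 1) ≤ |D * a n * a (n + 1)| := le_abs_self _
            _ = |D| * |a n| * |a (n + 1)| := by rw [abs_mul, abs_mul]
        have h2 : 2 * (|D| * (|a n| * |a (n + 1)|)) ≤ |D| * (a n ^ 2 + a (n + 1) ^ 2) := by
          nlinarith [mul_nonneg (abs_nonneg D) (sq_nonneg (|a n| - |a (n + 1)|)),
            sq_abs (a n), sq_abs (a (n + 1))]
        have h3 : D * a n * a (n + 1) ≤ |D| * (a n ^ 2 + a (n + 1) ^ 2) / 2 := by
          linarith [h1, h2]
        nlinarith [h3]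
      have hXa : f X = a n := by
        simp only [ha]; congr 1; rw [hx']; ring
      have h4 : Q n = Q 0 := hQconst n
      have h5 : ρ * a n ^ 2 ≤ ρ * (a n ^ 2 + a (n + 1) ^ 2) :=
        mul_le_mul_of_nonneg_left (by nlinarith [sq_nonneg (a (n + 1))]) hρ0.le
      have hfin : ρ * f X ^ 2 ≤ 4 * C ^ 2 := by
        rw [hXa]
        linarith [h5, hlow, h4, hQ0]
      rw [hBdef, le_div_iff₀ hρ0]
      nlinarith [hfin]
    have hm1 := main u₁ (fun y => (hrec y).1) (fun x hx => (hCb x hx).1)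
    have hm2 := main u₂ (fun y => (hrec y).2) (fun x hx => (hCb x hx).2)
    refine ⟨Real.sqrt (B + B), fun x => ?_⟩
    exact Real.sqrt_le_sqrt (by linarith [hm1 x, hm2 x])
  · -- |D| > 2 : every nontrivial solution is unbounded
    intro hDgt u₁ u₂ hu hnt M hM
    by_contra hcon
    push_neg at hcon
    obtain ⟨D, hDdef⟩ : ∃ D : ℝ, D = U α 0 0 + U α 1 1 := ⟨_, rfl⟩
    rw [hDtr, ← hDdef] at hDgt
    have hrec := DiracAux.recurrence hα hm hl hq hmp hlp hqp hU hu
    rw [← hDdef] at hrec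
    have habs : ∀ x : ℝ, |u₁ x| ≤ M ∧ |u₂ x| ≤ M := by
      intro x
      have h := hcon x
      constructor
      · rw [← Real.sqrt_sq_eq_abs]
        exact le_trans (Real.sqrt_le_sqrt (by nlinarith [sq_nonneg (u₂ x)])) h
      · rw [← Real.sqrt_sq_eq_abs]
        exact le_trans (Real.sqrt_le_sqrt (by nlinarith [sq_nonneg (u₁ x)])) h
    have hD0 : 0 < |D| := by linarith
    obtain ⟨r, hrdef⟩ : ∃ r : ℝ, r = 2 / |D| := ⟨_, rfl⟩
    have hr0 : 0 ≤ r := by rw [hrdef]; exact div_nonneg (by norm_num) (abs_nonneg D)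
    have hr1 : r < 1 := by rw [hrdef, div_lt_one hD0]; linarith
    have step : ∀ C : ℝ, (∀ x : ℝ, |u₁ x| ≤ C ∧ |u₂ x| ≤ C) →
        ∀ x : ℝ, |u₁ x| ≤ r * C ∧ |u₂ x| ≤ r * C := by
      intro C hCb x
      have hy : (x - α) + α = x := by ring
      have h1 := (hrec (x - α)).1
      have h2 := (hrec (x - α)).2
      rw [hy] at h1 h2
      have key1 : |D| * |u₁ x| ≤ 2 * C := by
        rw [← abs_mul]
        have e : D * u₁ x = u₁ (x + α) + u₁ (x - α) := by linarith [h1]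
        rw [e]
        calc |u₁ (x + α) + u₁ (x - α)| ≤ |u₁ (x + α)| + |u₁ (x - α)| := abs_add_le _ _
          _ ≤ 2 * C := by linarith [(hCb (x + α)).1, (hCb (x - α)).1]
      have key2 : |D| * |u₂ x| ≤ 2 * C := by
        rw [← abs_mul]
        have e : D * u₂ x = u₂ (x + α) + u₂ (x - α) := by linarith [h2]
        rw [e]
        calc |u₂ (x + α) + u₂ (x - α)| ≤ |u₂ (x + α)| + |u₂ (x - α)| := abs_add_le _ _
          _ ≤ 2 * C := by linarith [(hCb (x + α)).2, (hCb (x - α)).2]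
      constructor
      · rw [hrdef, div_mul_eq_mul_div, le_div_iff₀ hD0]
        nlinarith [key1]
      · rw [hrdef, div_mul_eq_mul_div, le_div_iff₀ hD0]
        nlinarith [key2]
    have iter : ∀ k : ℕ, ∀ x : ℝ, |u₁ x| ≤ r ^ k * M ∧ |u₂ x| ≤ r ^ k * M := by
      intro k
      induction k with
      | zero => simpa using habs
      | succ n ih =>
        intro x
        have h := step (r ^ n * M) ih x
        constructor
        · calc |u₁ x| ≤ r * (r ^ n * M) := h.1
            _ = r ^ (n + 1) * M := by rw [pow_succ]; ring
        · calc |u₂ x| ≤ r * (r ^ n * M) := h.2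
            _ = r ^ (n + 1) * M := by rw [pow_succ]; ring
    have hzero : ∀ x : ℝ, u₁ x = 0 ∧ u₂ x = 0 := by
      intro x
      have htend : Filter.Tendsto (fun k : ℕ => r ^ k * M) Filter.atTop (nhds 0) := by
        have h := (tendsto_pow_atTop_nhds_zero_of_lt_one hr0 hr1).mul_const M
        simpa using h
      have h1 : |u₁ x| ≤ 0 := ge_of_tendsto' htend (fun k => (iter k x).1)
      have h2 : |u₂ x| ≤ 0 := ge_of_tendsto' htend (fun k => (iter k x).2)
      exact ⟨abs_eq_zero.mp (le_antisymm h1 (abs_nonneg _)),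
        abs_eq_zero.mp (le_antisymm h2 (abs_nonneg _))⟩
    obtain ⟨x₀, hx₀⟩ := hnt
    exact hx₀ (hzero x₀)
end
end

section
/- Let m, l, q : ℝ → ℝ be locally integrable and α-periodic (α > 0), λ ∈ ℝ, and let D = tr U(α) be the discriminant of the Dirac system (−iσ₂ d/dx + mσ₃ + lσ₁ + q)u = λu. Assume |D| ≥ 2. Then for every nontrivial solution u : ℝ → ℝ² of the system and every Prüfer angle θ of u, there exist n ∈ ℤ and M > 0 such that |θ(x) − nπx/α| ≤ M for all x ≥ 0. -/
noncomputable section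
open MeasureTheory Set

/-- `θ` is a Prüfer angle of the nowhere-vanishing continuous `u = (u₁, u₂)`:
`u₁ = R·cos θ`, `u₂ = −R·sin θ` with `R = ‖u‖`. -/
def IsPruferAngle (u₁ u₂ θ : ℝ → ℝ) : Prop :=
  Continuous θ ∧
    ∀ x : ℝ,
      u₁ x = Real.sqrt (u₁ x ^ 2 + u₂ x ^ 2) * Real.cos (θ x) ∧
      u₂ x = -(Real.sqrt (u₁ x ^ 2 + u₂ x ^ 2) * Real.sin (θ x))

/-! ### Auxiliary integrability lemmas -/

lemma locInt_II {f : ℝ → ℝ} (hf : LocallyIntegrable f volume) (a b : ℝ) :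
    IntervalIntegrable f volume a b :=
  (hf.integrableOn_isCompact isCompact_uIcc).intervalIntegrable

lemma locInt_of_II {f : ℝ → ℝ} (h : ∀ a b : ℝ, IntervalIntegrable f volume a b) :
    LocallyIntegrable f volume := by
  rw [MeasureTheory.locallyIntegrable_iff]
  intro K hK
  obtain ⟨r, hr⟩ := hK.isBounded.subset_closedBall 0
  refine ((intervalIntegrable_iff' (f := f) (a := -|r|) (b := |r|) (μ := volume)).mp (h (-|r|) |r|)).mono_set ?_
  refine hr.trans ?_
  rw [Real.closedBall_eq_Icc, uIcc_of_le (by linarith [abs_nonneg r] : -|r| ≤ |r|)]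
  exact Icc_subset_Icc (by linarith [le_abs_self r]) (by linarith [le_abs_self r])

lemma locInt_mul_cont {f g : ℝ → ℝ} (hf : LocallyIntegrable f volume) (hg : Continuous g) :
    LocallyIntegrable (fun t => f t * g t) volume := by
  rw [MeasureTheory.locallyIntegrable_iff]
  exact fun K hK => (hf.integrableOn_isCompact hK).mul_continuousOn hg.continuousOn hK

lemma cont_mul_locInt {f g : ℝ → ℝ} (hg : Continuous g) (hf : LocallyIntegrable f volume) :
    LocallyIntegrable (fun t => g t * f t) volume := by
  have h : (fun t => g t * f t) = fun t => f t * g t := by ext t; ring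
  rw [h]; exact locInt_mul_cont hf hg

/-! ### Product rule for functions in integral form -/

lemma triangle_core {F G : ℝ → ℝ} (hF : LocallyIntegrable F volume)
    (hG : LocallyIntegrable G volume) {x : ℝ} (hx : 0 ≤ x) :
    (∫ t in (0:ℝ)..x, F t) * ∫ t in (0:ℝ)..x, G t =
      (∫ t in (0:ℝ)..x, F t * ∫ s in (0:ℝ)..t, G s) +
        ∫ t in (0:ℝ)..x, G t * ∫ s in (0:ℝ)..t, F s := by
  have hFI : IntegrableOn F (Ioc 0 x) volume := by
    simpa [uIoc_of_le hx] using (locInt_II hF 0 x).def'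
  have hGI : IntegrableOn G (Ioc 0 x) volume := by
    simpa [uIoc_of_le hx] using (locInt_II hG 0 x).def'
  set Hg : ℝ → ℝ := fun t => ∫ s in (0:ℝ)..t, G s with hHg
  have hHgc : Continuous Hg := intervalIntegral.continuous_primitive (locInt_II hG) 0
  have key : ∫ t in (0:ℝ)..x, G t * ∫ s in (0:ℝ)..t, F s
      = (∫ t in (0:ℝ)..x, G t) * (∫ t in (0:ℝ)..x, F t) - ∫ t in (0:ℝ)..x, F t * Hg t := by
    rw [intervalIntegral.integral_of_le hx]
    have stepB : ∫ t in Ioc 0 x, G t * ∫ s in (0:ℝ)..t, F s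
        = ∫ t in Ioc 0 x, ∫ s in Ioc 0 x, G t * (Ioc 0 t).indicator F s := by
      refine setIntegral_congr_fun measurableSet_Ioc (fun t ht => ?_)
      rw [integral_const_mul, setIntegral_indicator measurableSet_Ioc,
        inter_eq_self_of_subset_right (Ioc_subset_Ioc_right ht.2),
        intervalIntegral.integral_of_le (le_of_lt ht.1)]
    have hint : Integrable (fun z : ℝ × ℝ => G z.1 * (Ioc 0 z.1).indicator F z.2)
        (((volume : Measure ℝ).restrict (Ioc 0 x)).prod
          ((volume : Measure ℝ).restrict (Ioc 0 x))) := by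
      have heq : (fun z : ℝ × ℝ => G z.1 * (Ioc 0 z.1).indicator F z.2)
          = ({z : ℝ × ℝ | z.2 ∈ Ioc 0 z.1}).indicator (fun z => G z.1 * F z.2) := by
        ext z
        simp only [Set.indicator, mem_setOf_eq, mem_Ioc]
        by_cases h : 0 < z.2 ∧ z.2 ≤ z.1 <;> simp [h]
      rw [heq]
      refine (Integrable.mul_prod hGI hFI).indicator ?_
      exact (measurableSet_lt measurable_const measurable_snd).inter
        (measurableSet_le measurable_snd measurable_fst)
    have stepC : ∫ t in Ioc 0 x, ∫ s in Ioc 0 x, G t * (Ioc 0 t).indicator F s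
        = ∫ s in Ioc 0 x, ∫ t in Ioc 0 x, G t * (Ioc 0 t).indicator F s :=
      integral_integral_swap hint
    have stepD : ∫ s in Ioc 0 x, ∫ t in Ioc 0 x, G t * (Ioc 0 t).indicator F s
        = ∫ s in Ioc 0 x, (F s * (∫ t in (0:ℝ)..x, G t) - F s * Hg s) := by
      refine setIntegral_congr_fun measurableSet_Ioc (fun s hs => ?_)
      have h1 : ∀ t : ℝ, G t * (Ioc 0 t).indicator F s
          = (Ici s).indicator (fun t => F s * G t) t := by
        intro t
        by_cases h : s ≤ t
        · have hm : s ∈ Ioc 0 t := ⟨hs.1, h⟩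
          simp [Set.indicator, hm, h, mul_comm]
        · have hm : s ∉ Ioc 0 t := fun hc => h hc.2
          simp [Set.indicator, hm, h]
      simp only [h1]
      rw [setIntegral_indicator measurableSet_Ici, integral_const_mul]
      have hset : Ioc 0 x ∩ Ici s = Icc s x := by
        ext t
        simp only [mem_inter_iff, mem_Ioc, mem_Ici, mem_Icc]
        constructor
        · rintro ⟨⟨_, h2⟩, h3⟩; exact ⟨h3, h2⟩
        · rintro ⟨h1', h2⟩; exact ⟨⟨lt_of_lt_of_le hs.1 h1', h2⟩, h1'⟩
      rw [hset, integral_Icc_eq_integral_Ioc, ← intervalIntegral.integral_of_le hs.2,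
        ← intervalIntegral.integral_interval_sub_left (locInt_II hG 0 x) (locInt_II hG 0 s)]
      ring
    rw [stepB, stepC, stepD]
    have hFHg : IntegrableOn (fun s => F s * Hg s) (Ioc 0 x) volume :=
      ((hF.integrableOn_isCompact isCompact_Icc).mul_continuousOn hHgc.continuousOn
        isCompact_Icc).mono_set Ioc_subset_Icc_self
    rw [integral_sub (hFI.mul_const _) hFHg]
    rw [← intervalIntegral.integral_of_le hx, ← intervalIntegral.integral_of_le hx]
    rw [intervalIntegral.integral_mul_const]
    ring
  rw [key]; ring

lemma integralForm_mul_nonneg {F G f g : ℝ → ℝ} (hF : LocallyIntegrable F volume)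
    (hG : LocallyIntegrable G volume)
    (hfe : ∀ y : ℝ, f y = f 0 + ∫ t in (0:ℝ)..y, F t)
    (hge : ∀ y : ℝ, g y = g 0 + ∫ t in (0:ℝ)..y, G t)
    {x : ℝ} (hx : 0 ≤ x) :
    f x * g x = f 0 * g 0 + ∫ t in (0:ℝ)..x, (F t * g t + f t * G t) := by
  set Kf : ℝ → ℝ := fun y => ∫ t in (0:ℝ)..y, F t with hKf
  set Hg : ℝ → ℝ := fun y => ∫ t in (0:ℝ)..y, G t with hHg
  have hKc : Continuous Kf := intervalIntegral.continuous_primitive (locInt_II hF) 0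
  have hHc : Continuous Hg := intervalIntegral.continuous_primitive (locInt_II hG) 0
  have hptw : ∀ t : ℝ, F t * g t + f t * G t
      = F t * g 0 + (F t * Hg t + (G t * f 0 + G t * Kf t)) := by
    intro t; rw [hge t, hfe t]; ring
  have I1 : IntervalIntegrable (fun t => F t * g 0) volume 0 x := (locInt_II hF 0 x).mul_const _
  have I2 : IntervalIntegrable (fun t => F t * Hg t) volume 0 x :=
    locInt_II (locInt_mul_cont hF hHc) 0 x
  have I3 : IntervalIntegrable (fun t => G t * f 0) volume 0 x := (locInt_II hG 0 x).mul_const _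
  have I4 : IntervalIntegrable (fun t => G t * Kf t) volume 0 x :=
    locInt_II (locInt_mul_cont hG hKc) 0 x
  rw [intervalIntegral.integral_congr (fun t _ => hptw t),
    intervalIntegral.integral_add I1 (I2.add (I3.add I4)),
    intervalIntegral.integral_add I2 (I3.add I4),
    intervalIntegral.integral_add I3 I4,
    intervalIntegral.integral_mul_const, intervalIntegral.integral_mul_const]
  have htri := triangle_core hF hG hx
  rw [hfe x, hge x]
  have hsum : (∫ t in (0:ℝ)..x, F t * Hg t) + ∫ t in (0:ℝ)..x, G t * Kf t
      = Kf x * Hg x := by rw [← htri]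
  rw [← hKf, ← hHg] at *
  nlinarith [hsum]

lemma integralForm_mul {F G f g : ℝ → ℝ} (hF : LocallyIntegrable F volume)
    (hG : LocallyIntegrable G volume)
    (hfe : ∀ y : ℝ, f y = f 0 + ∫ t in (0:ℝ)..y, F t)
    (hge : ∀ y : ℝ, g y = g 0 + ∫ t in (0:ℝ)..y, G t) (x : ℝ) :
    f x * g x = f 0 * g 0 + ∫ t in (0:ℝ)..x, (F t * g t + f t * G t) := by
  rcases le_or_gt 0 x with hx | hx
  · exact integralForm_mul_nonneg hF hG hfe hge hx
  · have hFr : LocallyIntegrable (fun t => -F (-t)) volume := by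
      apply locInt_of_II
      intro a b
      simpa [Pi.neg_def] using ((IntervalIntegrable.iff_comp_neg (by simp)).mp (locInt_II hF (-a) (-b))).neg
    have hGr : LocallyIntegrable (fun t => -G (-t)) volume := by
      apply locInt_of_II
      intro a b
      simpa [Pi.neg_def] using ((IntervalIntegrable.iff_comp_neg (by simp)).mp (locInt_II hG (-a) (-b))).neg
    have hrefl : ∀ (h : ℝ → ℝ) (y : ℝ), (∫ t in (0:ℝ)..y, -h (-t)) = ∫ t in (0:ℝ)..(-y), h t := by
      intro h y
      rw [intervalIntegral.integral_neg, intervalIntegral.integral_comp_neg]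
      rw [neg_zero, intervalIntegral.integral_symm]
      ring_nf
    have hfe' : ∀ y : ℝ, f (-y) = f (-(0:ℝ)) + ∫ t in (0:ℝ)..y, -F (-t) := by
      intro y; rw [hrefl F y, neg_zero]; exact hfe (-y)
    have hge' : ∀ y : ℝ, g (-y) = g (-(0:ℝ)) + ∫ t in (0:ℝ)..y, -G (-t) := by
      intro y; rw [hrefl G y, neg_zero]; exact hge (-y)
    have hx' : (0:ℝ) ≤ -x := by linarith
    have hmain := integralForm_mul_nonneg (f := fun y => f (-y)) (g := fun y => g (-y))
      hFr hGr (by simpa using hfe') (by simpa using hge') hx'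
    simp only [neg_neg, neg_zero] at hmain
    rw [hmain]
    congr 1
    have hpt : ∀ t : ℝ, -F (-t) * g (-t) + f (-t) * -G (-t)
        = -((fun s => F s * g s + f s * G s) (-t)) := by intro t; simp; ring
    rw [intervalIntegral.integral_congr (fun t _ => hpt t)]
    rw [intervalIntegral.integral_neg]
    have h2 := intervalIntegral.integral_comp_neg (a := (0:ℝ)) (b := -x)
      (f := fun s => F s * g s + f s * G s)
    simp only [neg_neg, neg_zero] at h2
    rw [h2, intervalIntegral.integral_symm]
    simp

/-! ### Solutions of the Dirac system -/

section Dirac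

variable {m l q : ℝ → ℝ} {lam : ℝ}
variable (hm : LocallyIntegrable m volume) (hl : LocallyIntegrable l volume)
  (hq : LocallyIntegrable q volume)

include hm hl hq in
lemma rhs1_locInt {u₁ u₂ : ℝ → ℝ} (h1 : Continuous u₁) (h2 : Continuous u₂) :
    LocallyIntegrable (diracRHS1 m l q lam u₁ u₂) volume := by
  have : diracRHS1 m l q lam u₁ u₂
      = fun t => (-(l t)) * u₁ t + ((lam - q t) + m t) * u₂ t := rfl
  rw [this]
  exact (locInt_mul_cont hl.neg h1).add
    (locInt_mul_cont (((locallyIntegrable_const lam).sub hq).add hm) h2)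

include hm hl hq in
lemma rhs2_locInt {u₁ u₂ : ℝ → ℝ} (h1 : Continuous u₁) (h2 : Continuous u₂) :
    LocallyIntegrable (diracRHS2 m l q lam u₁ u₂) volume := by
  have : diracRHS2 m l q lam u₁ u₂
      = fun t => (-((lam - q t) - m t)) * u₁ t + (l t) * u₂ t := rfl
  rw [this]
  exact (locInt_mul_cont (((locallyIntegrable_const lam).sub hq).sub hm).neg h1).add
    (locInt_mul_cont hl h2)

include hm hl hq in
/-- The Wronskian of two solutions is constant. -/
lemma wronskian_const {u₁ u₂ v₁ v₂ : ℝ → ℝ} (hu : IsDiracSolution m l q lam u₁ u₂)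
    (hv : IsDiracSolution m l q lam v₁ v₂) (x : ℝ) :
    u₁ x * v₂ x - u₂ x * v₁ x = u₁ 0 * v₂ 0 - u₂ 0 * v₁ 0 := by
  obtain ⟨hu1, hu2, hue⟩ := hu
  obtain ⟨hv1, hv2, hve⟩ := hv
  have hU1 := rhs1_locInt (lam := lam) hm hl hq hu1 hu2
  have hU2 := rhs2_locInt (lam := lam) hm hl hq hu1 hu2
  have hV1 := rhs1_locInt (lam := lam) hm hl hq hv1 hv2
  have hV2 := rhs2_locInt (lam := lam) hm hl hq hv1 hv2
  have P1 := integralForm_mul hU1 hV2 (fun y => (hue y).1) (fun y => (hve y).2) x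
  have P2 := integralForm_mul hU2 hV1 (fun y => (hue y).2) (fun y => (hve y).1) x
  rw [P1, P2]
  have IA : IntervalIntegrable
      (fun t => diracRHS1 m l q lam u₁ u₂ t * v₂ t + u₁ t * diracRHS2 m l q lam v₁ v₂ t)
      volume 0 x :=
    locInt_II ((locInt_mul_cont hU1 hv2).add (cont_mul_locInt hu1 hV2)) 0 x
  have IB : IntervalIntegrable
      (fun t => diracRHS2 m l q lam u₁ u₂ t * v₁ t + u₂ t * diracRHS1 m l q lam v₁ v₂ t)
      volume 0 x :=
    locInt_II ((locInt_mul_cont hU2 hv1).add (cont_mul_locInt hu2 hV1)) 0 x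
  have hzero : ∀ t : ℝ,
      (diracRHS1 m l q lam u₁ u₂ t * v₂ t + u₁ t * diracRHS2 m l q lam v₁ v₂ t)
      - (diracRHS2 m l q lam u₁ u₂ t * v₁ t + u₂ t * diracRHS1 m l q lam v₁ v₂ t) = 0 := by
    intro t; simp only [diracRHS1, diracRHS2]; ring
  have : (∫ t in (0:ℝ)..x,
        (diracRHS1 m l q lam u₁ u₂ t * v₂ t + u₁ t * diracRHS2 m l q lam v₁ v₂ t))
      - (∫ t in (0:ℝ)..x,
        (diracRHS2 m l q lam u₁ u₂ t * v₁ t + u₂ t * diracRHS1 m l q lam v₁ v₂ t)) = 0 := by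
    rw [← intervalIntegral.integral_sub IA IB]
    rw [intervalIntegral.integral_congr (g := fun _ => (0:ℝ)) (fun t _ => hzero t)]
    simp
  linarith [this]

include hm hl hq in
/-- Linear combinations of solutions are solutions. -/
lemma solution_combo {u₁ u₂ v₁ v₂ : ℝ → ℝ} (a b : ℝ)
    (hu : IsDiracSolution m l q lam u₁ u₂) (hv : IsDiracSolution m l q lam v₁ v₂) :
    IsDiracSolution m l q lam (fun x => a * u₁ x + b * v₁ x) (fun x => a * u₂ x + b * v₂ x) := by
  obtain ⟨hu1, hu2, hue⟩ := hu
  obtain ⟨hv1, hv2, hve⟩ := hv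
  refine ⟨(continuous_const.mul hu1).add (continuous_const.mul hv1),
    (continuous_const.mul hu2).add (continuous_const.mul hv2), fun x => ?_⟩
  constructor
  · have hpt : ∀ t : ℝ, diracRHS1 m l q lam (fun x => a * u₁ x + b * v₁ x)
        (fun x => a * u₂ x + b * v₂ x) t
        = a * diracRHS1 m l q lam u₁ u₂ t + b * diracRHS1 m l q lam v₁ v₂ t := by
      intro t; simp only [diracRHS1]; ring
    rw [intervalIntegral.integral_congr (fun t _ => hpt t),
      intervalIntegral.integral_add
        ((locInt_II (rhs1_locInt (lam := lam) hm hl hq hu1 hu2) 0 x).const_mul a)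
        ((locInt_II (rhs1_locInt (lam := lam) hm hl hq hv1 hv2) 0 x).const_mul b),
      intervalIntegral.integral_const_mul, intervalIntegral.integral_const_mul]
    show a * u₁ x + b * v₁ x = a * u₁ 0 + b * v₁ 0
      + (a * (∫ t in (0:ℝ)..x, diracRHS1 m l q lam u₁ u₂ t)
        + b * ∫ t in (0:ℝ)..x, diracRHS1 m l q lam v₁ v₂ t)
    rw [(hue x).1, (hve x).1]
    ring
  · have hpt : ∀ t : ℝ, diracRHS2 m l q lam (fun x => a * u₁ x + b * v₁ x)
        (fun x => a * u₂ x + b * v₂ x) t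
        = a * diracRHS2 m l q lam u₁ u₂ t + b * diracRHS2 m l q lam v₁ v₂ t := by
      intro t; simp only [diracRHS2]; ring
    rw [intervalIntegral.integral_congr (fun t _ => hpt t),
      intervalIntegral.integral_add
        ((locInt_II (rhs2_locInt (lam := lam) hm hl hq hu1 hu2) 0 x).const_mul a)
        ((locInt_II (rhs2_locInt (lam := lam) hm hl hq hv1 hv2) 0 x).const_mul b),
      intervalIntegral.integral_const_mul, intervalIntegral.integral_const_mul]
    show a * u₂ x + b * v₂ x = a * u₂ 0 + b * v₂ 0
      + (a * (∫ t in (0:ℝ)..x, diracRHS2 m l q lam u₁ u₂ t)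
        + b * ∫ t in (0:ℝ)..x, diracRHS2 m l q lam v₁ v₂ t)
    rw [(hue x).2, (hve x).2]
    ring

include hm hl hq in
/-- Translates of solutions by the period are solutions. -/
lemma solution_shift {α : ℝ} (hmp : Function.Periodic m α) (hlp : Function.Periodic l α)
    (hqp : Function.Periodic q α) {u₁ u₂ : ℝ → ℝ}
    (hu : IsDiracSolution m l q lam u₁ u₂) :
    IsDiracSolution m l q lam (fun x => u₁ (x + α)) (fun x => u₂ (x + α)) := by
  obtain ⟨hu1, hu2, hue⟩ := hu
  have hc : Continuous fun x : ℝ => x + α := continuous_id.add continuous_const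
  refine ⟨hu1.comp hc, hu2.comp hc, fun x => ?_⟩
  have hper1 : ∀ t : ℝ, diracRHS1 m l q lam (fun x => u₁ (x + α)) (fun x => u₂ (x + α)) t
      = diracRHS1 m l q lam u₁ u₂ (t + α) := by
    intro t; simp only [diracRHS1, hmp t, hlp t, hqp t]
  have hper2 : ∀ t : ℝ, diracRHS2 m l q lam (fun x => u₁ (x + α)) (fun x => u₂ (x + α)) t
      = diracRHS2 m l q lam u₁ u₂ (t + α) := by
    intro t; simp only [diracRHS2, hmp t, hlp t, hqp t]
  constructor
  · rw [intervalIntegral.integral_congr (fun t _ => hper1 t),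
      intervalIntegral.integral_comp_add_right, zero_add]
    have hsub := intervalIntegral.integral_interval_sub_left
      (locInt_II (rhs1_locInt (lam := lam) hm hl hq hu1 hu2) 0 (x + α))
      (locInt_II (rhs1_locInt (lam := lam) hm hl hq hu1 hu2) 0 α)
    rw [← hsub]
    show u₁ (x + α) = u₁ (0 + α)
      + ((∫ t in (0:ℝ)..(x + α), diracRHS1 m l q lam u₁ u₂ t)
        - ∫ t in (0:ℝ)..α, diracRHS1 m l q lam u₁ u₂ t)
    rw [zero_add]
    linarith [(hue (x + α)).1, (hue α).1]
  · rw [intervalIntegral.integral_congr (fun t _ => hper2 t),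
      intervalIntegral.integral_comp_add_right, zero_add]
    have hsub := intervalIntegral.integral_interval_sub_left
      (locInt_II (rhs2_locInt (lam := lam) hm hl hq hu1 hu2) 0 (x + α))
      (locInt_II (rhs2_locInt (lam := lam) hm hl hq hu1 hu2) 0 α)
    rw [← hsub]
    show u₂ (x + α) = u₂ (0 + α)
      + ((∫ t in (0:ℝ)..(x + α), diracRHS2 m l q lam u₁ u₂ t)
        - ∫ t in (0:ℝ)..α, diracRHS2 m l q lam u₁ u₂ t)
    rw [zero_add]
    linarith [(hue (x + α)).2, (hue α).2]

/-- The columns of the fundamental matrix are solutions. -/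
lemma col_solution {U : ℝ → Matrix (Fin 2) (Fin 2) ℝ}
    (hU : IsFundamentalMatrix m l q lam U) (j : Fin 2) :
    IsDiracSolution m l q lam (fun x => U x 0 j) (fun x => U x 1 j) := by
  obtain ⟨hUc, hU0, hUe⟩ := hU
  refine ⟨hUc 0 j, hUc 1 j, fun x => ?_⟩
  have entry0 : ∀ t : ℝ,
      (!![(0:ℝ), 1; -1, 0] *
        !![lam - q t - m t, -(l t); -(l t), lam - q t + m t] * U t) 0 j
      = diracRHS1 m l q lam (fun x => U x 0 j) (fun x => U x 1 j) t := by
    intro t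
    simp [Matrix.mul_apply, Fin.sum_univ_two, diracRHS1]
  have entry1 : ∀ t : ℝ,
      (!![(0:ℝ), 1; -1, 0] *
        !![lam - q t - m t, -(l t); -(l t), lam - q t + m t] * U t) 1 j
      = diracRHS2 m l q lam (fun x => U x 0 j) (fun x => U x 1 j) t := by
    intro t
    simp [Matrix.mul_apply, Fin.sum_univ_two, diracRHS2]
  constructor
  · have h := hUe x 0 j
    rw [intervalIntegral.integral_congr (fun t _ => entry0 t)] at h
    show U x 0 j = U 0 0 j
      + ∫ t in (0:ℝ)..x, diracRHS1 m l q lam (fun x => U x 0 j) (fun x => U x 1 j) t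
    rw [hU0]
    exact h
  · have h := hUe x 1 j
    rw [intervalIntegral.integral_congr (fun t _ => entry1 t)] at h
    show U x 1 j = U 0 1 j
      + ∫ t in (0:ℝ)..x, diracRHS2 m l q lam (fun x => U x 0 j) (fun x => U x 1 j) t
    rw [hU0]
    exact h

include hm hl hq in
/-- A solution vanishing at one point vanishes identically. -/
lemma solution_vanish {U : ℝ → Matrix (Fin 2) (Fin 2) ℝ}
    (hU : IsFundamentalMatrix m l q lam U)
    {p₁ p₂ : ℝ → ℝ} (hp : IsDiracSolution m l q lam p₁ p₂)
    {x₀ : ℝ} (h0 : p₁ x₀ = 0 ∧ p₂ x₀ = 0) (x : ℝ) :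
    p₁ x = 0 ∧ p₂ x = 0 := by
  have hcol0 := col_solution (lam := lam) hU 0
  have hcol1 := col_solution (lam := lam) hU 1
  have hone : ∀ i j : Fin 2, U 0 i j = (1 : Matrix (Fin 2) (Fin 2) ℝ) i j := by
    intro i j; rw [hU.2.1]
  have hdet : ∀ y : ℝ, U y 0 0 * U y 1 1 - U y 1 0 * U y 0 1 = 1 := by
    intro y
    have h := wronskian_const hm hl hq hcol0 hcol1 y
    simp only [hone 0 0, hone 1 0, hone 0 1, hone 1 1, Matrix.one_apply] at h
    simpa using h
  have hW : ∀ (j : Fin 2) (y : ℝ), p₁ y * U y 1 j - p₂ y * U y 0 j = 0 := by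
    intro j y
    have hcj := col_solution (lam := lam) hU j
    have h1 := wronskian_const hm hl hq hp hcj y
    have h2 := wronskian_const hm hl hq hp hcj x₀
    rw [h0.1, h0.2] at h2
    simp only [zero_mul, mul_zero, sub_zero, zero_sub] at h2
    rw [h1]
    linarith [h2]
  have e0 := hW 0 x
  have e1 := hW 1 x
  constructor
  · calc p₁ x = p₁ x * (U x 0 0 * U x 1 1 - U x 1 0 * U x 0 1) := by rw [hdet x]; ring
    _ = U x 0 0 * (p₁ x * U x 1 1 - p₂ x * U x 0 1)
        - U x 0 1 * (p₁ x * U x 1 0 - p₂ x * U x 0 0) := by ring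
    _ = 0 := by rw [e1, e0]; ring
  · calc p₂ x = p₂ x * (U x 0 0 * U x 1 1 - U x 1 0 * U x 0 1) := by rw [hdet x]; ring
    _ = U x 1 0 * (p₁ x * U x 1 1 - p₂ x * U x 0 1)
        - U x 1 1 * (p₁ x * U x 1 0 - p₂ x * U x 0 0) := by ring
    _ = 0 := by rw [e1, e0]; ring

include hm hl hq in
/-- Monodromy relation `U(x+α) = U(x)·U(α)` (entrywise). -/
lemma monodromy {α : ℝ} (hmp : Function.Periodic m α) (hlp : Function.Periodic l α)
    (hqp : Function.Periodic q α) {U : ℝ → Matrix (Fin 2) (Fin 2) ℝ}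
    (hU : IsFundamentalMatrix m l q lam U) (x : ℝ) (i j : Fin 2) :
    U (x + α) i j = U α 0 j * U x i 0 + U α 1 j * U x i 1 := by
  have hshift := solution_shift hm hl hq hmp hlp hqp (col_solution (lam := lam) hU j)
  have hcombo := solution_combo hm hl hq (U α 0 j) (U α 1 j)
    (col_solution (lam := lam) hU 0) (col_solution (lam := lam) hU 1)
  have hdiff := solution_combo hm hl hq 1 (-1) hshift hcombo
  have hone : ∀ i' j' : Fin 2, U 0 i' j' = (1 : Matrix (Fin 2) (Fin 2) ℝ) i' j' := by
    intro i' j'; rw [hU.2.1]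
  have h0 : (1:ℝ) * U (0 + α) 0 j + (-1) * (U α 0 j * U 0 0 0 + U α 1 j * U 0 0 1) = 0 ∧
      (1:ℝ) * U (0 + α) 1 j + (-1) * (U α 0 j * U 0 1 0 + U α 1 j * U 0 1 1) = 0 := by
    rw [zero_add, hone 0 0, hone 0 1, hone 1 0, hone 1 1]
    norm_num [Matrix.one_apply]
  have hv := solution_vanish hm hl hq hU hdiff h0 x
  have h1' : U (x + α) 0 j = U α 0 j * U x 0 0 + U α 1 j * U x 0 1 := by
    have h := hv.1; simp only [one_mul, neg_one_mul] at h; linarith [h]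
  have h2' : U (x + α) 1 j = U α 0 j * U x 1 0 + U α 1 j * U x 1 1 := by
    have h := hv.2; simp only [one_mul, neg_one_mul] at h; linarith [h]
  fin_cases i
  · exact h1'
  · exact h2'

end Dirac

/-! ### Eigenvectors of 2×2 matrices -/

lemma exists_eigenvector (M00 M01 M10 M11 ρ : ℝ)
    (hdet : M00 * M11 - M10 * M01 = 1)
    (hchar : ρ ^ 2 - (M00 + M11) * ρ + 1 = 0) :
    ∃ w1 w2 : ℝ, ¬(w1 = 0 ∧ w2 = 0) ∧
      M00 * w1 + M01 * w2 = ρ * w1 ∧ M10 * w1 + M11 * w2 = ρ * w2 := by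
  have hps : (M00 - ρ) * (M11 - ρ) = M01 * M10 := by linear_combination hdet + hchar
  by_cases hpq : M01 = 0 ∧ M00 - ρ = 0
  · obtain ⟨hq0, hp0⟩ := hpq
    by_cases hrs : M10 = 0 ∧ M11 - ρ = 0
    · exact ⟨1, 0, by simp, by rw [hq0]; nlinarith [hp0], by rw [hrs.1]; ring⟩
    · refine ⟨M11 - ρ, -M10, ?_, ?_, by ring⟩
      · rintro ⟨h1, h2⟩
        exact hrs ⟨by linarith [neg_eq_zero.mp h2], h1⟩
      · rw [hq0]; linear_combination (M11 - ρ) * hp0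
  · refine ⟨M01, ρ - M00, ?_, by ring, by nlinarith [hps]⟩
    rintro ⟨h1, h2⟩
    exact hpq ⟨h1, by linarith⟩

/-! ### Continuous integer-valued functions are constant -/

lemma intvalued_const {g : ℝ → ℝ} (hg : Continuous g) (hi : ∀ x : ℝ, ∃ n : ℤ, g x = n)
    (x : ℝ) : g x = g 0 := by
  have key : ∀ (a b : ℝ) (ka kb : ℤ), g a = ka → g b = kb → ka < kb → False := by
    intro a b ka kb ha hb hlt
    have hle : (ka : ℝ) + 1 ≤ kb := by exact_mod_cast Int.add_one_le_of_lt hlt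
    have h1 : (ka : ℝ) + 1/2 ∈ Icc (g a) (g b) := by
      rw [ha, hb]; constructor <;> [linarith; linarith]
    obtain ⟨y, hy⟩ := intermediate_value_univ a b hg h1
    obtain ⟨j, hj⟩ := hi y
    rw [hj] at hy
    have h2 : (2 * j : ℝ) = 2 * ka + 1 := by linarith
    have h3 : (2 * j : ℤ) = 2 * ka + 1 := by exact_mod_cast h2
    omega
  by_contra hne
  obtain ⟨k, hk⟩ := hi x
  obtain ⟨k0, hk0⟩ := hi 0
  have hkk : k ≠ k0 := by
    rintro rfl; rw [hk, ← hk0] at hne; exact hne rfl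
  rcases lt_or_gt_of_ne hkk with h | h
  · exact absurd (key x 0 k k0 hk hk0 h) not_false
  · exact absurd (key 0 x k0 k hk0 hk h) not_false

/-! ### Prüfer angle increment over one period -/

lemma angle_increment {α : ℝ} {ψ S : ℝ → ℝ} (hψ : Continuous ψ) (hS : ∀ x, 0 < S x)
    {ρ : ℝ} (hρ : ρ ≠ 0)
    (hrel : ∀ x : ℝ, ((S (x + α) : ℝ) : ℂ) * Complex.exp (-(ψ (x + α) : ℝ) * Complex.I)
      = (ρ : ℂ) * (((S x : ℝ) : ℂ) * Complex.exp (-(ψ x : ℝ) * Complex.I))) :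
    ∃ n : ℤ, ∀ x : ℝ, ψ (x + α) - ψ x = n * Real.pi := by
  have hsin : ∀ x : ℝ, Real.sin (ψ x - ψ (x + α)) = 0 := by
    intro x
    have h := hrel x
    have hS1 : ((S (x + α) : ℝ) : ℂ) ≠ 0 := by
      exact_mod_cast ne_of_gt (hS (x + α))
    have hexp : Complex.exp (((ψ x - ψ (x + α) : ℝ) : ℂ) * Complex.I)
        = ((ρ * S x / S (x + α) : ℝ) : ℂ) := by
      have hE : Complex.exp (((ψ x - ψ (x + α) : ℝ) : ℂ) * Complex.I)
          = Complex.exp ((ψ x : ℝ) * Complex.I) * Complex.exp (-(ψ (x + α) : ℝ) * Complex.I) := by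
        rw [← Complex.exp_add]; congr 1; push_cast; ring
      rw [hE]
      have h2 : Complex.exp (-(ψ (x + α) : ℝ) * Complex.I)
          = (ρ : ℂ) * ((S x : ℝ) : ℂ) * Complex.exp (-(ψ x : ℝ) * Complex.I)
            / ((S (x + α) : ℝ) : ℂ) := by
        field_simp at h ⊢
        linear_combination h
      rw [h2]
      rw [mul_div_assoc']
      rw [show Complex.exp ((ψ x : ℝ) * Complex.I) * ((ρ : ℂ) * ((S x : ℝ) : ℂ)
          * Complex.exp (-(ψ x : ℝ) * Complex.I))
          = (ρ : ℂ) * ((S x : ℝ) : ℂ) *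
            (Complex.exp ((ψ x : ℝ) * Complex.I) * Complex.exp (-(ψ x : ℝ) * Complex.I)) by ring]
      rw [← Complex.exp_add]
      have : ((ψ x : ℝ) : ℂ) * Complex.I + (-(ψ x : ℝ) : ℂ) * Complex.I = 0 := by push_cast; ring
      rw [this, Complex.exp_zero, mul_one]
      push_cast
      ring
    have him := congrArg Complex.im hexp
    rw [Complex.exp_ofReal_mul_I_im] at him
    simpa using him
  have hint : ∀ x : ℝ, ∃ n : ℤ, (ψ (x + α) - ψ x) / Real.pi = n := by
    intro x
    obtain ⟨n, hn⟩ := Real.sin_eq_zero_iff.mp (hsin x)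
    refine ⟨-n, ?_⟩
    have : ψ (x + α) - ψ x = -n * Real.pi := by linarith [hn]
    rw [this]
    push_cast
    field_simp
  have hcont : Continuous fun x => (ψ (x + α) - ψ x) / Real.pi :=
    ((hψ.comp (continuous_id.add continuous_const)).sub hψ).div_const _
  obtain ⟨n0, hn0⟩ := hint 0
  refine ⟨n0, fun x => ?_⟩
  have := intvalued_const hcont hint x
  rw [hn0] at this
  have hπ := Real.pi_ne_zero
  field_simp at this
  linarith [this]

/-! ### Bounds for periodic continuous functions -/

lemma periodic_bound {h : ℝ → ℝ} (hc : Continuous h) {α : ℝ} (hα : 0 < α)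
    (hp : ∀ x : ℝ, h (x + α) = h x) : ∃ M : ℝ, ∀ x : ℝ, |h x| ≤ M := by
  have hper : Function.Periodic h α := hp
  obtain ⟨C, hC⟩ := (isCompact_Icc (a := (0:ℝ)) (b := α)).exists_bound_of_continuousOn
    hc.continuousOn
  refine ⟨C, fun x => ?_⟩
  obtain ⟨y, hy, hxy⟩ := hper.exists_mem_Ico₀ hα x
  rw [hxy]
  have := hC y ⟨hy.1, le_of_lt hy.2⟩
  simpa [Real.norm_eq_abs] using this

lemma sqrt_sq_add_pos {a b : ℝ} (h : ¬(a = 0 ∧ b = 0)) : 0 < Real.sqrt (a ^ 2 + b ^ 2) := by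
  apply Real.sqrt_pos.mpr
  rcases not_and_or.mp h with h1 | h1
  · have := sq_nonneg b; have h2 : 0 < a ^ 2 := by positivity
    linarith
  · have := sq_nonneg a; have h2 : 0 < b ^ 2 := by positivity
    linarith

lemma final_bound {θ A : ℝ → ℝ} {α : ℝ} (hα : 0 < α)
    (hθA : Continuous fun x => θ x - A x) (hA : ∀ x, |A x| ≤ Real.pi) {n : ℤ}
    (hinc : ∀ x : ℝ, (θ (x + α) - A (x + α)) - (θ x - A x) = n * Real.pi) :
    ∃ M > 0, ∀ x : ℝ, |θ x - n * Real.pi * x / α| ≤ M := by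
  set h : ℝ → ℝ := fun x => (θ x - A x) - n * Real.pi * x / α with hh
  have hcont : Continuous h := by
    apply hθA.sub
    apply Continuous.div_const
    exact (continuous_const.mul continuous_id)
  have hper : ∀ x : ℝ, h (x + α) = h x := by
    intro x
    have h1 : (n : ℝ) * Real.pi * (x + α) / α = n * Real.pi * x / α + n * Real.pi := by
      field_simp
    have h2 := hinc x
    simp only [hh]
    rw [h1]
    linarith [h2]
  obtain ⟨M₁, hM₁⟩ := periodic_bound hcont hα hper
  have hM₁0 : 0 ≤ M₁ := le_trans (abs_nonneg _) (hM₁ 0)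
  refine ⟨M₁ + Real.pi + 1, by linarith [Real.pi_pos], fun x => ?_⟩
  have hxdecomp : θ x - n * Real.pi * x / α = h x + A x := by simp only [hh]; ring
  rw [hxdecomp]
  calc |h x + A x| ≤ |h x| + |A x| := abs_add_le _ _
  _ ≤ M₁ + Real.pi := add_le_add (hM₁ x) (hA x)
  _ ≤ M₁ + Real.pi + 1 := by linarith

/-- **Prüfer angle asymptotics in the closure of an instability interval.**
If `|D| ≥ 2`, the Prüfer angle of any nontrivial real solution satisfies
`θ(x) = nπx/α + O(1)` as `x → ∞` for some integer `n`. -/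
theorem prufer_angle_asymptotics_unstable
    (α : ℝ) (hα : 0 < α) (m l q : ℝ → ℝ)
    (hm : LocallyIntegrable m volume) (hl : LocallyIntegrable l volume)
    (hq : LocallyIntegrable q volume)
    (hmp : Function.Periodic m α) (hlp : Function.Periodic l α)
    (hqp : Function.Periodic q α)
    (lam : ℝ) (U : ℝ → Matrix (Fin 2) (Fin 2) ℝ)
    (hU : IsFundamentalMatrix m l q lam U)
    (hD : 2 ≤ |Matrix.trace (U α)|)
    (u₁ u₂ : ℝ → ℝ) (hu : IsDiracSolution m l q lam u₁ u₂)
    (hnt : ∃ x : ℝ, ¬(u₁ x = 0 ∧ u₂ x = 0))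
    (θ : ℝ → ℝ) (hθ : IsPruferAngle u₁ u₂ θ) :
    ∃ n : ℤ, ∃ M > 0, ∀ x : ℝ, 0 ≤ x →
      |θ x - n * Real.pi * x / α| ≤ M := by
  classical
  obtain ⟨x₀, hx₀⟩ := hnt
  have hcol0 := col_solution (lam := lam) hU 0
  have hcol1 := col_solution (lam := lam) hU 1
  have hone : ∀ i j : Fin 2, U 0 i j = (1 : Matrix (Fin 2) (Fin 2) ℝ) i j := by
    intro i j; rw [hU.2.1]
  -- determinant of the monodromy matrix is 1
  have hdet : U α 0 0 * U α 1 1 - U α 1 0 * U α 0 1 = 1 := by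
    have h := wronskian_const hm hl hq hcol0 hcol1 α
    simp only [hone 0 0, hone 1 0, hone 0 1, hone 1 1, Matrix.one_apply] at h
    simpa using h
  -- the discriminant and the Floquet multiplier
  set D : ℝ := U α 0 0 + U α 1 1 with hDdef
  have hDtr : Matrix.trace (U α) = D := by
    rw [Matrix.trace_fin_two]
  rw [hDtr] at hD
  have hD4 : (0:ℝ) ≤ D ^ 2 - 4 := by
    have h1 : (2:ℝ) ^ 2 ≤ |D| ^ 2 := by
      apply pow_le_pow_left₀ (by norm_num) hD
    rw [sq_abs] at h1
    nlinarith [h1]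
  set ρ : ℝ := (D + Real.sqrt (D ^ 2 - 4)) / 2 with hρdef
  have hsq : Real.sqrt (D ^ 2 - 4) ^ 2 = D ^ 2 - 4 := Real.sq_sqrt hD4
  have hchar : ρ ^ 2 - (U α 0 0 + U α 1 1) * ρ + 1 = 0 := by
    rw [← hDdef, hρdef]
    linear_combination hsq / 4
  have hρ0 : ρ ≠ 0 := by
    intro h
    rw [h] at hchar
    norm_num at hchar
  -- eigenvector and Floquet solution
  obtain ⟨w1, w2, hw, he1, he2⟩ :=
    exists_eigenvector (U α 0 0) (U α 0 1) (U α 1 0) (U α 1 1) ρ hdet hchar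
  set v₁ : ℝ → ℝ := fun x => w1 * U x 0 0 + w2 * U x 0 1 with hv₁def
  set v₂ : ℝ → ℝ := fun x => w1 * U x 1 0 + w2 * U x 1 1 with hv₂def
  have hv : IsDiracSolution m l q lam v₁ v₂ :=
    solution_combo hm hl hq w1 w2 hcol0 hcol1
  have hFloq : ∀ x : ℝ, v₁ (x + α) = ρ * v₁ x ∧ v₂ (x + α) = ρ * v₂ x := by
    intro x
    constructor
    · simp only [hv₁def]
      rw [monodromy hm hl hq hmp hlp hqp hU x 0 0, monodromy hm hl hq hmp hlp hqp hU x 0 1]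
      linear_combination (U x 0 0) * he1 + (U x 0 1) * he2
    · simp only [hv₂def]
      rw [monodromy hm hl hq hmp hlp hqp hU x 1 0, monodromy hm hl hq hmp hlp hqp hU x 1 1]
      linear_combination (U x 1 0) * he1 + (U x 1 1) * he2
  -- polar representation of u
  set R : ℝ → ℝ := fun x => Real.sqrt (u₁ x ^ 2 + u₂ x ^ 2) with hRdef
  have hz : ∀ x : ℝ, (u₁ x : ℂ) + u₂ x * Complex.I
      = ((R x : ℝ) : ℂ) * Complex.exp (-(θ x : ℝ) * Complex.I) := by
    intro x
    have hE : Complex.exp (-(θ x : ℝ) * Complex.I)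
        = ((Real.cos (θ x) : ℝ) : ℂ) - ((Real.sin (θ x) : ℝ) : ℂ) * Complex.I := by
      have h1 : (-(θ x : ℝ) : ℂ) * Complex.I = ((-θ x : ℝ) : ℂ) * Complex.I := by push_cast; ring
      rw [h1, Complex.exp_mul_I, ← Complex.ofReal_cos, ← Complex.ofReal_sin,
        Real.cos_neg, Real.sin_neg]
      push_cast
      ring
    have h1 : u₁ x = R x * Real.cos (θ x) := (hθ.2 x).1
    have h2 : u₂ x = -(R x * Real.sin (θ x)) := (hθ.2 x).2
    have hexp : ((R x : ℝ) : ℂ) * (((Real.cos (θ x) : ℝ) : ℂ)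
        - ((Real.sin (θ x) : ℝ) : ℂ) * Complex.I)
        = ((R x * Real.cos (θ x) : ℝ) : ℂ)
          + ((-(R x * Real.sin (θ x)) : ℝ) : ℂ) * Complex.I := by
      push_cast
      ring
    rw [hE, hexp, ← h1, ← h2]
  -- the (constant) Wronskian of u and v
  set c : ℝ := u₁ 0 * v₂ 0 - u₂ 0 * v₁ 0 with hcdef
  have hc : ∀ x : ℝ, u₁ x * v₂ x - u₂ x * v₁ x = c :=
    wronskian_const hm hl hq hu hv
  by_cases hc0 : c = 0
  · -- u is itself a Floquet solution
    have hnv : ∀ x : ℝ, ¬(u₁ x = 0 ∧ u₂ x = 0) := by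
      intro x hx
      exact hx₀ (solution_vanish hm hl hq hU hu hx x₀)
    have hR : ∀ x : ℝ, 0 < R x := fun x => sqrt_sq_add_pos (hnv x)
    have hcc : u₁ 0 * v₂ 0 - u₂ 0 * v₁ 0 = 0 := by rw [← hcdef]; exact hc0
    -- find κ with v = κ u
    have hκ : ∃ κ : ℝ, v₁ 0 = κ * u₁ 0 ∧ v₂ 0 = κ * u₂ 0 := by
      by_cases h10 : u₁ 0 = 0
      · have h20 : u₂ 0 ≠ 0 := fun h => hnv 0 ⟨h10, h⟩
        refine ⟨v₂ 0 / u₂ 0, ?_, by field_simp⟩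
        have hv10 : v₁ 0 = 0 := by
          rw [h10] at hcc
          rcases mul_eq_zero.mp (by linarith [hcc] : u₂ 0 * v₁ 0 = 0) with h | h
          · exact absurd h h20
          · exact h
        rw [hv10, h10, mul_zero]
      · refine ⟨v₁ 0 / u₁ 0, by field_simp, ?_⟩
        field_simp
        nlinarith [hcc]
    obtain ⟨κ, hκ1, hκ2⟩ := hκ
    have hκ0 : κ ≠ 0 := by
      intro h
      rw [h, zero_mul] at hκ1 hκ2
      apply hw
      have hv10 : v₁ 0 = w1 := by
        simp only [hv₁def]
        rw [hone 0 0, hone 0 1]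
        simp [Matrix.one_apply]
      have hv20 : v₂ 0 = w2 := by
        simp only [hv₂def]
        rw [hone 1 0, hone 1 1]
        simp [Matrix.one_apply]
      exact ⟨by rw [← hv10, hκ1], by rw [← hv20, hκ2]⟩
    -- v = κ u everywhere
    have hp := solution_combo hm hl hq 1 (-κ) hv hu
    have hp0 : (1:ℝ) * v₁ 0 + (-κ) * u₁ 0 = 0 ∧ (1:ℝ) * v₂ 0 + (-κ) * u₂ 0 = 0 := by
      constructor
      · rw [hκ1]; ring
      · rw [hκ2]; ring
    have hvu : ∀ x : ℝ, v₁ x = κ * u₁ x ∧ v₂ x = κ * u₂ x := by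
      intro x
      have h := solution_vanish hm hl hq hU hp hp0 x
      constructor
      · linarith [h.1]
      · linarith [h.2]
    -- Floquet relation for u
    have huF : ∀ x : ℝ, u₁ (x + α) = ρ * u₁ x ∧ u₂ (x + α) = ρ * u₂ x := by
      intro x
      have h1 := (hFloq x).1
      have h2 := (hFloq x).2
      rw [(hvu (x + α)).1, (hvu x).1] at h1
      rw [(hvu (x + α)).2, (hvu x).2] at h2
      constructor
      · exact mul_left_cancel₀ hκ0 (by linarith [h1] : κ * u₁ (x + α) = κ * (ρ * u₁ x))
      · exact mul_left_cancel₀ hκ0 (by linarith [h2] : κ * u₂ (x + α) = κ * (ρ * u₂ x))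
    -- angle increment
    have hrel : ∀ x : ℝ, ((R (x + α) : ℝ) : ℂ) * Complex.exp (-(θ (x + α) : ℝ) * Complex.I)
        = (ρ : ℂ) * (((R x : ℝ) : ℂ) * Complex.exp (-(θ x : ℝ) * Complex.I)) := by
      intro x
      rw [← hz (x + α), ← hz x, (huF x).1, (huF x).2]
      push_cast
      ring
    obtain ⟨n, hn⟩ := angle_increment hθ.1 hR hρ0 hrel
    have hfb := final_bound (θ := θ) (A := fun _ => (0:ℝ)) hα
      (by simp only [sub_zero]; exact hθ.1)
      (fun x => by simpa using Real.pi_pos.le)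
      (n := n) (fun x => by simpa using hn x)
    obtain ⟨M, hM0, hMb⟩ := hfb
    exact ⟨n, M, hM0, fun x _ => hMb x⟩
  · -- u and v are independent
    set Fc : ℝ → ℂ := fun x => ((v₁ x : ℂ) + v₂ x * Complex.I) *
      (starRingEnd ℂ) ((u₁ x : ℂ) + u₂ x * Complex.I) with hFcdef
    have him : ∀ x : ℝ, (Fc x).im = c := by
      intro x
      have h1 : (Fc x).im = u₁ x * v₂ x - u₂ x * v₁ x := by
        simp only [hFcdef, Complex.mul_im, Complex.add_re, Complex.add_im, Complex.mul_re,
          Complex.conj_re, Complex.conj_im, Complex.I_re, Complex.I_im,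
          Complex.ofReal_re, Complex.ofReal_im]
        ring
      rw [h1, hc x]
    have hF0 : ∀ x : ℝ, Fc x ≠ 0 := by
      intro x h
      apply hc0
      rw [← him x, h, Complex.zero_im]
    have hnvu : ∀ x : ℝ, ¬(u₁ x = 0 ∧ u₂ x = 0) := by
      intro x hx
      apply hF0 x
      simp only [hFcdef]
      rw [hx.1, hx.2]
      simp
    have hR : ∀ x : ℝ, 0 < R x := fun x => sqrt_sq_add_pos (hnvu x)
    have hRne : ∀ x : ℝ, ((R x : ℝ) : ℂ) ≠ 0 := by
      intro x
      exact_mod_cast ne_of_gt (hR x)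
    have hFcont : Continuous Fc := by
      apply Continuous.mul
      · exact (Complex.continuous_ofReal.comp hv.1).add
          ((Complex.continuous_ofReal.comp hv.2.1).mul continuous_const)
      · exact Complex.continuous_conj.comp
          ((Complex.continuous_ofReal.comp hu.1).add
            ((Complex.continuous_ofReal.comp hu.2.1).mul continuous_const))
    set A : ℝ → ℝ := fun x => (Fc x).arg with hAdef
    have hAx : ∀ x : ℝ, (Fc x).arg = A x := fun x => rfl
    have hAcont : Continuous A := by
      rw [continuous_iff_continuousAt]
      intro x
      apply (Complex.continuousAt_arg ?_).comp hFcont.continuousAt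
      rw [Complex.mem_slitPlane_iff]
      right
      rw [him x]
      exact hc0
    have hAbd : ∀ x : ℝ, |A x| ≤ Real.pi := fun x => Complex.abs_arg_le_pi _
    set S : ℝ → ℝ := fun x => ‖Fc x‖ / R x with hSdef
    have hS : ∀ x : ℝ, 0 < S x := by
      intro x
      exact div_pos (norm_pos_iff.mpr (hF0 x)) (hR x)
    -- polar representation of v
    have hzv : ∀ x : ℝ, (v₁ x : ℂ) + v₂ x * Complex.I
        = ((S x : ℝ) : ℂ) * Complex.exp (-((θ x - A x : ℝ)) * Complex.I) := by
      intro x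
      have hcz : (starRingEnd ℂ) ((u₁ x : ℂ) + u₂ x * Complex.I)
          = ((R x : ℝ) : ℂ) * Complex.exp ((θ x : ℝ) * Complex.I) := by
        rw [hz x, map_mul, Complex.conj_ofReal, ← Complex.exp_conj]
        congr 1
        simp [map_mul, Complex.conj_ofReal, Complex.conj_I]
      have hzny : ((R x : ℝ) : ℂ) * Complex.exp ((θ x : ℝ) * Complex.I) ≠ 0 :=
        mul_ne_zero (hRne x) (Complex.exp_ne_zero _)
      have hFdef : Fc x = ((v₁ x : ℂ) + v₂ x * Complex.I) *
          (((R x : ℝ) : ℂ) * Complex.exp ((θ x : ℝ) * Complex.I)) := by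
        simp only [hFcdef]
        rw [← hcz]
      apply mul_right_cancel₀ hzny
      rw [← hFdef, ← Complex.norm_mul_exp_arg_mul_I (Fc x)]
      have hSR : ((S x : ℝ) : ℂ) * ((R x : ℝ) : ℂ) = ((‖Fc x‖ : ℝ) : ℂ) := by
        rw [← Complex.ofReal_mul]
        congr 1
        rw [hSdef]
        field_simp [ne_of_gt (hR x)]
      rw [show ((S x : ℝ) : ℂ) * Complex.exp (-((θ x - A x : ℝ)) * Complex.I) *
          (((R x : ℝ) : ℂ) * Complex.exp ((θ x : ℝ) * Complex.I))
          = (((S x : ℝ) : ℂ) * ((R x : ℝ) : ℂ)) *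
            (Complex.exp (-((θ x - A x : ℝ)) * Complex.I) *
              Complex.exp ((θ x : ℝ) * Complex.I)) from by ring]
      rw [hSR, ← Complex.exp_add]
      congr 1
      rw [hAx x]
      push_cast
      ring
    -- Floquet relation for the polar data of v
    have hrel : ∀ x : ℝ,
        ((S (x + α) : ℝ) : ℂ) * Complex.exp (-((fun y => θ y - A y) (x + α) : ℝ) * Complex.I)
        = (ρ : ℂ) * (((S x : ℝ) : ℂ) *
            Complex.exp (-((fun y => θ y - A y) x : ℝ) * Complex.I)) := by
      intro x
      simp only
      rw [← hzv (x + α), ← hzv x, (hFloq x).1, (hFloq x).2]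
      push_cast
      ring
    obtain ⟨n, hn⟩ := angle_increment (ψ := fun y => θ y - A y) (hθ.1.sub hAcont) hS hρ0 hrel
    obtain ⟨M, hM0, hMb⟩ := final_bound hα (hθ.1.sub hAcont) hAbd
      (n := n) (fun x => by simpa using hn x)
    exact ⟨n, M, hM0, fun x _ => hMb x⟩

end
end

section
/- Let m, l, q : I → ℝ be locally integrable on an interval I, λ ∈ ℝ, and let u = (u₁,u₂) : I → ℂ² be a solution of the Dirac system (−iσ₂ d/dx + mσ₃ + lσ₁ + q)u = λu such that u and its componentwise complex conjugate ū are linearly independent over ℂ. Then for every x ∈ I one has Im(u₁(x)·conj(u₂(x))) ≠ 0; in particular u₁(x) ≠ 0 and u₂(x) ≠ 0 for all x ∈ I. -/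
noncomputable section
open MeasureTheory Set

open intervalIntegral


lemma gronwall_fwd {c d : ℝ} (hcd : c ≤ d) {k ρ : ℝ → ℝ}
    (hk : IntervalIntegrable k volume c d)
    (hkρ : IntervalIntegrable (fun t => k t * ρ t) volume c d)
    (hk0 : ∀ t, 0 ≤ k t)
    (hρc : ContinuousOn ρ (Icc c d)) (hρ0 : ∀ t, 0 ≤ ρ t)
    (hineq : ∀ x ∈ Icc c d, ρ x ≤ ∫ t in c..x, k t * ρ t) :
    ∀ x ∈ Icc c d, ρ x = 0 := by
  have hsub : ∀ {y z : ℝ}, y ∈ Icc c d → z ∈ Icc c d →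
      IntervalIntegrable (fun t => k t * ρ t) volume y z := fun hy hz =>
    hkρ.mono_set (uIcc_subset_uIcc (by simpa [uIcc_of_le hcd] using hy)
      (by simpa [uIcc_of_le hcd] using hz))
  have hksub : ∀ {y z : ℝ}, y ∈ Icc c d → z ∈ Icc c d →
      IntervalIntegrable k volume y z := fun hy hz =>
    hk.mono_set (uIcc_subset_uIcc (by simpa [uIcc_of_le hcd] using hy)
      (by simpa [uIcc_of_le hcd] using hz))
  set A : Set ℝ := {x | x ∈ Icc c d ∧ ∀ t ∈ Icc c x, ρ t = 0} with hA
  have hρc0 : ρ c = 0 := by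
    have := hineq c ⟨le_rfl, hcd⟩
    rw [intervalIntegral.integral_same] at this
    exact le_antisymm this (hρ0 c)
  have hcA : c ∈ A := ⟨⟨le_rfl, hcd⟩, fun t ht => by
    rw [show t = c from le_antisymm ht.2 ht.1]; exact hρc0⟩
  have hbdd : BddAbove A := ⟨d, fun x hx => hx.1.2⟩
  have hAne : A.Nonempty := ⟨c, hcA⟩
  set s := sSup A with hs
  have hcs : c ≤ s := le_csSup hbdd hcA
  have hsd : s ≤ d := csSup_le hAne fun x hx => hx.1.2
  have hsmem : s ∈ Icc c d := ⟨hcs, hsd⟩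
  have key : ∀ t ∈ Ico c s, ρ t = 0 := by
    intro t ht
    obtain ⟨x, hxA, htx⟩ := exists_lt_of_lt_csSup hAne ht.2
    exact hxA.2 t ⟨ht.1, htx.le⟩
  -- the integral up to any point where ρ vanished before is 0
  have hint0 : ∀ y ∈ Icc c d, (∀ t ∈ Ico c y, ρ t = 0) →
      (∫ t in c..y, k t * ρ t) = 0 := by
    intro y hy hvan
    rw [intervalIntegral.integral_of_le hy.1, integral_Ioc_eq_integral_Ioo]
    exact setIntegral_eq_zero_of_forall_eq_zero fun t ht => by
      rw [hvan t ⟨ht.1.le, ht.2⟩, mul_zero]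
  have hρs : ρ s = 0 := by
    have h1 := hineq s hsmem
    rw [hint0 s hsmem key] at h1
    exact le_antisymm h1 (hρ0 s)
  have hsA : s ∈ A := ⟨hsmem, fun t ht => by
    rcases lt_or_eq_of_le ht.2 with h | h
    · exact key t ⟨ht.1, h⟩
    · rw [h]; exact hρs⟩
  have hseq : s = d := by
    by_contra hne
    have hslt : s < d := lt_of_le_of_ne hsd hne
    -- continuity of the primitive of k
    have hKcont : ContinuousOn (fun x => ∫ t in c..x, k t) (Icc c d) := by
      have := intervalIntegral.continuousOn_primitive_interval'
        (μ := volume) (f := k) (b₁ := c) (b₂ := d) hk left_mem_uIcc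
      simpa [uIcc_of_le hcd] using this
    have hKs := hKcont s hsmem
    rw [Metric.continuousWithinAt_iff] at hKs
    obtain ⟨δ, hδ0, hδ⟩ := hKs (1/2) (by norm_num)
    set d' := min d (s + δ/2) with hd'
    have hsd' : s < d' := lt_min hslt (by linarith)
    have hd'd : d' ≤ d := min_le_left _ _
    have hd'mem : d' ∈ Icc c d := ⟨hcs.trans hsd'.le, hd'd⟩
    have hKd' : (∫ t in c..d', k t) - (∫ t in c..s, k t) < 1/2 := by
      have hdist : dist d' s < δ := by
        rw [Real.dist_eq, abs_of_nonneg (by linarith)]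
        have : d' ≤ s + δ/2 := min_le_right _ _
        linarith
      have := hδ hd'mem hdist
      rw [Real.dist_eq] at this
      calc _ ≤ |(∫ t in c..d', k t) - (∫ t in c..s, k t)| := le_abs_self _
        _ < 1/2 := this
    -- maximum of ρ on [c, d']
    obtain ⟨ξ, hξmem, hξmax⟩ := isCompact_Icc.exists_isMaxOn
      (nonempty_Icc.mpr (hcs.trans hsd'.le))
      (hρc.mono (Icc_subset_Icc_right hd'd))
    set M := ρ ξ with hM
    have hξI : ξ ∈ Icc c d := ⟨hξmem.1, hξmem.2.trans hd'd⟩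
    have hmax : ∀ t ∈ Icc c d', ρ t ≤ M := fun t ht => hξmax ht
    have hM0 : (0:ℝ) ≤ M := hρ0 ξ
    have hMz : M = 0 := by
      rcases le_or_gt ξ s with h | h
      · exact hsA.2 ξ ⟨hξmem.1, h⟩
      · have h1 : ρ ξ ≤ ∫ t in c..ξ, k t * ρ t := hineq ξ hξI
        have hadd : (∫ t in c..s, k t * ρ t) + (∫ t in s..ξ, k t * ρ t)
            = ∫ t in c..ξ, k t * ρ t :=
          integral_add_adjacent_intervals (hsub ⟨le_rfl, hcd⟩ hsmem) (hsub hsmem hξI)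
        have h2 : (∫ t in s..ξ, k t * ρ t) ≤ ∫ t in s..ξ, k t * M := by
          apply integral_mono_on h.le (hsub hsmem hξI) ((hksub hsmem hξI).mul_const M)
          intro t ht
          exact mul_le_mul_of_nonneg_left
            (hmax t ⟨hcs.trans ht.1, ht.2.trans hξmem.2⟩) (hk0 t)
        have h3 : (∫ t in s..ξ, k t) ≤ ∫ t in s..d', k t :=
          integral_mono_interval le_rfl h.le hξmem.2
            (Filter.Eventually.of_forall fun t => hk0 t) (hksub hsmem hd'mem)
        have h4 : (∫ t in s..d', k t) = (∫ t in c..d', k t) - (∫ t in c..s, k t) :=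
          (integral_interval_sub_left (hksub ⟨le_rfl, hcd⟩ hd'mem)
            (hksub ⟨le_rfl, hcd⟩ hsmem)).symm
        have h5 : (∫ t in s..ξ, k t * M) = (∫ t in s..ξ, k t) * M :=
          integral_mul_const _ _
        have h6 : (∫ t in c..s, k t * ρ t) = 0 := hint0 s hsmem key
        have h7 : ρ ξ ≤ ((∫ t in c..d', k t) - (∫ t in c..s, k t)) * M := by
          calc ρ ξ ≤ ∫ t in c..ξ, k t * ρ t := h1
            _ = ∫ t in s..ξ, k t * ρ t := by rw [← hadd, h6, zero_add]
            _ ≤ (∫ t in s..ξ, k t) * M := by rw [← h5]; exact h2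
            _ ≤ _ := by
                apply mul_le_mul_of_nonneg_right _ hM0
                rw [← h4]; exact h3
        nlinarith [h7, hKd', hM0]
    have hd'A : d' ∈ A := ⟨hd'mem, fun t ht =>
      le_antisymm (hMz ▸ hmax t ht) (hρ0 t)⟩
    exact absurd (le_csSup hbdd hd'A) (not_le.mpr hsd')
  intro x hx
  exact hsA.2 x ⟨hx.1, hseq ▸ hx.2⟩

lemma gronwall_bwd {c d : ℝ} (hcd : c ≤ d) {k ρ : ℝ → ℝ}
    (hk : IntervalIntegrable k volume c d)
    (hkρ : IntervalIntegrable (fun t => k t * ρ t) volume c d)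
    (hk0 : ∀ t, 0 ≤ k t)
    (hρc : ContinuousOn ρ (Icc c d)) (hρ0 : ∀ t, 0 ≤ ρ t)
    (hineq : ∀ x ∈ Icc c d, ρ x ≤ ∫ t in x..d, k t * ρ t) :
    ∀ x ∈ Icc c d, ρ x = 0 := by
  have hmaps : ∀ {t : ℝ}, t ∈ Icc c d → c + d - t ∈ Icc c d := by
    intro t ht; exact ⟨by linarith [ht.2], by linarith [ht.1]⟩
  have main := gronwall_fwd hcd (k := fun t => k (c + d - t)) (ρ := fun t => ρ (c + d - t))
    (by simpa using (hk.comp_sub_left (c + d)).symm)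
    (by simpa using ((hkρ.comp_sub_left (c + d)).symm))
    (fun t => hk0 _)
    (hρc.comp ((continuous_const.sub continuous_id).continuousOn) fun t ht => hmaps ht)
    (fun t => hρ0 _)
    (by
      intro x hx
      have h1 := hineq (c + d - x) (hmaps hx)
      have h2 : (∫ t in c..x, k (c + d - t) * ρ (c + d - t))
          = ∫ t in (c + d - x)..d, k t * ρ t := by
        have := intervalIntegral.integral_comp_sub_left
          (a := c) (b := x) (fun t => k t * ρ t) (c + d)
        simpa using this
      rw [h2]; exact h1)
  intro x hx
  have := main (c + d - x) (hmaps hx)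
  simpa using this

lemma dirac_uniqueness {I : Set ℝ} (hI : I.OrdConnected) {x₀ : ℝ} (hx₀ : x₀ ∈ I)
    {k : ℝ → ℝ} {w₁ w₂ g₁ g₂ : ℝ → ℂ}
    (hk0 : ∀ t, 0 ≤ k t)
    (hw₁c : ContinuousOn w₁ I) (hw₂c : ContinuousOn w₂ I)
    (hkint : ∀ y ∈ I, ∀ z ∈ I, IntervalIntegrable k volume y z)
    (hkρint : ∀ y ∈ I, ∀ z ∈ I,
      IntervalIntegrable (fun t => k t * (‖w₁ t‖ + ‖w₂ t‖)) volume y z)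
    (hg₁int : ∀ y ∈ I, ∀ z ∈ I, IntervalIntegrable g₁ volume y z)
    (hg₂int : ∀ y ∈ I, ∀ z ∈ I, IntervalIntegrable g₂ volume y z)
    (hgbnd : ∀ t ∈ I, ‖g₁ t‖ + ‖g₂ t‖ ≤ k t * (‖w₁ t‖ + ‖w₂ t‖))
    (heq₁ : ∀ x ∈ I, w₁ x = ∫ t in x₀..x, g₁ t)
    (heq₂ : ∀ x ∈ I, w₂ x = ∫ t in x₀..x, g₂ t) :
    ∀ x ∈ I, w₁ x = 0 ∧ w₂ x = 0 := by
  have hρ0 : ∀ t, (0:ℝ) ≤ ‖w₁ t‖ + ‖w₂ t‖ := fun t => by positivity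
  have hρc : ContinuousOn (fun t => ‖w₁ t‖ + ‖w₂ t‖) I := (hw₁c.norm).add (hw₂c.norm)
  have main : ∀ x ∈ I, ‖w₁ x‖ + ‖w₂ x‖ = 0 := by
    intro x hx
    rcases le_total x₀ x with hle | hle
    · have hIcc : Icc x₀ x ⊆ I := hI.out hx₀ hx
      refine gronwall_fwd hle (hkint x₀ hx₀ x hx) (hkρint x₀ hx₀ x hx) hk0
        (hρc.mono hIcc) hρ0 ?_ x ⟨hle, le_rfl⟩
      intro y hy
      have hyI : y ∈ I := hIcc hy
      have h1 : ‖w₁ y‖ ≤ ∫ t in x₀..y, ‖g₁ t‖ := by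
        rw [heq₁ y hyI]; exact intervalIntegral.norm_integral_le_integral_norm hy.1
      have h2 : ‖w₂ y‖ ≤ ∫ t in x₀..y, ‖g₂ t‖ := by
        rw [heq₂ y hyI]; exact intervalIntegral.norm_integral_le_integral_norm hy.1
      have h3 : (∫ t in x₀..y, ‖g₁ t‖) + (∫ t in x₀..y, ‖g₂ t‖)
          = ∫ t in x₀..y, (‖g₁ t‖ + ‖g₂ t‖) :=
        (integral_add ((hg₁int x₀ hx₀ y hyI).norm) ((hg₂int x₀ hx₀ y hyI).norm)).symm
      have h4 : (∫ t in x₀..y, (‖g₁ t‖ + ‖g₂ t‖))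
          ≤ ∫ t in x₀..y, k t * (‖w₁ t‖ + ‖w₂ t‖) := by
        refine integral_mono_on hy.1
          (((hg₁int x₀ hx₀ y hyI).norm).add ((hg₂int x₀ hx₀ y hyI).norm))
          (hkρint x₀ hx₀ y hyI) ?_
        intro t ht
        exact hgbnd t (hI.out hx₀ hyI ht)
      linarith
    · have hIcc : Icc x x₀ ⊆ I := hI.out hx hx₀
      refine gronwall_bwd hle (hkint x hx x₀ hx₀) (hkρint x hx x₀ hx₀) hk0
        (hρc.mono hIcc) hρ0 ?_ x ⟨le_rfl, hle⟩
      intro y hy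
      have hyI : y ∈ I := hIcc hy
      have h1 : ‖w₁ y‖ ≤ ∫ t in y..x₀, ‖g₁ t‖ := by
        rw [heq₁ y hyI, intervalIntegral.integral_symm y x₀, norm_neg]
        exact intervalIntegral.norm_integral_le_integral_norm hy.2
      have h2 : ‖w₂ y‖ ≤ ∫ t in y..x₀, ‖g₂ t‖ := by
        rw [heq₂ y hyI, intervalIntegral.integral_symm y x₀, norm_neg]
        exact intervalIntegral.norm_integral_le_integral_norm hy.2
      have h3 : (∫ t in y..x₀, ‖g₁ t‖) + (∫ t in y..x₀, ‖g₂ t‖)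
          = ∫ t in y..x₀, (‖g₁ t‖ + ‖g₂ t‖) :=
        (integral_add ((hg₁int y hyI x₀ hx₀).norm) ((hg₂int y hyI x₀ hx₀).norm)).symm
      have h4 : (∫ t in y..x₀, (‖g₁ t‖ + ‖g₂ t‖))
          ≤ ∫ t in y..x₀, k t * (‖w₁ t‖ + ‖w₂ t‖) := by
        refine integral_mono_on hy.2
          (((hg₁int y hyI x₀ hx₀).norm).add ((hg₂int y hyI x₀ hx₀).norm))
          (hkρint y hyI x₀ hx₀) ?_
        intro t ht
        exact hgbnd t (hI.out hyI hx₀ ht)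
      linarith
  intro x hx
  have h := main x hx
  have h1 : ‖w₁ x‖ = 0 := by
    have := norm_nonneg (w₁ x); have := norm_nonneg (w₂ x); linarith
  have h2 : ‖w₂ x‖ = 0 := by
    have := norm_nonneg (w₁ x); have := norm_nonneg (w₂ x); linarith
  exact ⟨norm_eq_zero.mp h1, norm_eq_zero.mp h2⟩

/-- If a complex solution `u` of a Dirac system with real coefficients is linearly
independent of its componentwise conjugate `ū`, then `Im(u₁·conj u₂)` never vanishes
on `I`; in particular both components of `u` are nowhere zero on `I`. -/
theorem components_nonvanishing_of_indep_conj
    (I : Set ℝ) (hI : I.OrdConnected) (m l q : ℝ → ℝ)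
    (hm : LocallyIntegrableOn m I volume) (hl : LocallyIntegrableOn l I volume)
    (hq : LocallyIntegrableOn q I volume)
    (lam : ℝ) (u₁ u₂ : ℝ → ℂ)
    (hu : IsDiracSolutionOn m l q lam u₁ u₂ I)
    (hindep : ∀ a b : ℂ,
      (∀ x ∈ I, a * u₁ x + b * star (u₁ x) = 0 ∧ a * u₂ x + b * star (u₂ x) = 0) →
      a = 0 ∧ b = 0) :
    ∀ x ∈ I, (u₁ x * star (u₂ x)).im ≠ 0 ∧ u₁ x ≠ 0 ∧ u₂ x ≠ 0 := by
  obtain ⟨hc₁, hc₂, x₀, hx₀, heq⟩ := hu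
  have hc₁s : ContinuousOn (fun t => (starRingEnd ℂ) (u₁ t)) I :=
    continuous_star.comp_continuousOn hc₁
  have hc₂s : ContinuousOn (fun t => (starRingEnd ℂ) (u₂ t)) I :=
    continuous_star.comp_continuousOn hc₂
  have hgint : ∀ (g : ℝ → ℝ), LocallyIntegrableOn g I volume → ∀ y ∈ I, ∀ z ∈ I,
      IntegrableOn g (uIcc y z) volume := fun g hg y hy z hz =>
    hg.integrableOn_compact_subset (hI.uIcc_subset hy hz) isCompact_uIcc
  have hconst : ∀ (r : ℝ) (y z : ℝ), IntegrableOn (fun _ => r) (uIcc y z) volume :=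
    fun r y z => (integrableOn_const_iff).mpr (Or.inr isCompact_uIcc.measure_lt_top)
  have hqA : ∀ y ∈ I, ∀ z ∈ I,
      IntegrableOn (fun t => lam - q t + m t) (uIcc y z) volume :=
    fun y hy z hz => ((hconst lam y z).sub (hgint q hq y hy z hz)).add (hgint m hm y hy z hz)
  have hqB : ∀ y ∈ I, ∀ z ∈ I,
      IntegrableOn (fun t => lam - q t - m t) (uIcc y z) volume :=
    fun y hy z hz => ((hconst lam y z).sub (hgint q hq y hy z hz)).sub (hgint m hm y hy z hz)
  have keyC : ∀ (g : ℝ → ℝ) (v : ℝ → ℂ),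
      (∀ y ∈ I, ∀ z ∈ I, IntegrableOn g (uIcc y z) volume) → ContinuousOn v I →
      ∀ y ∈ I, ∀ z ∈ I, IntervalIntegrable (fun t => (g t : ℂ) * v t) volume y z :=
    fun g v hg hv y hy z hz => by
      have h1 : IntegrableOn (fun t => (g t : ℂ)) (uIcc y z) volume :=
        (hg y hy z hz).ofReal
      exact (h1.mul_continuousOn (hv.mono (hI.uIcc_subset hy hz))
        isCompact_uIcc).intervalIntegrable
  -- integrability of the two right-hand-side shapes, for arbitrary continuous v₁ v₂
  have hmk : ∀ (v₁ v₂ : ℝ → ℂ), ContinuousOn v₁ I → ContinuousOn v₂ I →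
      ∀ y ∈ I, ∀ z ∈ I, IntervalIntegrable
        (fun t => -(l t : ℂ) * v₁ t + ((lam : ℂ) - q t + m t) * v₂ t) volume y z := by
    intro v₁ v₂ hv₁ hv₂ y hy z hz
    have h1 := keyC l v₁ (fun y hy z hz => hgint l hl y hy z hz) hv₁ y hy z hz
    have h2 := keyC _ v₂ hqA hv₂ y hy z hz
    have h3 := h1.neg.add h2
    have hfe : (fun t => -(l t : ℂ) * v₁ t + ((lam : ℂ) - q t + m t) * v₂ t)
        = fun t => -((l t : ℂ) * v₁ t) + ((lam - q t + m t : ℝ) : ℂ) * v₂ t := by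
      funext t; push_cast; ring
    rw [hfe]; exact h3
  have hmk₂ : ∀ (v₁ v₂ : ℝ → ℂ), ContinuousOn v₁ I → ContinuousOn v₂ I →
      ∀ y ∈ I, ∀ z ∈ I, IntervalIntegrable
        (fun t => -((lam : ℂ) - q t - m t) * v₁ t + (l t : ℂ) * v₂ t) volume y z := by
    intro v₁ v₂ hv₁ hv₂ y hy z hz
    have h1 := keyC _ v₁ hqB hv₁ y hy z hz
    have h2 := keyC l v₂ (fun y hy z hz => hgint l hl y hy z hz) hv₂ y hy z hz
    have h3 := h1.neg.add h2
    have hfe : (fun t => -((lam : ℂ) - q t - m t) * v₁ t + (l t : ℂ) * v₂ t)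
        = fun t => -(((lam - q t - m t : ℝ) : ℂ) * v₁ t) + (l t : ℂ) * v₂ t := by
      funext t; push_cast; ring
    rw [hfe]; exact h3
  have hf₁ := hmk u₁ u₂ hc₁ hc₂
  have hf₂ := hmk₂ u₁ u₂ hc₁ hc₂
  have hconjint : ∀ (f : ℝ → ℂ) (y z : ℝ),
      (starRingEnd ℂ) (∫ t in y..z, f t) = ∫ t in y..z, (starRingEnd ℂ) (f t) := by
    intro f y z
    simp only [intervalIntegral, map_sub, integral_conj]
  intro c hc
  suffices him : (u₁ c * star (u₂ c)).im ≠ 0 by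
    refine ⟨him, ?_, ?_⟩
    · intro h; exact him (by simp [h])
    · intro h; exact him (by simp [h])
  intro him
  have hkey : (starRingEnd ℂ) (u₁ c) * u₂ c = u₁ c * (starRingEnd ℂ) (u₂ c) := by
    have h : (starRingEnd ℂ) (u₁ c * (starRingEnd ℂ) (u₂ c))
        = u₁ c * (starRingEnd ℂ) (u₂ c) := Complex.conj_eq_iff_im.mpr him
    rw [map_mul, Complex.conj_conj] at h
    exact h
  obtain ⟨a, b, ha, hz1, hz2⟩ :
      ∃ a b : ℂ, a ≠ 0 ∧ a * u₁ c + b * (starRingEnd ℂ) (u₁ c) = 0 ∧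
        a * u₂ c + b * (starRingEnd ℂ) (u₂ c) = 0 := by
    by_cases h1 : u₁ c = 0
    · by_cases h2 : u₂ c = 0
      · exact ⟨1, 0, one_ne_zero, by simp [h1], by simp [h2]⟩
      · refine ⟨(starRingEnd ℂ) (u₂ c), -u₂ c, ?_, by simp [h1], by ring⟩
        rw [starRingEnd_apply, star_ne_zero]; exact h2
    · refine ⟨(starRingEnd ℂ) (u₁ c), -u₁ c, ?_, by ring, ?_⟩
      · rw [starRingEnd_apply, star_ne_zero]; exact h1
      · linear_combination hkey
  set w₁ : ℝ → ℂ := fun s => a * u₁ s + b * (starRingEnd ℂ) (u₁ s) with hw₁def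
  set w₂ : ℝ → ℂ := fun s => a * u₂ s + b * (starRingEnd ℂ) (u₂ s) with hw₂def
  have hw₁c : ContinuousOn w₁ I := (continuousOn_const.mul hc₁).add (continuousOn_const.mul hc₁s)
  have hw₂c : ContinuousOn w₂ I := (continuousOn_const.mul hc₂).add (continuousOn_const.mul hc₂s)
  -- rebased integral equations
  have hu₁e : ∀ x ∈ I, u₁ x = u₁ c + ∫ t in c..x,
      (-(l t : ℂ) * u₁ t + ((lam : ℂ) - q t + m t) * u₂ t) := by
    intro x hx
    have e1 := (heq x hx).1
    have e2 := (heq c hc).1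
    have hadd := integral_add_adjacent_intervals (hf₁ x₀ hx₀ c hc) (hf₁ c hc x hx)
    rw [e1, e2, ← hadd]; ring
  have hu₂e : ∀ x ∈ I, u₂ x = u₂ c + ∫ t in c..x,
      (-((lam : ℂ) - q t - m t) * u₁ t + (l t : ℂ) * u₂ t) := by
    intro x hx
    have e1 := (heq x hx).2
    have e2 := (heq c hc).2
    have hadd := integral_add_adjacent_intervals (hf₂ x₀ hx₀ c hc) (hf₂ c hc x hx)
    rw [e1, e2, ← hadd]; ring
  have hv₁e : ∀ x ∈ I, (starRingEnd ℂ) (u₁ x) = (starRingEnd ℂ) (u₁ c) + ∫ t in c..x,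
      (-(l t : ℂ) * (starRingEnd ℂ) (u₁ t)
        + ((lam : ℂ) - q t + m t) * (starRingEnd ℂ) (u₂ t)) := by
    intro x hx
    have h := congrArg (starRingEnd ℂ) (hu₁e x hx)
    rw [map_add, hconjint] at h
    rw [h]
    congr 1
    refine integral_congr fun t _ => ?_
    simp [map_add, map_mul, map_neg, map_sub, Complex.conj_ofReal]
  have hv₂e : ∀ x ∈ I, (starRingEnd ℂ) (u₂ x) = (starRingEnd ℂ) (u₂ c) + ∫ t in c..x,
      (-((lam : ℂ) - q t - m t) * (starRingEnd ℂ) (u₁ t)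
        + (l t : ℂ) * (starRingEnd ℂ) (u₂ t)) := by
    intro x hx
    have h := congrArg (starRingEnd ℂ) (hu₂e x hx)
    rw [map_add, hconjint] at h
    rw [h]
    congr 1
    refine integral_congr fun t _ => ?_
    simp [map_add, map_mul, map_neg, map_sub, Complex.conj_ofReal]
  have hf₁s := hmk _ _ hc₁s hc₂s
  have hf₂s := hmk₂ _ _ hc₁s hc₂s
  -- integral equations for w
  have hw₁eq : ∀ x ∈ I, w₁ x = ∫ t in c..x,
      (-(l t : ℂ) * w₁ t + ((lam : ℂ) - q t + m t) * w₂ t) := by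
    intro x hx
    have h1 := hu₁e x hx
    have h2 := hv₁e x hx
    have hadd : (∫ t in c..x,
          (a * (-(l t : ℂ) * u₁ t + ((lam : ℂ) - q t + m t) * u₂ t)
            + b * (-(l t : ℂ) * (starRingEnd ℂ) (u₁ t)
              + ((lam : ℂ) - q t + m t) * (starRingEnd ℂ) (u₂ t))))
        = a * (∫ t in c..x, (-(l t : ℂ) * u₁ t + ((lam : ℂ) - q t + m t) * u₂ t))
          + b * (∫ t in c..x, (-(l t : ℂ) * (starRingEnd ℂ) (u₁ t)
              + ((lam : ℂ) - q t + m t) * (starRingEnd ℂ) (u₂ t))) := by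
      rw [integral_add ((hf₁ c hc x hx).const_mul a) ((hf₁s c hc x hx).const_mul b),
        intervalIntegral.integral_const_mul, intervalIntegral.integral_const_mul]
    have hsum : (∫ t in c..x,
          (a * (-(l t : ℂ) * u₁ t + ((lam : ℂ) - q t + m t) * u₂ t)
            + b * (-(l t : ℂ) * (starRingEnd ℂ) (u₁ t)
              + ((lam : ℂ) - q t + m t) * (starRingEnd ℂ) (u₂ t))))
        = ∫ t in c..x, (-(l t : ℂ) * w₁ t + ((lam : ℂ) - q t + m t) * w₂ t) := by
      refine integral_congr fun t _ => ?_
      simp only [hw₁def, hw₂def]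
      ring
    have hthis : w₁ x
        = a * (∫ t in c..x, (-(l t : ℂ) * u₁ t + ((lam : ℂ) - q t + m t) * u₂ t))
          + b * (∫ t in c..x, (-(l t : ℂ) * (starRingEnd ℂ) (u₁ t)
              + ((lam : ℂ) - q t + m t) * (starRingEnd ℂ) (u₂ t))) := by
      simp only [hw₁def]
      rw [h2, h1]
      linear_combination hz1
    rw [hthis, ← hadd, hsum]
  have hw₂eq : ∀ x ∈ I, w₂ x = ∫ t in c..x,
      (-((lam : ℂ) - q t - m t) * w₁ t + (l t : ℂ) * w₂ t) := by
    intro x hx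
    have h1 := hu₂e x hx
    have h2 := hv₂e x hx
    have hadd : (∫ t in c..x,
          (a * (-((lam : ℂ) - q t - m t) * u₁ t + (l t : ℂ) * u₂ t)
            + b * (-((lam : ℂ) - q t - m t) * (starRingEnd ℂ) (u₁ t)
              + (l t : ℂ) * (starRingEnd ℂ) (u₂ t))))
        = a * (∫ t in c..x, (-((lam : ℂ) - q t - m t) * u₁ t + (l t : ℂ) * u₂ t))
          + b * (∫ t in c..x, (-((lam : ℂ) - q t - m t) * (starRingEnd ℂ) (u₁ t)
              + (l t : ℂ) * (starRingEnd ℂ) (u₂ t))) := by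
      rw [integral_add ((hf₂ c hc x hx).const_mul a) ((hf₂s c hc x hx).const_mul b),
        intervalIntegral.integral_const_mul, intervalIntegral.integral_const_mul]
    have hsum : (∫ t in c..x,
          (a * (-((lam : ℂ) - q t - m t) * u₁ t + (l t : ℂ) * u₂ t)
            + b * (-((lam : ℂ) - q t - m t) * (starRingEnd ℂ) (u₁ t)
              + (l t : ℂ) * (starRingEnd ℂ) (u₂ t))))
        = ∫ t in c..x, (-((lam : ℂ) - q t - m t) * w₁ t + (l t : ℂ) * w₂ t) := by
      refine integral_congr fun t _ => ?_
      simp only [hw₁def, hw₂def]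
      ring
    have hthis : w₂ x
        = a * (∫ t in c..x, (-((lam : ℂ) - q t - m t) * u₁ t + (l t : ℂ) * u₂ t))
          + b * (∫ t in c..x, (-((lam : ℂ) - q t - m t) * (starRingEnd ℂ) (u₁ t)
              + (l t : ℂ) * (starRingEnd ℂ) (u₂ t))) := by
      simp only [hw₂def]
      rw [h2, h1]
      linear_combination hz2
    rw [hthis, ← hadd, hsum]
  -- Gronwall data
  set k : ℝ → ℝ := fun t => 2 * (|l t| + |lam - q t + m t| + |lam - q t - m t|) with hkdef
  have hk0 : ∀ t, 0 ≤ k t := fun t => by simp only [hkdef]; positivity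
  have hkIcc : ∀ y ∈ I, ∀ z ∈ I, IntegrableOn k (uIcc y z) volume := by
    intro y hy z hz
    simp only [hkdef]
    exact (((hgint l hl y hy z hz).abs.add (hqA y hy z hz).abs).add
      (hqB y hy z hz).abs).const_mul 2
  have hkint : ∀ y ∈ I, ∀ z ∈ I, IntervalIntegrable k volume y z :=
    fun y hy z hz => (hkIcc y hy z hz).intervalIntegrable
  have hkρint : ∀ y ∈ I, ∀ z ∈ I,
      IntervalIntegrable (fun t => k t * (‖w₁ t‖ + ‖w₂ t‖)) volume y z := by
    intro y hy z hz
    exact ((hkIcc y hy z hz).mul_continuousOn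
      (((hw₁c.norm).add (hw₂c.norm)).mono (hI.uIcc_subset hy hz))
      isCompact_uIcc).intervalIntegrable
  have hnorm : ∀ r : ℝ, ‖(r : ℂ)‖ = |r| := fun r => by
    rw [Complex.norm_real, Real.norm_eq_abs]
  have hgbnd : ∀ t,
      ‖-(l t : ℂ) * w₁ t + ((lam : ℂ) - q t + m t) * w₂ t‖
        + ‖-((lam : ℂ) - q t - m t) * w₁ t + (l t : ℂ) * w₂ t‖
        ≤ k t * (‖w₁ t‖ + ‖w₂ t‖) := by
    intro t
    have hcA : ((lam : ℂ) - q t + m t) = ((lam - q t + m t : ℝ) : ℂ) := by push_cast; ring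
    have hcB : ((lam : ℂ) - q t - m t) = ((lam - q t - m t : ℝ) : ℂ) := by push_cast; ring
    have e1 : ‖-(l t : ℂ) * w₁ t + ((lam : ℂ) - q t + m t) * w₂ t‖
        ≤ |l t| * ‖w₁ t‖ + |lam - q t + m t| * ‖w₂ t‖ := by
      calc _ ≤ ‖-(l t : ℂ) * w₁ t‖ + ‖((lam : ℂ) - q t + m t) * w₂ t‖ := norm_add_le _ _
        _ = _ := by rw [norm_mul, norm_mul, norm_neg, hcA, hnorm, hnorm]
    have e2 : ‖-((lam : ℂ) - q t - m t) * w₁ t + (l t : ℂ) * w₂ t‖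
        ≤ |lam - q t - m t| * ‖w₁ t‖ + |l t| * ‖w₂ t‖ := by
      calc _ ≤ ‖-((lam : ℂ) - q t - m t) * w₁ t‖ + ‖(l t : ℂ) * w₂ t‖ := norm_add_le _ _
        _ = _ := by rw [norm_mul, norm_mul, norm_neg, hcB, hnorm, hnorm]
    simp only [hkdef]
    nlinarith [e1, e2,
      mul_nonneg (abs_nonneg (l t)) (norm_nonneg (w₁ t)),
      mul_nonneg (abs_nonneg (l t)) (norm_nonneg (w₂ t)),
      mul_nonneg (abs_nonneg (lam - q t + m t)) (norm_nonneg (w₁ t)),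
      mul_nonneg (abs_nonneg (lam - q t + m t)) (norm_nonneg (w₂ t)),
      mul_nonneg (abs_nonneg (lam - q t - m t)) (norm_nonneg (w₁ t)),
      mul_nonneg (abs_nonneg (lam - q t - m t)) (norm_nonneg (w₂ t))]
  have hall := dirac_uniqueness hI hc hk0 hw₁c hw₂c hkint hkρint
    (hmk w₁ w₂ hw₁c hw₂c) (hmk₂ w₁ w₂ hw₁c hw₂c) (fun t _ => hgbnd t) hw₁eq hw₂eq
  have hdep : ∀ x ∈ I, a * u₁ x + b * star (u₁ x) = 0 ∧ a * u₂ x + b * star (u₂ x) = 0 := by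
    intro x hx
    have h := hall x hx
    exact ⟨h.1, h.2⟩
  exact ha (hindep a b hdep).1
end
end
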